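/- arXiv:2403.04119 — 9 statements merged into one kernel-verified Lean document; each statement's English description precedes it below -/
import Mathlib

section
/- Let G be a locally compact Hausdorff totally disconnected topological group and V a vector space over ℂ. Let S(G,V) denote the space of functions φ : G → V that are locally constant and vanish outside a compact subset of G. If T : S(G,V) → ℂ is a linear functional that is right-invariant, i.e. T(g ↦ φ(g·h)) = T(φ) for all h ∈ G and all φ ∈ S(G,V), then there exist a right-invariant Haar measure μ on G and a linear functional v* : V → ℂ such that T(φ) = ∫_G v*(φ(g)) dμ(g) for all φ ∈ S(G,V). -/
open MeasureTheory Set Pointwise MulOpposite Topology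

/-!
Fix a right Haar measure `μ` and a compact open subgroup `K₀`, and put
`v* v = T (1_{K₀} ⊗ v) / μ K₀`. A Schwartz–Bruhat function `φ` is invariant under left
translation by some compact open subgroup `K`, so it is a finite sum of functions `1_{K g} ⊗ v`.
By right invariance of `T` and `μ`, both `T φ` and `∫ v* ∘ φ ∂μ` then reduce to the values on
the `1_K ⊗ v`, and the normalisation `T (1_K ⊗ v) / μ K` does not depend on `K`: for `K' ≤ K`,
`1_K ⊗ v` is itself such a sum over cosets of `K'`. To use linearity freely, `T` is first
extended linearly from `S(G, V)` to all of `G → V`.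
-/

section CompactOpenSubgroup

variable {G : Type*} [Group G] [TopologicalSpace G] [IsTopologicalGroup G]
  [LocallyCompactSpace G] [T2Space G] [TotallyDisconnectedSpace G]

theorem exists_isCompact_isOpen_subgroup_subset {U : Set G} (hU : U ∈ 𝓝 1) :
    ∃ K : Subgroup G, IsCompact (K : Set G) ∧ IsOpen (K : Set G) ∧ (K : Set G) ⊆ U := by
  obtain ⟨s, hs, hsU, hsc⟩ := local_compact_nhds hU
  obtain ⟨W, hW, h1W, hWs⟩ := loc_compact_Haus_tot_disc_of_zero_dim.mem_nhds_iff.1 hs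
  have hWc : IsCompact W := hsc.of_isClosed_subset hW.isClosed hWs
  obtain ⟨N, hN, hNW⟩ := compact_open_separated_mul_left hWc hW.isOpen subset_rfl
  let K := MulAction.stabilizer G W
  have hNK : N ∩ N⁻¹ ⊆ K := fun k hk => by
    have hsub : ∀ k ∈ N, k • W ⊆ W := fun k hk => (smul_set_subset_mul hk).trans hNW
    exact (hsub k hk.1).antisymm (subset_smul_set_iff.2 (hsub k⁻¹ hk.2))
  have hKW : (K : Set G) ⊆ W := fun k hk => by
    simpa [MulAction.mem_stabilizer_iff.1 hk] using smul_mem_smul_set (a := k) h1W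
  have hKo : IsOpen (K : Set G) :=
    K.isOpen_of_mem_nhds <|
      Filter.mem_of_superset (Filter.inter_mem hN (inv_mem_nhds_one G hN)) hNK
  exact ⟨K, hWc.of_isClosed_subset (K.isClosed_of_isOpen hKo) hKW, hKo,
    hKW.trans (hWs.trans hsU)⟩

theorem IsLocallyConstant.exists_isOpen_subgroup_forall_mul_left_eq {Y : Type*} [Zero Y]
    {φ : G → Y} (hφ : IsLocallyConstant φ) {C : Set G} (hC : IsCompact C)
    (hφC : ∀ g ∉ C, φ g = 0) :
    ∃ K : Subgroup G, IsOpen (K : Set G) ∧ ∀ k ∈ K, ∀ x, φ (k * x) = φ x := by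
  have hloc : ∀ y, ∃ H : OpenSubgroup G, ∀ h ∈ H, φ (h * y) = φ y := fun y => by
    have : {h | φ (h * y) = φ y} ∈ 𝓝 (1 : G) :=
      ((continuous_mul_const y).tendsto' 1 y (one_mul y)).eventually (hφ.eventually_eq y)
    obtain ⟨H, -, hHo, hH⟩ := exists_isCompact_isOpen_subgroup_subset this
    exact ⟨⟨H, hHo⟩, hH⟩
  choose H hH using hloc
  obtain ⟨t, ht⟩ := hC.elim_finite_subcover (fun y => op y • (H y : Set G))
    (fun y => (H y).isOpen.smul _) (fun y _ => mem_iUnion.2 ⟨y, by simp [mem_rightCoset_iff]⟩)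
  refine ⟨(t.inf H : OpenSubgroup G), (t.inf H).isOpen, fun k hk x => ?_⟩
  have hkH : ∀ y ∈ t, k ∈ H y := fun y hy => (Finset.inf_le hy : t.inf H ≤ H y) hk
  have hconst : ∀ y z, z * y⁻¹ ∈ H y → φ z = φ y := fun y z hz => by
    simpa using hH y _ hz
  by_cases hx : ∃ y ∈ t, x * y⁻¹ ∈ H y
  · obtain ⟨y, hy, hxy⟩ := hx
    rw [hconst y x hxy, hconst y (k * x) (by rw [mul_assoc]; exact mul_mem (hkH y hy) hxy)]
  · push Not at hx
    have hnotC : ∀ z, (∀ y ∈ t, z * y⁻¹ ∉ H y) → z ∉ C := fun z hz hzC => by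
      obtain ⟨y, hy, hzy⟩ := mem_iUnion₂.1 (ht hzC)
      exact hz y hy (mem_rightCoset_iff y |>.1 hzy)
    refine (hφC _ (hnotC _ fun y hy hkxy => hx y hy ?_)).trans (hφC _ (hnotC x hx)).symm
    rwa [mul_assoc, mul_mem_cancel_left (hkH y hy)] at hkxy

end CompactOpenSubgroup

def schwartzBruhat (R G V : Type*) [Semiring R] [TopologicalSpace G] [AddCommMonoid V]
    [Module R V] : Submodule R (G → V) where
  carrier := {φ | IsLocallyConstant φ ∧ ∃ C : Set G, IsCompact C ∧ ∀ g ∉ C, φ g = 0}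
  add_mem' := by
    rintro φ ψ ⟨hφ, C, hC, hφC⟩ ⟨hψ, D, hD, hψD⟩
    refine ⟨hφ.add hψ, C ∪ D, hC.union hD, fun g hg => ?_⟩
    rw [mem_union, not_or] at hg
    simp [hφC g hg.1, hψD g hg.2]
  zero_mem' := ⟨IsLocallyConstant.const 0, ∅, isCompact_empty, fun _ _ => rfl⟩
  smul_mem' c := by
    rintro φ ⟨hφ, C, hC, hφC⟩
    exact ⟨hφ.comp (c • ·), C, hC, fun g hg => by simp [hφC g hg]⟩

def IsRightInvariantOn {G V W : Type*} [Mul G] (T : (G → V) → W) (s : Set (G → V)) : Prop :=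
  ∀ φ ∈ s, ∀ h, T (fun g => φ (g * h)) = T φ

section SchwartzBruhat

variable {R G V : Type*} [Semiring R] [Group G] [TopologicalSpace G] [ContinuousMul G]
  [AddCommMonoid V] [Module R V]

theorem comp_mul_right_mem_schwartzBruhat {φ : G → V} (hφ : φ ∈ schwartzBruhat R G V)
    (h : G) :
    (fun g => φ (g * h)) ∈ schwartzBruhat R G V := by
  obtain ⟨hφ, C, hC, hφC⟩ := hφ
  refine ⟨hφ.comp_continuous (continuous_mul_const h), op h⁻¹ • C, hC.smul _,
    fun g hg => hφC _ ?_⟩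
  rwa [mem_rightCoset_iff, inv_inv] at hg

theorem indicator_rightCoset_mem_schwartzBruhat {K : Subgroup G} (hKc : IsCompact (K : Set G))
    (hKo : IsOpen (K : Set G)) (g : G) (v : V) :
    (op g • (K : Set G)).indicator (fun _ => v) ∈ schwartzBruhat R G V := by
  have hclopen : IsClopen (op g • (K : Set G)) :=
    ⟨(K.isClosed_of_isOpen hKo).smul _, hKo.smul _⟩
  exact ⟨(LocallyConstant.indicator (LocallyConstant.const G v) hclopen).isLocallyConstant,
    _, hKc.smul _, fun _ hx => indicator_of_notMem hx _⟩


theorem apply_indicator_rightCoset {W : Type*} {T : (G → V) → W}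
    (hT : IsRightInvariantOn T (schwartzBruhat R G V)) {K : Subgroup G}
    (hKc : IsCompact (K : Set G)) (hKo : IsOpen (K : Set G)) (g : G) (v : V) :
    T ((op g • (K : Set G)).indicator fun _ => v) = T ((K : Set G).indicator fun _ => v) := by
  rw [← hT _ (indicator_rightCoset_mem_schwartzBruhat hKc hKo g v) g]
  congr 1
  ext x
  by_cases hx : x ∈ (K : Set G) <;> simp [mem_rightCoset_iff, hx]

end SchwartzBruhat

theorem exists_eq_sum_indicator_rightCoset {G Y : Type*} [Group G] [TopologicalSpace G]
    [ContinuousMul G] [AddCommMonoid Y] {K : Subgroup G} (hKo : IsOpen (K : Set G))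
    {φ : G → Y} {C : Set G} (hC : IsCompact C) (hφC : ∀ g ∉ C, φ g = 0)
    (hφK : ∀ k ∈ K, ∀ x, φ (k * x) = φ x) :
    ∃ F : Finset G, φ = ∑ g ∈ F, (op g • (K : Set G)).indicator fun _ => φ g := by
  classical
  let mk : G → Quotient (QuotientGroup.rightRel K) := Quotient.mk _
  have hmem : ∀ {x g}, x ∈ op g • (K : Set G) ↔ mk x = mk g := by
    intro x g
    rw [mem_rightCoset_iff, eq_comm, Quotient.eq, QuotientGroup.rightRel_apply, SetLike.mem_coe]
  obtain ⟨t, ht⟩ := hC.elim_finite_subcover (fun g => op g • (K : Set G))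
    (fun g => hKo.smul _) (fun x _ => mem_iUnion.2 ⟨x, hmem.2 rfl⟩)
  refine ⟨(t.image mk).image Quotient.out, funext fun x => ?_⟩
  rw [Finset.sum_image Quotient.out_injective.injOn, Finset.sum_apply]
  simp only [indicator_apply, hmem, mk, Quotient.out_eq, Finset.sum_ite_eq]
  split_ifs with hx
  · have hx' : x * (mk x).out⁻¹ ∈ K := QuotientGroup.rightRel_apply.1 (Quotient.mk_out _)
    rw [← hφK _ hx' (mk x).out, inv_mul_cancel_right]
  · refine hφC x fun hxC => hx ?_
    obtain ⟨g, hg, hxg⟩ := mem_iUnion₂.1 (ht hxC)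
    exact Finset.mem_image.2 ⟨g, hg, (hmem.1 hxg).symm⟩

noncomputable def indicatorₗ (R : Type*) {G V : Type*} [Semiring R] [AddCommMonoid V]
    [Module R V] (s : Set G) : V →ₗ[R] G → V where
  toFun v := s.indicator fun _ => v
  map_add' _ _ := indicator_add s _ _
  map_smul' c _ := indicator_const_smul s c _

theorem Subgroup.measureReal_ne_zero {G : Type*} [Group G] [TopologicalSpace G]
    [MeasurableSpace G] {μ : Measure G} [IsFiniteMeasureOnCompacts μ] [μ.IsOpenPosMeasure]
    {K : Subgroup G} (hKc : IsCompact (K : Set G)) (hKo : IsOpen (K : Set G)) :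
    μ.real (K : Set G) ≠ 0 :=
  (measureReal_ne_zero_iff hKc.measure_lt_top.ne).2 (hKo.measure_ne_zero μ ⟨1, K.one_mem⟩)

section Functional

variable {𝕜 G V : Type*} [RCLike 𝕜] [Group G] [MeasurableSpace G] [AddCommGroup V]
  [Module 𝕜 V] (μ : Measure G) (T : (G → V) →ₗ[𝕜] 𝕜)

noncomputable def indicatorFunctional (K : Subgroup G) : V →ₗ[𝕜] 𝕜 :=
  ((μ.real (K : Set G) : 𝕜)⁻¹) • T ∘ₗ indicatorₗ 𝕜 (K : Set G)

variable [TopologicalSpace G]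

theorem apply_indicator_eq_measureReal_mul [IsFiniteMeasureOnCompacts μ] [μ.IsOpenPosMeasure]
    {K : Subgroup G} (hKc : IsCompact (K : Set G)) (hKo : IsOpen (K : Set G)) (v : V) :
    T ((K : Set G).indicator fun _ => v) = μ.real (K : Set G) * indicatorFunctional μ T K v := by
  have hK : (μ.real (K : Set G) : 𝕜) ≠ 0 := by
    exact_mod_cast Subgroup.measureReal_ne_zero hKc hKo
  rw [indicatorFunctional, LinearMap.smul_apply, smul_eq_mul, mul_inv_cancel_left₀ hK]
  rfl

variable [IsTopologicalGroup G] [BorelSpace G] [μ.IsMulRightInvariant]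
  [IsFiniteMeasureOnCompacts μ] {T}

theorem apply_eq_integral_of_forall_mul_left_eq
    (hT : IsRightInvariantOn T (schwartzBruhat 𝕜 G V)) {K : Subgroup G}
    (hKc : IsCompact (K : Set G)) (hKo : IsOpen (K : Set G)) (ℓ : V →ₗ[𝕜] 𝕜)
    (hℓ : ∀ v, T ((K : Set G).indicator fun _ => v) = μ.real (K : Set G) * ℓ v)
    {φ : G → V} {C : Set G} (hC : IsCompact C) (hφC : ∀ g ∉ C, φ g = 0)
    (hφK : ∀ k ∈ K, ∀ x, φ (k * x) = φ x) :
    T φ = ∫ x, ℓ (φ x) ∂μ := by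
  obtain ⟨F, hF⟩ := exists_eq_sum_indicator_rightCoset hKo hC hφC hφK
  have hmeas (g : G) : MeasurableSet (op g • (K : Set G)) := (hKo.smul _).measurableSet
  have hcoset (g : G) (c : 𝕜) :
      ∫ x, (op g • (K : Set G)).indicator (fun _ => c) x ∂μ = μ.real (K : Set G) * c := by
    rw [integral_indicator_const _ (hmeas g), measureReal_def, measure_smul, ← measureReal_def,
      RCLike.real_smul_eq_coe_mul]
  calc T φ = ∑ g ∈ F, T ((op g • (K : Set G)).indicator fun _ => φ g) := by
        conv_lhs => rw [hF]
        exact map_sum T _ F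
    _ = ∑ g ∈ F, ∫ x, (op g • (K : Set G)).indicator (fun _ => ℓ (φ g)) x ∂μ := by
        simp only [hcoset, apply_indicator_rightCoset hT hKc hKo, hℓ]
    _ = ∫ x, ∑ g ∈ F, (op g • (K : Set G)).indicator (fun _ => ℓ (φ g)) x ∂μ := by
        refine (integral_finsetSum F fun g _ => ?_).symm
        rw [integrable_indicator_iff (hmeas g)]
        exact integrableOn_const (measure_smul μ (op g) (K : Set G) ▸ hKc.measure_lt_top.ne)
    _ = ∫ x, ℓ (φ x) ∂μ := by
        congr 1
        ext x
        rw [congrFun hF x, Finset.sum_apply, map_sum]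
        exact Finset.sum_congr rfl fun g _ =>
          (congrFun (comp_indicator_const _ _ (map_zero ℓ)) x).symm

variable [μ.IsOpenPosMeasure]

theorem indicatorFunctional_eq_of_le
    (hT : IsRightInvariantOn T (schwartzBruhat 𝕜 G V)) {K K' : Subgroup G}
    (hKc : IsCompact (K : Set G)) (hKo : IsOpen (K : Set G)) (hK'c : IsCompact (K' : Set G))
    (hK'o : IsOpen (K' : Set G)) (hle : K' ≤ K) :
    indicatorFunctional μ T K' = indicatorFunctional μ T K := by
  ext v
  have hinv : ∀ k ∈ K', ∀ x, (K : Set G).indicator (fun _ => v) (k * x) =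
      (K : Set G).indicator (fun _ => v) x := fun k hk x => by
    by_cases hx : x ∈ K <;> simp [K.mul_mem_cancel_left (hle hk), hx]
  have h := apply_eq_integral_of_forall_mul_left_eq μ hT hK'c hK'o _
    (apply_indicator_eq_measureReal_mul μ T hK'c hK'o) hKc (fun _ hx => indicator_of_notMem hx _)
    hinv
  rw [apply_indicator_eq_measureReal_mul μ T hKc hKo,
    comp_indicator_const v _ (map_zero (indicatorFunctional μ T K')),
    integral_indicator_const _ hKo.measurableSet, RCLike.real_smul_eq_coe_mul] at h
  exact (mul_left_cancel₀ (by exact_mod_cast Subgroup.measureReal_ne_zero hKc hKo) h).symm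

theorem apply_eq_integral_indicatorFunctional [LocallyCompactSpace G] [T2Space G]
    [TotallyDisconnectedSpace G]
    (hT : IsRightInvariantOn T (schwartzBruhat 𝕜 G V)) {K₀ : Subgroup G}
    (hK₀c : IsCompact (K₀ : Set G)) (hK₀o : IsOpen (K₀ : Set G)) {φ : G → V}
    (hφ : φ ∈ schwartzBruhat 𝕜 G V) :
    T φ = ∫ x, indicatorFunctional μ T K₀ (φ x) ∂μ := by
  obtain ⟨hφlc, C, hC, hφC⟩ := hφ
  obtain ⟨K, hKo, hφK⟩ := hφlc.exists_isOpen_subgroup_forall_mul_left_eq hC hφC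
  have ho : IsOpen ((K ⊓ K₀ : Subgroup G) : Set G) := hKo.inter hK₀o
  have hc : IsCompact ((K ⊓ K₀ : Subgroup G) : Set G) :=
    hK₀c.of_isClosed_subset (Subgroup.isClosed_of_isOpen _ ho) inter_subset_right
  rw [← indicatorFunctional_eq_of_le μ hT hK₀c hK₀o hc ho inf_le_right]
  exact apply_eq_integral_of_forall_mul_left_eq μ hT hc ho _
    (apply_indicator_eq_measureReal_mul μ T hc ho) hC hφC fun k hk => hφK k hk.1

end Functional

theorem Submodule.exists_linearMap_eqOn {K E W : Type*} [DivisionRing K] [AddCommGroup E]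
    [Module K E] [AddCommGroup W] [Module K W] (p : Submodule K E) (f : E → W)
    (hadd : ∀ x ∈ p, ∀ y ∈ p, f (x + y) = f x + f y)
    (hsmul : ∀ (c : K), ∀ x ∈ p, f (c • x) = c • f x) :
    ∃ g : E →ₗ[K] W, EqOn g f p := by
  let f' : p →ₗ[K] W :=
    { toFun x := f x
      map_add' x y := hadd x x.2 y y.2
      map_smul' c x := hsmul c x x.2 }
  obtain ⟨g, hg⟩ := LinearMap.exists_extend f'
  exact ⟨g, fun x hx => LinearMap.congr_fun hg ⟨x, hx⟩⟩

/-- Every right-invariant `V`-valued distribution on an `l`-group `G` (a locally compact,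
Hausdorff, totally disconnected topological group) is the product of a right Haar measure
on `G` and a linear functional on `V`.  Here `S φ` says that `φ : G → V` is a Schwartz
function: locally constant and vanishing outside a compact set. -/
theorem stmt1 {G : Type*} [Group G] [TopologicalSpace G] [IsTopologicalGroup G]
    [LocallyCompactSpace G] [T2Space G] [TotallyDisconnectedSpace G]
    [MeasurableSpace G] [BorelSpace G]
    {V : Type*} [AddCommGroup V] [Module ℂ V]
    (S : (G → V) → Prop)
    (hS : ∀ φ : G → V,
      S φ ↔ IsLocallyConstant φ ∧ ∃ C : Set G, IsCompact C ∧ ∀ g ∉ C, φ g = 0)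
    (T : (G → V) → ℂ)
    (hadd : ∀ φ ψ : G → V, S φ → S ψ → T (φ + ψ) = T φ + T ψ)
    (hsmul : ∀ (c : ℂ) (φ : G → V), S φ → T (c • φ) = c * T φ)
    (hinv : ∀ φ : G → V, S φ → ∀ h : G, T (fun g => φ (g * h)) = T φ) :
    ∃ μ : Measure G, μ ≠ 0 ∧ μ.Regular ∧ μ.IsMulRightInvariant ∧
      ∃ vstar : V →ₗ[ℂ] ℂ, ∀ φ : G → V, S φ → T φ = ∫ g, vstar (φ g) ∂μ := by
  have hS' (φ : G → V) : S φ ↔ φ ∈ schwartzBruhat ℂ G V := hS φ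
  obtain ⟨T', hT'⟩ := (schwartzBruhat ℂ G V).exists_linearMap_eqOn T
    (fun φ hφ ψ hψ => hadd φ ψ ((hS' φ).2 hφ) ((hS' ψ).2 hψ))
    (fun c φ hφ => hsmul c φ ((hS' φ).2 hφ))
  have hT'inv : IsRightInvariantOn T' (schwartzBruhat ℂ G V) :=
    fun φ hφ h => by
      rw [hT' hφ, hT' (comp_mul_right_mem_schwartzBruhat hφ h), hinv φ ((hS' φ).2 hφ) h]
  obtain ⟨K₀, hK₀c, hK₀o, -⟩ :=
    exists_isCompact_isOpen_subgroup_subset (G := G) Filter.univ_mem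
  refine ⟨Measure.haar.inv, NeZero.ne _, inferInstance, inferInstance,
    indicatorFunctional Measure.haar.inv T' K₀, fun φ hφ => ?_⟩
  rw [← hT' ((hS' φ).1 hφ)]
  exact apply_eq_integral_indicatorFunctional _ hT'inv hK₀c hK₀o ((hS' φ).1 hφ)
end

section
/- For every x ∈ F^r and every f ∈ ℤ^r, the matrix ū(x) ∈ GL_{r+1}(F) lies in the double coset Ȟ_f · u(x(τ_x^f)*) · d(x(τ_x^f)) · SL_{r+1}(O), where Ȟ_f = {diag(h,1) : h ∈ H_f}. -/
/-!
Write `y = x(τ_x^f)` and let `c_i` be `ŷ` at the predecessor of `i` in the order `σ_y` (and `1`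
for the first index), so that `d(y)_i = c_i / ŷ_i`, `d(y)_{r+1} = ŷ_{σ_y(r)}`, and `∏ d(y) = 1`
by telescoping. Let `B = 1 + N`, where for `y_i ≠ 0` the row `N_i` has the entries `x_j / x_i`
at those `j` with `o(x_j) < o(c_i)`: these are exactly the entries of the `i`-th row of
`u(-y*) · diag(B, 1) · ū(x)` that `c_i` would not divide, so
`k = d(y)⁻¹ u(-y*) diag(B, 1) ū(x)` lies in `SL_{r+1}(O)`.
The matrix `B` is unipotent and triangular for the order `σ_y`, and `ϖ^{-f} B ϖ^f` is integral
because the inequalities defining `τ_x^f` force `o(x_i) + f_i ≤ o(x_j) + f_j` whenever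
`N_ij ≠ 0`. Hence `B⁻¹ ∈ H_f` and `ū(x) = diag(B⁻¹, 1) u(y*) d(y) k`.
-/

open Matrix
open scoped Classical

namespace ShalikaStmt2

variable {O F : Type*} [CommRing O] [IsDomain O] [IsDiscreteValuationRing O]
  [Field F] [Algebra O F] [IsFractionRing O F]

/-- `x ∈ F` lies in (the image of) `O`. -/
def IsInt (O : Type*) {F : Type*} [CommRing O] [Field F] [Algebra O F] (x : F) : Prop :=
  ∃ a : O, algebraMap O F a = x

/-- `SL_r(O)`, viewed as a set of matrices with entries in `F`. -/
def SLO (O : Type*) {F : Type*} [CommRing O] [Field F] [Algebra O F] (r : ℕ) :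
    Set (Matrix (Fin r) (Fin r) F) :=
  {g | (∀ i j, IsInt O (g i j)) ∧ g.det = 1}

/-- The upper unipotent matrix `u(y) = [[1_r, yᵀ],[0,1]] ∈ GL_{r+1}(F)`. -/
def uMat {F : Type*} [Field F] {r : ℕ} (y : Fin r → F) :
    Matrix (Fin (r + 1)) (Fin (r + 1)) F :=
  Matrix.of fun i j =>
    if i = j then 1
    else if (j : ℕ) = r then (if h : (i : ℕ) < r then y ⟨i, h⟩ else 0) else 0

/-- The lower unipotent matrix `ū(y) = [[1_r, 0],[y,1]] ∈ GL_{r+1}(F)`. -/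
def lMat {F : Type*} [Field F] {r : ℕ} (y : Fin r → F) :
    Matrix (Fin (r + 1)) (Fin (r + 1)) F :=
  Matrix.of fun i j =>
    if i = j then 1
    else if (i : ℕ) = r then (if h : (j : ℕ) < r then y ⟨j, h⟩ else 0) else 0

/-- The embedding `g ↦ diag(g, 1)` of `r × r` matrices into `(r+1) × (r+1)` matrices. -/
def embed {F : Type*} [Field F] {r : ℕ} (g : Matrix (Fin r) (Fin r) F) :
    Matrix (Fin (r + 1)) (Fin (r + 1)) F :=
  Matrix.of fun i j =>
    if h : (i : ℕ) < r then (if h' : (j : ℕ) < r then g ⟨i, h⟩ ⟨j, h'⟩ else 0)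
    else (if (j : ℕ) < r then 0 else 1)

/-- The diagonal matrix `ϖ^f = diag(ϖF^{f 0}, …, ϖF^{f (r-1)})`. -/
noncomputable def Dpow {F : Type*} [Field F] {r : ℕ} (ϖF : F) (f : Fin r → ℤ) :
    Matrix (Fin r) (Fin r) F :=
  diagonal fun i => ϖF ^ f i

/-- `x̂ : x̂ᵢ = xᵢ` if `xᵢ ≠ 0`, and `x̂ᵢ = 1` otherwise. -/
noncomputable def hatF {F : Type*} [Field F] {r : ℕ} (x : Fin r → F) : Fin r → F :=
  fun i => if x i = 0 then 1 else x i

/-- `σ` sorts `x` by decreasing valuation (with `o(0) = ⊤` largest), stably: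
ties are broken by increasing index. This characterizes `σ_x` uniquely. -/
def IsSortPerm {F : Type*} [Field F] {r : ℕ} (o : F → WithTop ℤ) (x : Fin r → F)
    (σ : Equiv.Perm (Fin r)) : Prop :=
  (∀ i j : Fin r, i ≤ j → o (x (σ j)) ≤ o (x (σ i))) ∧
  (∀ i j : Fin r, i < j → o (x (σ i)) = o (x (σ j)) → σ i < σ j)

/-- The subset `τ_x^f ⊆ {1,…,r}` (0-indexed): indices `i` such that `x_{σ(i)} ∉ O` and
`o(x_{σ(i)}) + f_{σ(i)} < o(x_{σ(j)}) + f_{σ(j)}` for all `j > i`. -/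
def tauSet (O : Type*) {F : Type*} [CommRing O] [Field F] [Algebra O F] {r : ℕ}
    (o : F → WithTop ℤ) (x : Fin r → F) (f : Fin r → ℤ) (σ : Equiv.Perm (Fin r)) :
    Set (Fin r) :=
  {i | ¬ IsInt O (x (σ i)) ∧
    ∀ j : Fin r, i < j →
      o (x (σ i)) + (f (σ i) : WithTop ℤ) < o (x (σ j)) + (f (σ j) : WithTop ℤ)}

/-- `x(τ)`: keep the entries of `x` with index in `σ(τ)`, zero out the others. -/
noncomputable def select {F : Type*} [Field F] {r : ℕ} (x : Fin r → F)
    (σ : Equiv.Perm (Fin r)) (τ : Set (Fin r)) : Fin r → F :=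
  fun i => if σ.symm i ∈ τ then x i else 0

/-- The diagonal vector of the matrix `d(y)` (for a vector `y` with sorting permutation `σ`):
`d_{y,i} = 1/ŷ_i` if `i = σ(1)`, `d_{y,r+1} = ŷ_{σ(r)}`, and
`d_{y,i} = ŷ_{σ(σ⁻¹(i)−1)}/ŷ_i` otherwise. -/
noncomputable def dVec {F : Type*} [Field F] {r : ℕ} (hr : 0 < r) (y : Fin r → F)
    (σ : Equiv.Perm (Fin r)) : Fin (r + 1) → F :=
  fun i =>
    if h : (i : ℕ) < r then
      if hz : (σ.symm ⟨i, h⟩ : ℕ) = 0 then (hatF y ⟨i, h⟩)⁻¹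
      else hatF y (σ ⟨(σ.symm ⟨i, h⟩ : ℕ) - 1, by
          have := (σ.symm ⟨i, h⟩).isLt; omega⟩) / hatF y ⟨i, h⟩
    else hatF y (σ ⟨r - 1, by omega⟩)

section BlockMatrices

variable {r : ℕ}

lemma ext_castSucc_last {α : Type*} {M N : Matrix (Fin (r + 1)) (Fin (r + 1)) α}
    (hcc : ∀ i j : Fin r, M i.castSucc j.castSucc = N i.castSucc j.castSucc)
    (hcl : ∀ i : Fin r, M i.castSucc (Fin.last r) = N i.castSucc (Fin.last r))
    (hlc : ∀ j : Fin r, M (Fin.last r) j.castSucc = N (Fin.last r) j.castSucc)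
    (hll : M (Fin.last r) (Fin.last r) = N (Fin.last r) (Fin.last r)) : M = N := by
  ext i j
  induction i using Fin.lastCases <;> induction j using Fin.lastCases
  exacts [hll, hlc _, hcl _, hcc _ _]

variable {F : Type*} [Field F]


@[simp] lemma uMat_castSucc_castSucc (v : Fin r → F) (i j : Fin r) :
    uMat v i.castSucc j.castSucc = if i = j then 1 else 0 := by
  simp [uMat, j.isLt.ne]

@[simp] lemma uMat_castSucc_last (v : Fin r → F) (i : Fin r) :
    uMat v i.castSucc (Fin.last r) = v i := by
  simp [uMat, Fin.castSucc_ne_last]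

@[simp] lemma uMat_last_castSucc (v : Fin r → F) (j : Fin r) :
    uMat v (Fin.last r) j.castSucc = 0 := by
  simp [uMat, (Fin.castSucc_ne_last j).symm, j.isLt.ne]

@[simp] lemma uMat_last_last (v : Fin r → F) : uMat v (Fin.last r) (Fin.last r) = 1 := by
  simp [uMat]

@[simp] lemma lMat_castSucc_castSucc (v : Fin r → F) (i j : Fin r) :
    lMat v i.castSucc j.castSucc = if i = j then 1 else 0 := by
  simp [lMat, i.isLt.ne]

@[simp] lemma lMat_castSucc_last (v : Fin r → F) (i : Fin r) :
    lMat v i.castSucc (Fin.last r) = 0 := by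
  simp [lMat, Fin.castSucc_ne_last, i.isLt.ne]

@[simp] lemma lMat_last_castSucc (v : Fin r → F) (j : Fin r) :
    lMat v (Fin.last r) j.castSucc = v j := by
  simp [lMat, (Fin.castSucc_ne_last j).symm]

@[simp] lemma lMat_last_last (v : Fin r → F) : lMat v (Fin.last r) (Fin.last r) = 1 := by
  simp [lMat]

@[simp] lemma embed_castSucc_castSucc (g : Matrix (Fin r) (Fin r) F) (i j : Fin r) :
    embed g i.castSucc j.castSucc = g i j := by
  simp [embed]

@[simp] lemma embed_castSucc_last (g : Matrix (Fin r) (Fin r) F) (i : Fin r) :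
    embed g i.castSucc (Fin.last r) = 0 := by
  simp [embed]

@[simp] lemma embed_last_castSucc (g : Matrix (Fin r) (Fin r) F) (j : Fin r) :
    embed g (Fin.last r) j.castSucc = 0 := by
  simp [embed]

@[simp] lemma embed_last_last (g : Matrix (Fin r) (Fin r) F) :
    embed g (Fin.last r) (Fin.last r) = 1 := by
  simp [embed]

lemma uMat_mul_apply_castSucc (v : Fin r → F) (Z : Matrix (Fin (r + 1)) (Fin (r + 1)) F)
    (i : Fin r) (j : Fin (r + 1)) :
    (uMat v * Z) i.castSucc j = Z i.castSucc j + v i * Z (Fin.last r) j := by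
  simp [mul_apply, Fin.sum_univ_castSucc, ite_mul]

lemma uMat_mul_apply_last (v : Fin r → F) (Z : Matrix (Fin (r + 1)) (Fin (r + 1)) F)
    (j : Fin (r + 1)) : (uMat v * Z) (Fin.last r) j = Z (Fin.last r) j := by
  simp [mul_apply, Fin.sum_univ_castSucc]

lemma mul_lMat_apply_castSucc (v : Fin r → F) (Z : Matrix (Fin (r + 1)) (Fin (r + 1)) F)
    (i : Fin (r + 1)) (j : Fin r) :
    (Z * lMat v) i j.castSucc = Z i j.castSucc + Z i (Fin.last r) * v j := by
  simp [mul_apply, Fin.sum_univ_castSucc, mul_ite]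

lemma mul_lMat_apply_last (v : Fin r → F) (Z : Matrix (Fin (r + 1)) (Fin (r + 1)) F)
    (i : Fin (r + 1)) : (Z * lMat v) i (Fin.last r) = Z i (Fin.last r) := by
  simp [mul_apply, Fin.sum_univ_castSucc]

lemma uMat_mul_uMat (v w : Fin r → F) : uMat v * uMat w = uMat (v + w) := by
  refine ext_castSucc_last (fun i j => ?_) (fun i => ?_) (fun j => ?_) ?_ <;>
    simp [uMat_mul_apply_castSucc, uMat_mul_apply_last, add_comm]

lemma uMat_zero : uMat (0 : Fin r → F) = 1 := by
  refine ext_castSucc_last (fun i j => ?_) (fun i => ?_) (fun j => ?_) ?_ <;>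
    simp [one_apply, Fin.castSucc_ne_last, (Fin.castSucc_ne_last _).symm]

lemma embed_mul (g h : Matrix (Fin r) (Fin r) F) : embed g * embed h = embed (g * h) := by
  refine ext_castSucc_last (fun i j => ?_) (fun i => ?_) (fun j => ?_) ?_ <;>
    simp [mul_apply, Fin.sum_univ_castSucc]

lemma embed_one : embed (1 : Matrix (Fin r) (Fin r) F) = 1 := by
  refine ext_castSucc_last (fun i j => ?_) (fun i => ?_) (fun j => ?_) ?_ <;>
    simp [one_apply, Fin.castSucc_ne_last, (Fin.castSucc_ne_last _).symm]

lemma uMat_transpose (v : Fin r → F) : (uMat v)ᵀ = lMat v := by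
  ext i j
  simp [uMat, lMat, eq_comm]

lemma det_eq_det_submatrix_castSucc {R : Type*} [CommRing R]
    {M : Matrix (Fin (r + 1)) (Fin (r + 1)) R}
    (h0 : ∀ i : Fin r, M i.castSucc (Fin.last r) = 0) (h1 : M (Fin.last r) (Fin.last r) = 1) :
    M.det = (M.submatrix Fin.castSucc Fin.castSucc).det := by
  rw [det_succ_column M (Fin.last r), Fin.sum_univ_castSucc]
  simp [h0, h1, Fin.succAbove_last]

lemma det_lMat (v : Fin r → F) : (lMat v).det = 1 := by
  have h : (lMat v).submatrix Fin.castSucc Fin.castSucc = 1 := by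
    ext i j
    simp [one_apply]
  rw [det_eq_det_submatrix_castSucc (lMat_castSucc_last v) (lMat_last_last v), h, det_one]

lemma det_uMat (v : Fin r → F) : (uMat v).det = 1 := by
  rw [← det_transpose, uMat_transpose, det_lMat]

lemma det_embed (g : Matrix (Fin r) (Fin r) F) : (embed g).det = g.det := by
  have h : (embed g).submatrix Fin.castSucc Fin.castSucc = g := by
    ext i j
    simp
  rw [det_eq_det_submatrix_castSucc (embed_castSucc_last g) (embed_last_last g), h]

end BlockMatrices

section Integrality

variable {O F : Type*} [CommRing O] [Field F] [Algebra O F]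

lemma isInt_zero : IsInt O (0 : F) := ⟨0, map_zero _⟩

lemma isInt_one : IsInt O (1 : F) := ⟨1, map_one _⟩

lemma IsInt.neg {a : F} (ha : IsInt O a) : IsInt O (-a) := by
  obtain ⟨a', rfl⟩ := ha
  exact ⟨-a', map_neg _ _⟩

lemma inv_mem_SLO {n : ℕ} {g : Matrix (Fin n) (Fin n) F} (hg : g ∈ SLO O n) :
    g⁻¹ ∈ SLO O n := by
  obtain ⟨hint, hdet⟩ := hg
  choose M hM using hint
  have hinv : g⁻¹ = (algebraMap O F).mapMatrix (of M).adjugate := by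
    have hg : (algebraMap O F).mapMatrix (of M) = g := by
      ext i j
      exact hM i j
    rw [RingHom.map_adjugate, hg, inv_def, hdet, Ring.inverse_one, one_smul]
  refine ⟨fun i j => ⟨(of M).adjugate i j, by rw [hinv]; rfl⟩, ?_⟩
  rw [det_nonsing_inv, hdet, Ring.inverse_one]

end Integrality

structure IsNormalizedValuation (O : Type*) {F : Type*} [CommRing O] [Field F] [Algebra O F]
    (ϖF : F) (o : F → WithTop ℤ) : Prop where
  map_zero : o 0 = ⊤
  map_mul : ∀ a b, o (a * b) = o a + o b
  map_uniformizer : o ϖF = 1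
  isInt_iff : ∀ a, IsInt O a ↔ 0 ≤ o a

namespace IsNormalizedValuation

variable {O F : Type*} [CommRing O] [Field F] [Algebra O F] {ϖF : F} {o : F → WithTop ℤ}

lemma map_one (ho : IsNormalizedValuation O ϖF o) : o 1 = 0 := by
  have h := ho.map_mul ϖF 1
  rw [mul_one, ho.map_uniformizer] at h
  exact (WithTop.add_left_cancel WithTop.one_ne_top (h.symm.trans (add_zero 1).symm))

lemma ne_top (ho : IsNormalizedValuation O ϖF o) {a : F} (ha : a ≠ 0) : o a ≠ ⊤ := by
  intro h
  have h1 := ho.map_mul a a⁻¹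
  rw [mul_inv_cancel₀ ha, ho.map_one, h, WithTop.top_add] at h1
  exact WithTop.zero_ne_top h1

lemma uniformizer_ne_zero (ho : IsNormalizedValuation O ϖF o) : ϖF ≠ 0 := by
  intro h
  have h1 := ho.map_uniformizer
  rw [h, ho.map_zero] at h1
  exact WithTop.one_ne_top h1.symm

lemma map_zpow (ho : IsNormalizedValuation O ϖF o) (z : ℤ) : o (ϖF ^ z) = z := by
  have hϖ := ho.uniformizer_ne_zero
  induction z using Int.induction_on with
  | zero => simpa using ho.map_one
  | succ n ih =>
    rw [zpow_add_one₀ hϖ, ho.map_mul, ih, ho.map_uniformizer]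
    norm_cast
  | pred n ih =>
    have h := ho.map_mul (ϖF ^ (-(n : ℤ) - 1)) ϖF
    rw [← zpow_add_one₀ hϖ, sub_add_cancel, ih, ho.map_uniformizer] at h
    obtain ⟨k, hk⟩ := WithTop.ne_top_iff_exists.mp (ho.ne_top (zpow_ne_zero (-(n : ℤ) - 1) hϖ))
    rw [← hk] at h ⊢
    norm_cast at h ⊢
    omega

lemma map_mul_zpow (ho : IsNormalizedValuation O ϖF o) (a : F) (z : ℤ) :
    o (a * ϖF ^ z) = o a + z := by
  rw [ho.map_mul, ho.map_zpow]

lemma isInt_div (ho : IsNormalizedValuation O ϖF o) {a b : F} (hb : b ≠ 0) (h : o b ≤ o a) :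
    IsInt O (a / b) := by
  rw [ho.isInt_iff, ← WithTop.add_le_add_iff_right (ho.ne_top hb), zero_add, ← ho.map_mul,
    div_mul_cancel₀ a hb]
  exact h

lemma isInt_inv (ho : IsNormalizedValuation O ϖF o) {b : F} (hb : b ≠ 0) (h : o b ≤ 0) :
    IsInt O b⁻¹ := by
  simpa using ho.isInt_div hb (h.trans_eq ho.map_one.symm)

lemma lt_zero_of_not_isInt (ho : IsNormalizedValuation O ϖF o) {a : F} (ha : ¬IsInt O a) :
    o a < 0 :=
  lt_of_not_ge (mt (ho.isInt_iff a).2 ha)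

end IsNormalizedValuation

section Sorting

variable {F : Type*} [Field F] {r : ℕ} {o : F → WithTop ℤ} {x y : Fin r → F}
  {σ σ' : Equiv.Perm (Fin r)}

lemma IsSortPerm.ord_le (hσ : IsSortPerm o x σ) {a b : Fin r} (h : σ.symm a ≤ σ.symm b) :
    o (x b) ≤ o (x a) := by
  simpa using hσ.1 _ _ h

lemma IsSortPerm.symm_lt_symm_iff (hσ : IsSortPerm o x σ) {a b : Fin r} :
    σ.symm a < σ.symm b ↔ o (x b) < o (x a) ∨ (o (x a) = o (x b) ∧ a < b) := by
  constructor
  · intro h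
    rcases (hσ.ord_le h.le).lt_or_eq with hlt | heq
    · exact Or.inl hlt
    · exact Or.inr ⟨heq.symm, by simpa using hσ.2 _ _ h (by simpa using heq.symm)⟩
  · intro h
    by_contra hle
    rcases (not_lt.1 hle).lt_or_eq with hlt | heq
    · rcases h with h | ⟨he, hab⟩
      · exact not_lt.2 (hσ.ord_le hlt.le) h
      · exact lt_asymm hab (by simpa using hσ.2 _ _ hlt (by simpa using he.symm))
    · obtain rfl := σ.symm.injective heq
      rcases h with h | h
      exacts [lt_irrefl _ h, lt_irrefl _ h.2]

lemma IsSortPerm.symm_lt_symm_of_agree (hσ : IsSortPerm o x σ) (hσ' : IsSortPerm o y σ')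
    {a b : Fin r} (ha : y a = x a) (hb : y b = x b) (h : σ.symm a < σ.symm b) :
    σ'.symm a < σ'.symm b :=
  hσ'.symm_lt_symm_iff.2 (by rw [ha, hb]; exact hσ.symm_lt_symm_iff.1 h)

end Sorting

section Hat

variable {F : Type*} [Field F] {r : ℕ} {o : F → WithTop ℤ}

lemma hatF_ne_zero (y : Fin r → F) (i : Fin r) : hatF y i ≠ 0 := by
  unfold hatF
  split_ifs with h
  exacts [one_ne_zero, h]

lemma hatF_of_ne_zero {y : Fin r → F} {i : Fin r} (h : y i ≠ 0) : hatF y i = y i := if_neg h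

lemma hatF_of_eq_zero {y : Fin r → F} {i : Fin r} (h : y i = 0) : hatF y i = 1 := if_pos h

lemma ord_hatF_le (ho0 : o 0 = ⊤) (y : Fin r → F) (i : Fin r) : o (hatF y i) ≤ o (y i) := by
  by_cases h : y i = 0
  · rw [h, ho0]
    exact le_top
  · rw [hatF_of_ne_zero h]

lemma ord_hatF_nonpos (ho1 : o 1 = 0) {y : Fin r → F} (hy : ∀ i, y i ≠ 0 → o (y i) ≤ 0)
    (i : Fin r) : o (hatF y i) ≤ 0 := by
  by_cases h : y i = 0
  · rw [hatF_of_eq_zero h, ho1]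
  · rw [hatF_of_ne_zero h]
    exact hy i h

/-- The sequence `1, ŷ_{σ(1)}, …, ŷ_{σ(r)}`; the entries of `d(y)` are its consecutive
quotients. -/
noncomputable def sortedHat (y : Fin r → F) (σ : Equiv.Perm (Fin r)) : Fin (r + 1) → F :=
  Fin.cases 1 fun k => hatF y (σ k)

/-- `ŷ` at the predecessor of `i` in the order `σ`, or `1` if `i` comes first. -/
noncomputable def predHat (y : Fin r → F) (σ : Equiv.Perm (Fin r)) (i : Fin r) : F :=
  sortedHat y σ (σ.symm i).castSucc

lemma sortedHat_ne_zero (y : Fin r → F) (σ : Equiv.Perm (Fin r)) (n : Fin (r + 1)) :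
    sortedHat y σ n ≠ 0 := by
  induction n using Fin.cases with
  | zero => exact one_ne_zero
  | succ k => exact hatF_ne_zero y (σ k)

lemma ord_sortedHat_le (ho0 : o 0 = ⊤) {y : Fin r → F} {σ : Equiv.Perm (Fin r)}
    (hσ : IsSortPerm o y σ) {n : Fin (r + 1)} {k : Fin r} (hk : (σ.symm k).succ ≤ n) :
    o (sortedHat y σ n) ≤ o (y k) := by
  induction n using Fin.cases with
  | zero => exact absurd hk (not_le.2 (Fin.succ_pos _))
  | succ p =>
    refine (ord_hatF_le ho0 y (σ p)).trans (hσ.ord_le ?_)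
    simpa using Fin.succ_le_succ_iff.1 hk

lemma ord_sortedHat_nonpos (ho1 : o 1 = 0) {y : Fin r → F} (hy : ∀ i, y i ≠ 0 → o (y i) ≤ 0)
    (σ : Equiv.Perm (Fin r)) (n : Fin (r + 1)) : o (sortedHat y σ n) ≤ 0 := by
  induction n using Fin.cases with
  | zero => exact ho1.le
  | succ k => exact ord_hatF_nonpos ho1 hy (σ k)

lemma predHat_ne_zero (y : Fin r → F) (σ : Equiv.Perm (Fin r)) (i : Fin r) :
    predHat y σ i ≠ 0 :=
  sortedHat_ne_zero y σ _

lemma ord_predHat_nonpos (ho1 : o 1 = 0) {y : Fin r → F} (hy : ∀ i, y i ≠ 0 → o (y i) ≤ 0)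
    (σ : Equiv.Perm (Fin r)) (i : Fin r) : o (predHat y σ i) ≤ 0 :=
  ord_sortedHat_nonpos ho1 hy σ _

lemma ord_predHat_le (ho0 : o 0 = ⊤) {y : Fin r → F} {σ : Equiv.Perm (Fin r)}
    (hσ : IsSortPerm o y σ) {i k : Fin r} (h : σ.symm k < σ.symm i) :
    o (predHat y σ i) ≤ o (y k) :=
  ord_sortedHat_le ho0 hσ (Fin.succ_le_castSucc_iff.2 h)

lemma IsSortPerm.symm_lt_symm_of_lt_predHat (ho0 : o 0 = ⊤) {y : Fin r → F}
    {σ : Equiv.Perm (Fin r)} (hσ : IsSortPerm o y σ) {i j : Fin r} (hij : i ≠ j)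
    (h : o (y j) < o (predHat y σ i)) : σ.symm i < σ.symm j :=
  lt_of_le_of_ne (le_of_not_gt fun hji => (ord_predHat_le ho0 hσ hji).not_gt h)
    (σ.symm.injective.ne hij)

lemma dVec_castSucc (hr : 0 < r) (y : Fin r → F) (σ : Equiv.Perm (Fin r)) (i : Fin r) :
    dVec hr y σ i.castSucc = predHat y σ i / hatF y i := by
  simp only [dVec, Fin.val_castSucc, i.isLt, dif_pos, Fin.eta, predHat]
  split_ifs with h0
  · rw [show (σ.symm i).castSucc = 0 from Fin.ext h0, sortedHat, Fin.cases_zero, one_div]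
  · have hs : (σ.symm i).castSucc = (⟨σ.symm i - 1, by omega⟩ : Fin r).succ :=
      Fin.ext (by simp; omega)
    rw [hs, sortedHat, Fin.cases_succ]

lemma dVec_last (hr : 0 < r) (y : Fin r → F) (σ : Equiv.Perm (Fin r)) :
    dVec hr y σ (Fin.last r) = sortedHat y σ (Fin.last r) := by
  have hs : Fin.last r = (⟨r - 1, by omega⟩ : Fin r).succ := Fin.ext (by simp; omega)
  simp only [dVec, Fin.val_last, lt_irrefl, dif_neg, not_false_eq_true]
  rw [show sortedHat y σ (Fin.last r) = _ from congrArg (sortedHat y σ) hs, sortedHat,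
    Fin.cases_succ]

lemma dVec_ne_zero (hr : 0 < r) (y : Fin r → F) (σ : Equiv.Perm (Fin r)) (i : Fin (r + 1)) :
    dVec hr y σ i ≠ 0 := by
  induction i using Fin.lastCases with
  | last => exact dVec_last hr y σ ▸ sortedHat_ne_zero y σ _
  | cast i =>
    exact dVec_castSucc hr y σ i ▸ div_ne_zero (predHat_ne_zero y σ i) (hatF_ne_zero y i)

lemma prod_castSucc_div_succ {n : ℕ} (G : Fin (n + 1) → F) (hG : ∀ i, G i ≠ 0) :
    ∏ i : Fin n, G i.castSucc / G i.succ = G 0 / G (Fin.last n) := by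
  induction n with
  | zero => simp [div_self (hG 0)]
  | succ n ih =>
    rw [Fin.prod_univ_castSucc]
    simp only [Fin.succ_castSucc]
    rw [ih (fun i => G i.castSucc) (fun i => hG _), Fin.succ_last, Fin.castSucc_zero,
      div_mul_div_cancel₀ (hG _)]

lemma prod_dVec (hr : 0 < r) (y : Fin r → F) (σ : Equiv.Perm (Fin r)) :
    ∏ i, dVec hr y σ i = 1 := by
  have hstep : ∀ m : Fin r, dVec hr y σ (σ m).castSucc
      = sortedHat y σ m.castSucc / sortedHat y σ m.succ := by
    intro m
    simp [dVec_castSucc, predHat, sortedHat]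
  rw [Fin.prod_univ_castSucc, ← Equiv.prod_comp σ, Finset.prod_congr rfl fun m _ => hstep m,
    prod_castSucc_div_succ _ (sortedHat_ne_zero y σ), dVec_last,
    div_mul_cancel₀ _ (sortedHat_ne_zero y σ _)]
  rfl

end Hat

section TauPart

variable {O F : Type*} [CommRing O] [Field F] [Algebra O F] {ϖF : F} {o : F → WithTop ℤ}
  {r : ℕ} {x : Fin r → F} {f : Fin r → ℤ} {σ σ' : Equiv.Perm (Fin r)}

lemma select_apply_of_mem {τ : Set (Fin r)} {i : Fin r} (h : σ.symm i ∈ τ) :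
    select x σ τ i = x i :=
  if_pos h

lemma symm_mem_of_select_ne_zero {τ : Set (Fin r)} {i : Fin r} (h : select x σ τ i ≠ 0) :
    σ.symm i ∈ τ :=
  by_contra fun hi => h (if_neg hi)

lemma select_eq_of_ne_zero {τ : Set (Fin r)} {i : Fin r} (h : select x σ τ i ≠ 0) :
    select x σ τ i = x i :=
  select_apply_of_mem (symm_mem_of_select_ne_zero h)

lemma ord_select_tauSet_nonpos (ho : IsNormalizedValuation O ϖF o) (i : Fin r)
    (h : select x σ (tauSet O o x f σ) i ≠ 0) : o (select x σ (tauSet O o x f σ) i) ≤ 0 := by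
  have hi := (symm_mem_of_select_ne_zero h).1
  rw [Equiv.apply_symm_apply] at hi
  rw [select_eq_of_ne_zero h]
  exact (ho.lt_zero_of_not_isInt hi).le

lemma exists_mem_tauSet_le (ho : IsNormalizedValuation O ϖF o) (hσ : IsSortPerm o x σ)
    {b : Fin r} (hb : ¬IsInt O (x (σ b))) :
    ∃ t ∈ tauSet O o x f σ, b ≤ t ∧ o (x (σ t)) + f (σ t) ≤ o (x (σ b)) + f (σ b) := by
  let m : Fin r → WithTop ℤ := fun p => o (x (σ p)) + f (σ p)
  -- the last `t ≥ b` with `m t ≤ m b` lies in `τ`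
  let S := Finset.univ.filter fun t => b ≤ t ∧ m t ≤ m b
  have hS : S.Nonempty := ⟨b, by simp [S]⟩
  obtain ⟨hbt, hmt⟩ : b ≤ S.max' hS ∧ m (S.max' hS) ≤ m b := by
    simpa [S] using S.max'_mem hS
  refine ⟨S.max' hS, ⟨fun hint => hb ?_, fun q hq => ?_⟩, hbt, hmt⟩
  · exact (ho.isInt_iff _).2 (((ho.isInt_iff _).1 hint).trans (hσ.1 _ _ hbt))
  · have hqS : q ∉ S := fun h => (S.le_max' q h).not_gt hq
    have hmq : m b < m q := by simpa [S, hbt.trans hq.le] using hqS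
    exact hmt.trans_lt hmq

lemma ord_add_le_of_lt_predHat (ho : IsNormalizedValuation O ϖF o) (hσ : IsSortPerm o x σ)
    (hσ' : IsSortPerm o (select x σ (tauSet O o x f σ)) σ') {a : Fin r}
    (ha : a ∈ tauSet O o x f σ) {j : Fin r}
    (hj : o (x j) < o (predHat (select x σ (tauSet O o x f σ)) σ' (σ a))) :
    o (x (σ a)) + f (σ a) ≤ o (x j) + f j := by
  have hsel : ∀ p ∈ tauSet O o x f σ, select x σ (tauSet O o x f σ) (σ p) = x (σ p) :=
    fun p hp => select_apply_of_mem (by simpa using hp)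
  have hpred_nonpos : o (predHat (select x σ (tauSet O o x f σ)) σ' (σ a)) ≤ 0 :=
    ord_predHat_nonpos ho.map_one (ord_select_tauSet_nonpos ho) σ' (σ a)
  -- Otherwise some `t ∈ τ` with `σ⁻¹ j ≤ t < a` precedes `σ a` in the order `σ'`, and
  -- `o (x (σ t)) ≤ o (x j) < o (predHat … (σ a))` contradicts `ord_predHat_le`.
  by_contra! hlt
  have hj_int : ¬IsInt O (x (σ (σ.symm j))) := by
    rw [Equiv.apply_symm_apply]
    exact fun hint => ((ho.isInt_iff _).1 hint).not_gt (hj.trans_le hpred_nonpos)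
  obtain ⟨t, ht, hjt, hmt⟩ := exists_mem_tauSet_le (f := f) ho hσ hj_int
  rw [Equiv.apply_symm_apply] at hmt
  have hta : t < a := lt_of_not_ge fun hat => by
    rcases hat.lt_or_eq with h | rfl
    · exact (ha.2 t h).not_ge (hmt.trans hlt.le)
    · exact hlt.not_ge hmt
  have hσ't : σ'.symm (σ t) < σ'.symm (σ a) :=
    hσ.symm_lt_symm_of_agree hσ' (hsel t ht) (hsel a ha) (by simpa using hta)
  have hxt : o (x (σ t)) ≤ o (x j) := hσ.ord_le (by simpa using hjt)
  have := ord_predHat_le ho.map_zero hσ' hσ't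
  rw [hsel t ht] at this
  exact (this.trans hxt).not_gt hj

lemma ord_sortedHat_last_le (ho : IsNormalizedValuation O ϖF o) (hσ : IsSortPerm o x σ)
    (hσ' : IsSortPerm o (select x σ (tauSet O o x f σ)) σ') (j : Fin r) :
    o (sortedHat (select x σ (tauSet O o x f σ)) σ' (Fin.last r)) ≤ o (x j) := by
  have hj := j.isLt
  let p : Fin r := ⟨r - 1, by omega⟩
  have hp : ∀ q : Fin r, q ≤ p := fun q => Fin.le_def.2 (by simp [p]; omega)
  have hxj : o (x (σ p)) ≤ o (x j) := hσ.ord_le (by simpa using hp (σ.symm j))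
  by_cases hint : IsInt O (x (σ p))
  · exact (ord_sortedHat_nonpos ho.map_one (ord_select_tauSet_nonpos ho) σ' _).trans
      (((ho.isInt_iff _).1 hint).trans hxj)
  · have hpτ : p ∈ tauSet O o x f σ := ⟨hint, fun q hq => absurd (hp q) hq.not_ge⟩
    calc o (sortedHat (select x σ (tauSet O o x f σ)) σ' (Fin.last r))
        ≤ o (select x σ (tauSet O o x f σ) (σ p)) :=
          ord_sortedHat_le ho.map_zero hσ' (Fin.le_last _)
      _ = o (x (σ p)) := by rw [select_apply_of_mem (by simpa using hpτ)]
      _ ≤ o (x j) := hxj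

end TauPart

lemma det_eq_one_of_blockTriangular {ι α R : Type*} [Fintype ι] [DecidableEq ι] [LinearOrder α]
    [CommRing R] {M : Matrix ι ι R} {b : ι → α} (hM : M.BlockTriangular b)
    (hb : Function.Injective b) (hdiag : ∀ i, M i i = 1) : M.det = 1 := by
  rw [hM.det]
  refine Finset.prod_eq_one fun a ha => ?_
  obtain ⟨i, -, rfl⟩ := Finset.mem_image.1 ha
  let : Unique {j // b j = b i} := ⟨⟨⟨i, rfl⟩⟩, fun j => Subtype.ext (hb j.2)⟩
  rw [det_unique]
  exact hdiag i

section ClearingMatrix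

variable {O F : Type*} [CommRing O] [Field F] [Algebra O F] {r : ℕ}

noncomputable def clearMat (o : F → WithTop ℤ) (x y c : Fin r → F) : Matrix (Fin r) (Fin r) F :=
  of fun i j => if i = j then 1 else if y i ≠ 0 ∧ o (x j) < o (c i) then x j / x i else 0

lemma det_clearMat {o : F → WithTop ℤ} {x y c : Fin r → F} (σ : Equiv.Perm (Fin r))
    (h : ∀ i j, i ≠ j → y i ≠ 0 → o (x j) < o (c i) → y j ≠ 0 → σ.symm i < σ.symm j) :
    (clearMat o x y c).det = 1 := by
  let κ : Fin r → ℕ := fun i => if y i ≠ 0 then σ.symm i else r + i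
  refine det_eq_one_of_blockTriangular (b := κ) (fun i j hji => ?_) (fun i j hij => ?_)
    (fun i => by simp [clearMat])
  · by_contra hne
    have hij : i ≠ j := by rintro rfl; exact lt_irrefl _ hji
    simp only [clearMat, of_apply, if_neg hij] at hne
    split_ifs at hne with hc
    · obtain ⟨hyi, hlt⟩ := hc
      by_cases hyj : y j ≠ 0
      · have := h i j hij hyi hlt hyj
        simp only [κ, if_pos hyi, if_pos hyj] at hji
        exact lt_asymm hji this
      · simp only [κ, if_pos hyi, if_neg hyj] at hji
        omega
    · exact hne rfl
  · simp only [κ] at hij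
    split_ifs at hij with hi hj hj
    · exact σ.symm.injective (Fin.ext hij)
    all_goals omega

lemma Dpow_mul_Dpow_neg {ϖF : F} (hϖ : ϖF ≠ 0) (f : Fin r → ℤ) :
    Dpow ϖF f * Dpow ϖF (-f) = 1 := by
  rw [Dpow, Dpow, diagonal_mul_diagonal, ← diagonal_one]
  congr 1
  ext i
  simp only [Pi.neg_apply, _root_.zpow_neg]
  exact mul_inv_cancel₀ (zpow_ne_zero _ hϖ)

lemma Dpow_neg_mul_Dpow {ϖF : F} (hϖ : ϖF ≠ 0) (f : Fin r → ℤ) :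
    Dpow ϖF (-f) * Dpow ϖF f = 1 := by
  simpa using Dpow_mul_Dpow_neg hϖ (-f)

lemma Dpow_neg_mul_clearMat_mul_Dpow_mem_SLO {ϖF : F} {o : F → WithTop ℤ}
    (ho : IsNormalizedValuation O ϖF o) {x y c : Fin r → F} {f : Fin r → ℤ}
    (hx : ∀ i, y i ≠ 0 → x i ≠ 0) (hdet : (clearMat o x y c).det = 1)
    (hf : ∀ i j, y i ≠ 0 → o (x j) < o (c i) → o (x i) + f i ≤ o (x j) + f j) :
    Dpow ϖF (-f) * clearMat o x y c * Dpow ϖF f ∈ SLO O r := by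
  have hϖ := ho.uniformizer_ne_zero
  refine ⟨fun i j => ?_, ?_⟩
  · simp only [Dpow, diagonal_mul, mul_diagonal, clearMat, of_apply, Pi.neg_apply]
    split_ifs with hij hc
    · subst hij
      rw [mul_one, ← zpow_add₀ hϖ, neg_add_cancel, zpow_zero]
      exact isInt_one
    · have hxi := hx i hc.1
      have hq : ϖF ^ (-f i) * (x j / x i) * ϖF ^ f j = x j * ϖF ^ f j / (x i * ϖF ^ f i) := by
        rw [_root_.zpow_neg]
        field_simp
      rw [hq]
      refine ho.isInt_div (mul_ne_zero hxi (zpow_ne_zero _ hϖ)) ?_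
      rw [ho.map_mul_zpow, ho.map_mul_zpow]
      exact hf i j hc.1 hc.2
    · rw [mul_zero, zero_mul]
      exact isInt_zero
  · rw [det_mul, det_mul, hdet, mul_one, ← det_mul, Dpow_neg_mul_Dpow hϖ, det_one]

lemma exists_mem_SLO_conj_mul_eq_one {ϖF : F} (hϖ : ϖF ≠ 0) {f : Fin r → ℤ}
    {B : Matrix (Fin r) (Fin r) F} (hB : Dpow ϖF (-f) * B * Dpow ϖF f ∈ SLO O r) :
    ∃ s ∈ SLO O r, Dpow ϖF f * s * Dpow ϖF (-f) * B = 1 := by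
  set C := Dpow ϖF (-f) * B * Dpow ϖF f
  have hC : C⁻¹ * C = 1 := nonsing_inv_mul C (by rw [hB.2]; exact isUnit_one)
  refine ⟨C⁻¹, inv_mem_SLO hB, ?_⟩
  calc Dpow ϖF f * C⁻¹ * Dpow ϖF (-f) * B
      = Dpow ϖF f * C⁻¹ * Dpow ϖF (-f) * B * (Dpow ϖF f * Dpow ϖF (-f)) := by
        rw [Dpow_mul_Dpow_neg hϖ, mul_one]
    _ = Dpow ϖF f * (C⁻¹ * C) * Dpow ϖF (-f) := by simp only [C, Matrix.mul_assoc]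
    _ = 1 := by rw [hC, mul_one, Dpow_mul_Dpow_neg hϖ]

end ClearingMatrix

section RightFactor

variable {O F : Type*} [CommRing O] [Field F] [Algebra O F] {r : ℕ}

noncomputable def rightFactor (d : Fin (r + 1) → F) (v x : Fin r → F)
    (B : Matrix (Fin r) (Fin r) F) : Matrix (Fin (r + 1)) (Fin (r + 1)) F :=
  diagonal d⁻¹ * uMat (-v) * embed B * lMat x

lemma lMat_eq_of_mul_eq_one {E B : Matrix (Fin r) (Fin r) F} (hEB : E * B = 1)
    {d : Fin (r + 1) → F} (hd : ∀ i, d i ≠ 0) (v x : Fin r → F) :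
    lMat x = embed E * uMat v * diagonal d * rightFactor d v x B := by
  have hdd : diagonal d * diagonal d⁻¹ = 1 := by
    rw [diagonal_mul_diagonal, ← diagonal_one]
    congr 1
    ext i
    exact mul_inv_cancel₀ (hd i)
  have huu : uMat v * uMat (-v) = 1 := by rw [uMat_mul_uMat, add_neg_cancel, uMat_zero]
  calc lMat x = embed E * embed B * lMat x := by rw [embed_mul, hEB, embed_one, one_mul]
    _ = embed E * (uMat v * (diagonal d * diagonal d⁻¹) * uMat (-v)) * embed B * lMat x := by
        rw [hdd, mul_one, huu, mul_one]
    _ = embed E * uMat v * diagonal d * rightFactor d v x B := by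
        simp only [rightFactor, Matrix.mul_assoc]

lemma rightFactor_castSucc_castSucc (d : Fin (r + 1) → F) (v x : Fin r → F)
    (B : Matrix (Fin r) (Fin r) F) (i j : Fin r) :
    rightFactor d v x B i.castSucc j.castSucc = (d i.castSucc)⁻¹ * (B i j - v i * x j) := by
  simp only [rightFactor, Matrix.mul_assoc, diagonal_mul, uMat_mul_apply_castSucc,
    mul_lMat_apply_castSucc, embed_castSucc_castSucc, embed_castSucc_last,
    embed_last_castSucc, embed_last_last, Pi.inv_apply, Pi.neg_apply]
  ring

lemma rightFactor_castSucc_last (d : Fin (r + 1) → F) (v x : Fin r → F)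
    (B : Matrix (Fin r) (Fin r) F) (i : Fin r) :
    rightFactor d v x B i.castSucc (Fin.last r) = -((d i.castSucc)⁻¹ * v i) := by
  simp only [rightFactor, Matrix.mul_assoc, diagonal_mul, uMat_mul_apply_castSucc,
    mul_lMat_apply_last, embed_castSucc_last, embed_last_last, Pi.inv_apply, Pi.neg_apply]
  ring

lemma rightFactor_last_castSucc (d : Fin (r + 1) → F) (v x : Fin r → F)
    (B : Matrix (Fin r) (Fin r) F) (j : Fin r) :
    rightFactor d v x B (Fin.last r) j.castSucc = (d (Fin.last r))⁻¹ * x j := by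
  simp [rightFactor, Matrix.mul_assoc, uMat_mul_apply_last, mul_lMat_apply_castSucc]

lemma rightFactor_last_last (d : Fin (r + 1) → F) (v x : Fin r → F)
    (B : Matrix (Fin r) (Fin r) F) :
    rightFactor d v x B (Fin.last r) (Fin.last r) = (d (Fin.last r))⁻¹ := by
  simp [rightFactor, Matrix.mul_assoc, uMat_mul_apply_last, mul_lMat_apply_last]

lemma det_rightFactor {d : Fin (r + 1) → F} (hd : ∏ i, d i = 1) (v x : Fin r → F)
    {B : Matrix (Fin r) (Fin r) F} (hB : B.det = 1) : (rightFactor d v x B).det = 1 := by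
  simp [rightFactor, det_uMat, det_lMat, det_embed, hB, Finset.prod_inv_distrib, hd]

variable {ϖF : F} {o : F → WithTop ℤ} {x y : Fin r → F} {σ : Equiv.Perm (Fin r)}

lemma isInt_rightFactor_castSucc (ho : IsNormalizedValuation O ϖF o) (hr : 0 < r)
    (hyx : ∀ i, y i ≠ 0 → y i = x i) (hy : ∀ i, y i ≠ 0 → o (y i) ≤ 0) (i : Fin r)
    (j : Fin (r + 1)) :
    IsInt O (rightFactor (dVec hr y σ) (fun k => (y k)⁻¹) x (clearMat o x y (predHat y σ))
      i.castSucc j) := by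
  have hc0 := predHat_ne_zero y σ i
  have hinv : IsInt O (predHat y σ i)⁻¹ := ho.isInt_inv hc0 (ord_predHat_nonpos ho.map_one hy σ i)
  by_cases hyi : y i = 0
  · induction j using Fin.lastCases with
    | last => simpa [rightFactor_castSucc_last, hyi] using isInt_zero
    | cast j =>
      rw [rightFactor_castSucc_castSucc, dVec_castSucc, hatF_of_eq_zero hyi]
      by_cases hij : i = j
      · subst hij
        simpa [clearMat, hyi] using hinv
      · simpa [clearMat, hij, hyi] using isInt_zero
  · have hxi : x i ≠ 0 := hyx i hyi ▸ hyi
    induction j using Fin.lastCases with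
    | last =>
      have hq : -((predHat y σ i / x i)⁻¹ * (x i)⁻¹) = -(predHat y σ i)⁻¹ := by field_simp
      rw [rightFactor_castSucc_last, dVec_castSucc, hatF_of_ne_zero hyi, hyx i hyi, hq]
      exact hinv.neg
    | cast j =>
      have hq : (predHat y σ i / x i)⁻¹ * (clearMat o x y (predHat y σ) i j - (x i)⁻¹ * x j)
          = (x i * clearMat o x y (predHat y σ) i j - x j) / predHat y σ i := by field_simp
      rw [rightFactor_castSucc_castSucc, dVec_castSucc, hatF_of_ne_zero hyi, hyx i hyi, hq]
      by_cases hij : i = j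
      · subst hij
        simpa [clearMat] using isInt_zero
      by_cases hlt : o (x j) < o (predHat y σ i)
      · simpa [clearMat, hij, hyi, hlt, mul_div_cancel₀ _ hxi] using isInt_zero
      · have hB : clearMat o x y (predHat y σ) i j = 0 := by simp [clearMat, hij, hlt]
        rw [hB, mul_zero, zero_sub, neg_div]
        exact (ho.isInt_div hc0 (not_lt.1 hlt)).neg

lemma isInt_rightFactor_last (ho : IsNormalizedValuation O ϖF o) (hr : 0 < r)
    (hy : ∀ i, y i ≠ 0 → o (y i) ≤ 0) (hlast : ∀ j, o (sortedHat y σ (Fin.last r)) ≤ o (x j))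
    (B : Matrix (Fin r) (Fin r) F) (j : Fin (r + 1)) :
    IsInt O (rightFactor (dVec hr y σ) (fun k => (y k)⁻¹) x B (Fin.last r) j) := by
  have hc0 := sortedHat_ne_zero y σ (Fin.last r)
  induction j using Fin.lastCases with
  | last =>
    rw [rightFactor_last_last, dVec_last]
    exact ho.isInt_inv hc0 (ord_sortedHat_nonpos ho.map_one hy σ _)
  | cast j =>
    rw [rightFactor_last_castSucc, dVec_last, ← div_eq_inv_mul]
    exact ho.isInt_div hc0 (hlast j)

lemma rightFactor_mem_SLO (ho : IsNormalizedValuation O ϖF o) (hr : 0 < r)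
    (hyx : ∀ i, y i ≠ 0 → y i = x i) (hy : ∀ i, y i ≠ 0 → o (y i) ≤ 0)
    (hlast : ∀ j, o (sortedHat y σ (Fin.last r)) ≤ o (x j))
    (hdet : (clearMat o x y (predHat y σ)).det = 1) :
    rightFactor (dVec hr y σ) (fun k => (y k)⁻¹) x (clearMat o x y (predHat y σ))
      ∈ SLO O (r + 1) := by
  refine ⟨fun i j => ?_, det_rightFactor (prod_dVec hr y σ) _ x hdet⟩
  induction i using Fin.lastCases with
  | last => exact isInt_rightFactor_last ho hr hy hlast _ j
  | cast i => exact isInt_rightFactor_castSucc ho hr hyx hy i j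

end RightFactor

theorem stmt2_general {r : ℕ} (hr : 0 < r) (ϖ : O)
    (o : F → WithTop ℤ)
    (ho0 : o 0 = ⊤)
    (homul : ∀ x y : F, o (x * y) = o x + o y)
    (hoϖ : o (algebraMap O F ϖ) = 1)
    (hoint : ∀ x : F, IsInt O x ↔ 0 ≤ o x)
    (x : Fin r → F) (f : Fin r → ℤ)
    (σ : Equiv.Perm (Fin r)) (hσ : IsSortPerm o x σ)
    (σ' : Equiv.Perm (Fin r))
    (hσ' : IsSortPerm o (select x σ (tauSet O o x f σ)) σ') :
    ∃ s ∈ SLO O r, ∃ k ∈ SLO O (r + 1),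
      lMat x =
        embed (Dpow (algebraMap O F ϖ) f * s * Dpow (algebraMap O F ϖ) (fun i => -(f i))) *
          uMat (fun i => (select x σ (tauSet O o x f σ) i)⁻¹) *
          diagonal (dVec hr (select x σ (tauSet O o x f σ)) σ') * k := by
  have ho : IsNormalizedValuation O (algebraMap O F ϖ) o := ⟨ho0, homul, hoϖ, hoint⟩
  set y := select x σ (tauSet O o x f σ)
  have hyx : ∀ i, y i ≠ 0 → y i = x i := fun i => select_eq_of_ne_zero
  have hdet : (clearMat o x y (predHat y σ')).det = 1 :=
    det_clearMat σ' fun i j hij _ hj hyj =>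
      hσ'.symm_lt_symm_of_lt_predHat ho.map_zero hij (by rwa [hyx j hyj])
  have hf : ∀ i j, y i ≠ 0 → o (x j) < o (predHat y σ' i) → o (x i) + f i ≤ o (x j) + f j :=
    fun i j hyi hj => by
      simpa using ord_add_le_of_lt_predHat ho hσ hσ' (symm_mem_of_select_ne_zero hyi)
        (j := j) (by simpa using hj)
  obtain ⟨s, hs, hsB⟩ := exists_mem_SLO_conj_mul_eq_one ho.uniformizer_ne_zero
    (Dpow_neg_mul_clearMat_mul_Dpow_mem_SLO ho (fun i hyi => hyx i hyi ▸ hyi) hdet hf)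
  exact ⟨s, hs, _, rightFactor_mem_SLO ho hr hyx (ord_select_tauSet_nonpos ho)
    (ord_sortedHat_last_le ho hσ hσ') hdet, lMat_eq_of_mul_eq_one hsB (dVec_ne_zero hr y σ') _ x⟩

/-- Proposition: for every `x ∈ F^r` and `f ∈ ℤ^r`, the matrix `ū(x)` lies in the double coset
`Ȟ_f · u(x(τ_x^f)*) · d(x(τ_x^f)) · SL_{r+1}(O)`, where `H_f = ϖ^f SL_r(O) ϖ^{−f}`,
`Ȟ_f = {diag(h,1) : h ∈ H_f}`, and `σ'` is the sorting permutation of `x(τ_x^f)`. -/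
theorem stmt2 {r : ℕ} (hr : 0 < r) (ϖ : O) (hϖ : Irreducible ϖ)
    (o : F → WithTop ℤ)
    (ho0 : o 0 = ⊤)
    (homul : ∀ x y : F, o (x * y) = o x + o y)
    (hoϖ : o (algebraMap O F ϖ) = 1)
    (hoint : ∀ x : F, IsInt O x ↔ 0 ≤ o x)
    (x : Fin r → F) (f : Fin r → ℤ)
    (σ : Equiv.Perm (Fin r)) (hσ : IsSortPerm o x σ)
    (σ' : Equiv.Perm (Fin r))
    (hσ' : IsSortPerm o (select x σ (tauSet O o x f σ)) σ') :
    ∃ s ∈ SLO O r, ∃ k ∈ SLO O (r + 1),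
      lMat x =
        embed (Dpow (algebraMap O F ϖ) f * s * Dpow (algebraMap O F ϖ) (fun i => -(f i))) *
          uMat (fun i => (select x σ (tauSet O o x f σ) i)⁻¹) *
          diagonal (dVec hr (select x σ (tauSet O o x f σ)) σ') * k :=
  stmt2_general hr ϖ o ho0 homul hoϖ hoint x f σ hσ σ' hσ'

end ShalikaStmt2
end

section
/- Let f ∈ ℤ^r with f_1 < f_2 < … < f_r, and let w be a permutation of {1,…,r}, identified with the permutation matrix in GL_r satisfying w·[g_{i,j}]·w^{-1} = [g_{w(i),w(j)}]. If k ∈ GL_r(O) ∩ ϖ^f · GL_r(O) · (w·ϖ^f·w^{-1})^{-1}, then k_{i,w^{-1}(i)} ∈ O^× for every i, and for all i, j one has k_{i,j} ∈ 𝔭^{f_i − f_{w(j)}} whenever f_{w(j)} < f_i, and k_{i,j} ∈ O otherwise. -/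
/-!
Write `k = ϖ^f g (w ϖ^f w⁻¹)⁻¹` with `g ∈ GL_r(O)`, so that
`k_{i,j} = ϖ^{f_i - f_{w(j)}} g_{i,j}`; in particular `ϖ ∣ k_{i,j}` whenever `f_{w(j)} < f_i`.
For a permutation `σ ≠ w`, comparing `∑ f_{σ(i)} = ∑ f_{w(i)}` and using injectivity of `f`
gives some `i` with `f_{w(i)} < f_{σ(i)}`, so every term of the Leibniz expansion of `det k`
except the one indexed by `w` is divisible by `ϖ`. Since `det k ∈ O^×`, `ϖ` does not divide
`∏ᵢ k_{w(i),i}`, so each `k_{w(i),i}` is a unit of the discrete valuation ring `O`.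
-/

open Matrix

namespace ShalikaStmt5

variable {O F : Type*} [CommRing O] [IsDomain O] [IsDiscreteValuationRing O]
  [Field F] [Algebra O F] [IsFractionRing O F]

/-- `x ∈ F` lies in (the image of) `O`. -/
def IsInt (O : Type*) {F : Type*} [CommRing O] [Field F] [Algebra O F] (x : F) : Prop :=
  ∃ a : O, algebraMap O F a = x

/-- `GL_r(O)`: matrices with entries in `O` and determinant in `O^×`. -/
def GLO (O : Type*) {F : Type*} [CommRing O] [Field F] [Algebra O F] (r : ℕ) :
    Set (Matrix (Fin r) (Fin r) F) :=
  {g | (∀ i j, IsInt O (g i j)) ∧ ∃ u : Oˣ, algebraMap O F (u : O) = g.det}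

/-- The diagonal matrix `ϖ^f`. -/
noncomputable def Dpow {F : Type*} [Field F] {r : ℕ} (ϖF : F) (f : Fin r → ℤ) :
    Matrix (Fin r) (Fin r) F :=
  diagonal fun i => ϖF ^ f i

theorem _root_.Equiv.Perm.apply_eq_of_forall_le {ι M : Type*} [Fintype ι] [AddCommMonoid M]
    [PartialOrder M] [IsOrderedCancelAddMonoid M] (g : ι → M) {σ τ : Equiv.Perm ι}
    (h : ∀ i, g (σ i) ≤ g (τ i)) (i : ι) : g (σ i) = g (τ i) := by
  have hsum : ∑ i, g (σ i) = ∑ i, g (τ i) := by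
    rw [Equiv.sum_comp σ g, Equiv.sum_comp τ g]
  exact (Finset.sum_eq_sum_iff_of_le fun i _ => h i).mp hsum i (Finset.mem_univ i)

theorem _root_.Function.Injective.exists_lt_of_perm_ne {ι M : Type*} [Fintype ι]
    [AddCommMonoid M] [LinearOrder M] [IsOrderedCancelAddMonoid M] {f : ι → M}
    (hf : Function.Injective f) {σ τ : Equiv.Perm ι} (hne : σ ≠ τ) :
    ∃ i, f (τ i) < f (σ i) := by
  by_contra! hle
  exact hne (Equiv.ext fun i => hf (Equiv.Perm.apply_eq_of_forall_le f hle i))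

theorem _root_.Irreducible.isUnit_of_not_dvd {R : Type*} [CommRing R] [IsDomain R]
    [IsDiscreteValuationRing R] {ϖ x : R} (hϖ : Irreducible ϖ) (hx : ¬ ϖ ∣ x) :
    IsUnit x := by
  rwa [← IsLocalRing.notMem_maximalIdeal,
    (IsDiscreteValuationRing.irreducible_iff_uniformizer ϖ).mp hϖ, Ideal.mem_span_singleton]

theorem _root_.Matrix.dvd_det_sub_sign_smul_prod {n R : Type*} [Fintype n] [DecidableEq n]
    [CommRing R] (A : Matrix n n R) {p : R} {w : Equiv.Perm n}
    (h : ∀ σ ≠ w, ∃ i, p ∣ A (σ i) i) :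
    p ∣ A.det - Equiv.Perm.sign w • ∏ i, A (w i) i := by
  rw [det_apply, ← Finset.add_sum_erase _ _ (Finset.mem_univ w), add_sub_cancel_left]
  refine Finset.dvd_sum fun σ hσ => ?_
  obtain ⟨i, hi⟩ := h σ (Finset.ne_of_mem_erase hσ)
  rw [Units.smul_def, zsmul_eq_mul]
  exact (hi.trans <| Finset.dvd_prod_of_mem (fun j => A (σ j) j) (by simp)).mul_left _

theorem _root_.Matrix.not_dvd_apply_of_isUnit_det {n R : Type*} [Fintype n] [DecidableEq n]
    [CommRing R] {A : Matrix n n R} (hA : IsUnit A.det) {p : R} (hp : ¬ IsUnit p)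
    {w : Equiv.Perm n} (h : ∀ σ ≠ w, ∃ i, p ∣ A (σ i) i) (i : n) :
    ¬ p ∣ A (w i) i := by
  intro hi
  have hprod : p ∣ Equiv.Perm.sign w • ∏ i, A (w i) i := by
    rw [Units.smul_def, zsmul_eq_mul]
    exact (hi.trans <| Finset.dvd_prod_of_mem (fun j => A (w j) j) (by simp)).mul_left _
  have hdet : p ∣ A.det := by
    simpa using dvd_add (A.dvd_det_sub_sign_smul_prod h) hprod
  exact hp (isUnit_of_dvd_unit hdet hA)

theorem exists_isUnit_det_of_mem_GLO {R K : Type*} [CommRing R] [Field K] [Algebra R K]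
    [FaithfulSMul R K] {r : ℕ} {k : Matrix (Fin r) (Fin r) K} (hk : k ∈ GLO R r) :
    ∃ A : Matrix (Fin r) (Fin r) R,
      (∀ i j, algebraMap R K (A i j) = k i j) ∧ IsUnit A.det := by
  obtain ⟨hint, u, hu⟩ := hk
  choose A hA using hint
  have hdet : algebraMap R K (Matrix.of A).det = algebraMap R K u := by
    rw [hu, RingHom.map_det]
    congr
    ext i j
    exact hA i j
  exact ⟨Matrix.of A, hA, FaithfulSMul.algebraMap_injective R K hdet ▸ u.isUnit⟩

theorem Dpow_mul_mul_Dpow_apply {K : Type*} [Field K] {r : ℕ} {x : K} (hx : x ≠ 0)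
    (e₁ e₂ : Fin r → ℤ) (g : Matrix (Fin r) (Fin r) K) (i j : Fin r) :
    (Dpow x e₁ * g * Dpow x e₂) i j = x ^ (e₁ i + e₂ j) * g i j := by
  rw [Dpow, Dpow, mul_diagonal, diagonal_mul, zpow_add₀ hx]
  ring

theorem dvd_of_algebraMap_eq_zpow_mul {R K : Type*} [CommRing R] [Field K] [Algebra R K]
    [FaithfulSMul R K] {ϖ a b : R} {n : ℤ} (hn : 0 < n)
    (h : algebraMap R K a = algebraMap R K ϖ ^ n * algebraMap R K b) : ϖ ∣ a := by
  lift n to ℕ using hn.le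
  rw [zpow_natCast, ← map_pow, ← map_mul] at h
  rw [FaithfulSMul.algebraMap_injective R K h]
  exact (dvd_pow_self ϖ (by omega)).mul_right b

/-- Let `f ∈ ℤ^r` be strictly increasing and `w` a permutation.  The permutation matrix
convention `w · [g_{i,j}] · w⁻¹ = [g_{w(i),w(j)}]` gives `w · ϖ^f · w⁻¹ = diag(ϖ^{f(w i)})`.
If `k ∈ GL_r(O) ∩ ϖ^f · GL_r(O) · (w·ϖ^f·w⁻¹)⁻¹`, then `k_{i,w⁻¹(i)} ∈ O^×` for every `i`,
and `k_{i,j} ∈ 𝔭^{f_i − f_{w(j)}}` if `f_{w(j)} < f_i`, while `k_{i,j} ∈ O` otherwise. -/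
theorem stmt5 {r : ℕ} (ϖ : O) (hϖ : Irreducible ϖ)
    (f : Fin r → ℤ) (hf : ∀ i j : Fin r, i < j → f i < f j)
    (w : Equiv.Perm (Fin r))
    (k : Matrix (Fin r) (Fin r) F)
    (hk : k ∈ GLO O r ∧ ∃ g ∈ GLO (O := O) (F := F) r,
      k = Dpow (algebraMap O F ϖ) f * g * Dpow (algebraMap O F ϖ) (fun i => -(f (w i)))) :
    (∀ i : Fin r, ∃ u : Oˣ, algebraMap O F (u : O) = k i (w.symm i)) ∧
    (∀ i j : Fin r,
      (f (w j) < f i →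
        ∃ a : O, k i j = (algebraMap O F ϖ) ^ (f i - f (w j)) * algebraMap O F a) ∧
      (¬ f (w j) < f i → IsInt O (k i j))) := by
  obtain ⟨hkGL, g, hgGL, hkg⟩ := hk
  obtain ⟨A, hA, hAdet⟩ := exists_isUnit_det_of_mem_GLO hkGL
  have hϖ0 : algebraMap O F ϖ ≠ 0 :=
    (map_ne_zero_iff _ (FaithfulSMul.algebraMap_injective O F)).mpr hϖ.ne_zero
  have hentry (i j : Fin r) : k i j = algebraMap O F ϖ ^ (f i - f (w j)) * g i j := by
    rw [hkg, Dpow_mul_mul_Dpow_apply hϖ0, sub_eq_add_neg]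
  have hdvd (i j : Fin r) (hij : f (w j) < f i) : ϖ ∣ A i j := by
    obtain ⟨b, hb⟩ := hgGL.1 i j
    exact dvd_of_algebraMap_eq_zpow_mul (b := b) (sub_pos.mpr hij) (by rw [hA, hb, ← hentry])
  have hf_inj : Function.Injective f := StrictMono.injective hf
  have hunit (i : Fin r) : IsUnit (A (w i) i) :=
    hϖ.isUnit_of_not_dvd <| A.not_dvd_apply_of_isUnit_det hAdet hϖ.not_isUnit
      (fun σ hσ => (hf_inj.exists_lt_of_perm_ne hσ).imp fun i => hdvd (σ i) i) i
  refine ⟨fun i => ?_, fun i j => ⟨fun _ => ?_, fun _ => hkGL.1 i j⟩⟩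
  · obtain ⟨u, hu⟩ := hunit (w.symm i)
    exact ⟨u, by rw [hu, hA, w.apply_symm_apply]⟩
  · obtain ⟨b, hb⟩ := hgGL.1 i j
    exact ⟨b, by rw [hentry, hb]⟩

end ShalikaStmt5
end

section
/- Let n = 2m be an even positive integer. Every (S°_{n+2}, P_{n+2}(O))-double coset in P_{n+2} contains a matrix of the form diag(g, 1_{m+1}) where g = [[1_m, βᵀ],[0,1]]·diag(ϖ^{f_1},…,ϖ^{f_m}, ϖ^l) ∈ GL_{m+1}(F) for some β ∈ F^m, f ∈ ℤ^m and l ∈ ℤ. That is, for every p ∈ P_{n+2} there exist s ∈ S°_{n+2}, k ∈ P_{n+2}(O), β ∈ F^m, f ∈ ℤ^m and l ∈ ℤ such that p = s · diag([[1_m, βᵀ],[0,1]]·diag(ϖ^{f_1},…,ϖ^{f_m}, ϖ^l), 1_{m+1}) · k. -/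
/-!
An Iwasawa decomposition `p = T k`, with `T ∈ P_N` upper triangular and `k ∈ P_N(O)`, comes from
clearing the last row, using an entry of least valuation as pivot, and recursing. In
`(m+1)`-blocks `T = [[A, B], [0, D]]` with `D ∈ P_{m+1}`, so `T = [[D, B], [0, D]] · diag(h, 1)`
for `h = D⁻¹ A`, whose last row is `(0, …, 0, t)`. The Cartan decomposition
`GL_m(F) = GL_m(O) · diag(ϖ^f) · GL_m(O)` of the upper-left corner of `h`, together with
`t = u ϖ^l`, gives `h = a · u(β) diag(ϖ^f, ϖ^l) · c` with `a ∈ P_{m+1}(O)` and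
`c ∈ GL_{m+1}(O)`. Finally `a` is absorbed into the Shalika factor `[[D a, B a], [0, D a]]` and
`diag(c, a⁻¹)` into `P_N(O)`.
-/

open Matrix

namespace ShalikaStmt6

variable {O F : Type*} [CommRing O] [IsDomain O] [IsDiscreteValuationRing O]
  [Field F] [Algebra O F] [IsFractionRing O F]

/-- `x ∈ F` lies in (the image of) `O`. -/
def IsInt (O : Type*) {F : Type*} [CommRing O] [Field F] [Algebra O F] (x : F) : Prop :=
  ∃ a : O, algebraMap O F a = x

/-- The mirabolic subgroup `P_N ⊂ GL_N(F)`: invertible matrices with last row `(0,…,0,1)`. -/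
def Pset (F : Type*) [Field F] (N : ℕ) : Set (Matrix (Fin N) (Fin N) F) :=
  {p | IsUnit p.det ∧ ∀ i j : Fin N, (i : ℕ) = N - 1 →
    p i j = if (j : ℕ) = N - 1 then 1 else 0}

/-- `P_N(O) = P_N ∩ GL_N(O)`. -/
def POset (O : Type*) (F : Type*) [CommRing O] [Field F] [Algebra O F] (N : ℕ) :
    Set (Matrix (Fin N) (Fin N) F) :=
  {p | p ∈ Pset F N ∧ (∀ i j, IsInt O (p i j)) ∧ ∃ u : Oˣ, algebraMap O F (u : O) = p.det}

/-- The block matrix `[[a,b],[0,a]]` of size `(M+M) × (M+M)`. -/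
def shalikaMat {F : Type*} [Field F] {M : ℕ} (a b : Matrix (Fin M) (Fin M) F) :
    Matrix (Fin (M + M)) (Fin (M + M)) F :=
  Matrix.reindex finSumFinEquiv finSumFinEquiv (Matrix.fromBlocks a b 0 a)

/-- The Shalika subgroup `S_{M+M} ⊂ GL_{M+M}(F)`. -/
def Sset (O : Type*) (F : Type*) [CommRing O] [Field F] [Algebra O F] (M : ℕ) :
    Set (Matrix (Fin (M + M)) (Fin (M + M)) F) :=
  {s | ∃ a b : Matrix (Fin M) (Fin M) F, IsUnit a.det ∧ s = shalikaMat a b}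

/-- The embedding `g ↦ diag(g, 1_M)` of `M × M` matrices into `(M+M) × (M+M)` matrices. -/
def diagEmbed {F : Type*} [Field F] {M : ℕ} (g : Matrix (Fin M) (Fin M) F) :
    Matrix (Fin (M + M)) (Fin (M + M)) F :=
  Matrix.reindex finSumFinEquiv finSumFinEquiv (Matrix.fromBlocks g 0 0 1)

/-- The upper unipotent matrix `[[1_r, βᵀ],[0,1]]`. -/
def uMat {F : Type*} [Field F] {r : ℕ} (β : Fin r → F) :
    Matrix (Fin (r + 1)) (Fin (r + 1)) F :=
  Matrix.of fun i j =>
    if i = j then 1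
    else if (j : ℕ) = r then (if h : (i : ℕ) < r then β ⟨i, h⟩ else 0) else 0

end ShalikaStmt6

namespace ShalikaStmt6

section IntegralGL

variable {O F : Type*} [CommRing O] [CommRing F] [Algebra O F]
  {n : Type*} [Fintype n] [DecidableEq n]

variable (O F n) in
/-- `GL_n(O)`, as a submonoid of `M_n(F)`. -/
def integralGL : Submonoid (Matrix n n F) where
  carrier := {k | ∃ K : Matrix n n O, IsUnit K ∧ K.map (algebraMap O F) = k}
  mul_mem' := by
    rintro _ _ ⟨K, hK, rfl⟩ ⟨L, hL, rfl⟩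
    exact ⟨K * L, hK.mul hL, Matrix.map_mul⟩
  one_mem' := ⟨1, isUnit_one, Matrix.map_one _ (map_zero _) (map_one _)⟩

theorem isUnit_det_of_mem_integralGL {k : Matrix n n F} (hk : k ∈ integralGL O F n) :
    IsUnit k.det := by
  obtain ⟨K, hK, rfl⟩ := hk
  exact (isUnit_iff_isUnit_det _).mp (hK.map (algebraMap O F).mapMatrix)

theorem nonsing_inv_mem_integralGL {k : Matrix n n F} (hk : k ∈ integralGL O F n) :
    k⁻¹ ∈ integralGL O F n := by
  obtain ⟨K, hK, rfl⟩ := hk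
  have hdet := (isUnit_iff_isUnit_det K).mp hK
  refine ⟨K⁻¹, (isUnit_iff_isUnit_det _).mpr (isUnit_nonsing_inv_det K hdet), ?_⟩
  refine (inv_eq_right_inv ?_).symm
  rw [← Matrix.map_mul, mul_nonsing_inv K hdet, Matrix.map_one _ (map_zero _) (map_one _)]

theorem reindex_mem_integralGL {n' : Type*} [Fintype n'] [DecidableEq n'] (e : n ≃ n')
    {k : Matrix n n F} (hk : k ∈ integralGL O F n) :
    reindex e e k ∈ integralGL O F n' := by
  obtain ⟨K, hK, rfl⟩ := hk
  refine ⟨reindex e e K, ?_, ?_⟩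
  · simpa [coe_reindexAlgEquiv] using hK.map (reindexAlgEquiv O O e)
  · simp [reindex_apply, submatrix_map]

theorem permMatrix_mem_integralGL (σ : Equiv.Perm n) :
    σ.permMatrix F ∈ integralGL O F n := by
  refine ⟨σ.permMatrix O, (isUnit_iff_isUnit_det _).mpr ?_, by simp⟩
  rw [det_permutation]
  exact (Equiv.Perm.sign σ).isUnit.map (Int.castRingHom O)

theorem diagonal_units_mem_integralGL (u : n → Oˣ) :
    diagonal (fun i => algebraMap O F (u i)) ∈ integralGL O F n := by
  refine ⟨diagonal fun i => (u i : O), ?_, by simp [diagonal_map]⟩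
  rw [isUnit_iff_isUnit_det, det_diagonal]
  exact IsUnit.prod_univ_iff.mpr fun i => (u i).isUnit

variable {l m : Type*} [Fintype l] [DecidableEq l] [Fintype m] [DecidableEq m]

theorem fromBlocks_zero₂₁_mem_integralGL {A : Matrix l l F} {D : Matrix m m F}
    (hA : A ∈ integralGL O F l) (hD : D ∈ integralGL O F m) (B : Matrix l m O) :
    fromBlocks A (B.map (algebraMap O F)) 0 D ∈ integralGL O F (l ⊕ m) := by
  obtain ⟨A, hA, rfl⟩ := hA
  obtain ⟨D, hD, rfl⟩ := hD
  refine ⟨fromBlocks A B 0 D, ?_, by simp [fromBlocks_map]⟩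
  rw [isUnit_iff_isUnit_det, det_fromBlocks_zero₂₁]
  exact ((isUnit_iff_isUnit_det A).mp hA).mul ((isUnit_iff_isUnit_det D).mp hD)

theorem fromBlocks_zero₁₂_mem_integralGL {A : Matrix l l F} {D : Matrix m m F}
    (hA : A ∈ integralGL O F l) (hD : D ∈ integralGL O F m) (C : Matrix m l O) :
    fromBlocks A 0 (C.map (algebraMap O F)) D ∈ integralGL O F (l ⊕ m) := by
  obtain ⟨A, hA, rfl⟩ := hA
  obtain ⟨D, hD, rfl⟩ := hD
  refine ⟨fromBlocks A 0 C D, ?_, by simp [fromBlocks_map]⟩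
  rw [isUnit_iff_isUnit_det, det_fromBlocks_zero₁₂]
  exact ((isUnit_iff_isUnit_det A).mp hA).mul ((isUnit_iff_isUnit_det D).mp hD)

theorem reindex_fromBlocks_mem_integralGL {n' : Type*} [Fintype n'] [DecidableEq n']
    (e : l ⊕ m ≃ n') {A : Matrix l l F} {D : Matrix m m F} (hA : A ∈ integralGL O F l)
    (hD : D ∈ integralGL O F m) : reindex e e (fromBlocks A 0 0 D) ∈ integralGL O F n' := by
  simpa using reindex_mem_integralGL e (fromBlocks_zero₂₁_mem_integralGL hA hD 0)

end IntegralGL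

section Blocks

variable {R : Type*}

@[simp]
theorem natAdd_zero_eq_last {r : ℕ} : Fin.natAdd r (0 : Fin 1) = Fin.last r :=
  rfl

@[simp]
theorem castAdd_one_eq_castSucc {r : ℕ} (j : Fin r) : Fin.castAdd 1 j = Fin.castSucc j :=
  rfl

theorem blockTriangular_reindex_fromBlocks [Zero R] {r : ℕ} {T : Matrix (Fin r) (Fin r) R}
    (hT : T.BlockTriangular id) (B : Matrix (Fin r) (Fin 1) R) (D : Matrix (Fin 1) (Fin 1) R) :
    (reindex finSumFinEquiv finSumFinEquiv (fromBlocks T B 0 D)).BlockTriangular id := by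
  intro i j hij
  obtain ⟨x, rfl⟩ := finSumFinEquiv.surjective i
  obtain ⟨y, rfl⟩ := finSumFinEquiv.surjective j
  simp only [id, reindex_apply, submatrix_apply, Equiv.symm_apply_apply] at hij ⊢
  rcases x with a | a <;> rcases y with b | b
  · exact hT (by simpa only [id, finSumFinEquiv_apply_left, Fin.lt_def, Fin.val_castAdd] using hij)
  · simp only [finSumFinEquiv_apply_left, finSumFinEquiv_apply_right, Fin.lt_def,
      Fin.val_castAdd, Fin.val_natAdd] at hij
    omega
  · rfl
  · simp [Subsingleton.elim a b] at hij

theorem reindex_fromBlocks_diagonal [Zero R] {r : ℕ} (d : Fin r → R) (x : R) :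
    reindex finSumFinEquiv finSumFinEquiv (fromBlocks (diagonal d) 0 0 (diagonal fun _ => x)) =
      diagonal (Fin.snoc d x) := by
  rw [fromBlocks_diagonal, reindex_apply, submatrix_diagonal_equiv]
  congr 1
  ext i
  induction i using Fin.lastCases <;> simp

variable [Ring R]

theorem reindex_mul_reindex {n n' : Type*} [Fintype n] [Fintype n'] (e : n ≃ n')
    (X Y : Matrix n n R) : reindex e e X * reindex e e Y = reindex e e (X * Y) := by
  simp only [reindex_apply, submatrix_mul_equiv]

theorem permMatrix_mul_submatrix_mul_permMatrix {n : Type*} [Fintype n] [DecidableEq n]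
    (H : Matrix n n R) (σ ρ : Equiv.Perm n) :
    σ⁻¹.permMatrix R * H.submatrix σ ρ * ρ.permMatrix R = H := by
  rw [PEquiv.toMatrix_toPEquiv_mul, PEquiv.mul_toMatrix_toPEquiv]
  ext i j
  simp

variable {l m : Type*} [Fintype l] [Fintype m] [DecidableEq l] [DecidableEq m]

theorem fromBlocks_eq_fromBlocks_zero₂₁_mul (A : Matrix l l R) (B : Matrix l m R)
    (D : Matrix m m R) (E : Matrix m l R) :
    fromBlocks A B (D * E) D = fromBlocks (A - B * E) B 0 D * fromBlocks 1 0 E 1 := by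
  simp [fromBlocks_multiply]

theorem fromBlocks_eq_unipotent_mul_fromBlocks_mul_unipotent (A : Matrix l l R)
    (B : Matrix l m R) (C : Matrix m l R) (D : Matrix m m R) :
    fromBlocks A (B * D) (D * C) D =
      fromBlocks 1 B 0 1 * fromBlocks (A - B * D * C) 0 0 D * fromBlocks 1 0 C 1 := by
  simp [fromBlocks_multiply, Matrix.mul_assoc]

end Blocks

section Mirabolic

variable {F : Type*} [Field F]

theorem mem_Pset_succ_iff {r : ℕ} {p : Matrix (Fin (r + 1)) (Fin (r + 1)) F} :
    p ∈ Pset F (r + 1) ↔ IsUnit p.det ∧ p (Fin.last r) = Pi.single (Fin.last r) 1 := by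
  have hlast : ∀ i : Fin (r + 1), (i : ℕ) = r + 1 - 1 ↔ i = Fin.last r := fun i => by
    simp [Fin.ext_iff]
  simp only [Pset, Set.mem_ofPred_eq, hlast, funext_iff, Pi.single_apply]
  exact and_congr_right fun _ => ⟨fun h j => h _ j rfl, fun h i j hi => hi ▸ h j⟩

theorem one_mem_Pset {r : ℕ} : (1 : Matrix (Fin (r + 1)) (Fin (r + 1)) F) ∈ Pset F (r + 1) :=
  mem_Pset_succ_iff.mpr ⟨by simp, by ext j; simp [one_apply, Pi.single_apply, eq_comm]⟩

theorem mul_mem_Pset {r : ℕ} {p q : Matrix (Fin (r + 1)) (Fin (r + 1)) F}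
    (hp : p ∈ Pset F (r + 1)) (hq : q ∈ Pset F (r + 1)) : p * q ∈ Pset F (r + 1) := by
  rw [mem_Pset_succ_iff] at *
  refine ⟨by rw [det_mul]; exact hp.1.mul hq.1, ?_⟩
  rw [mul_apply_eq_vecMul, hp.2, single_one_vecMul, row, hq.2]

theorem nonsing_inv_mem_Pset {r : ℕ} {p : Matrix (Fin (r + 1)) (Fin (r + 1)) F}
    (hp : p ∈ Pset F (r + 1)) : p⁻¹ ∈ Pset F (r + 1) := by
  rw [mem_Pset_succ_iff] at *
  refine ⟨isUnit_nonsing_inv_det p hp.1, ?_⟩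
  have hrow : p⁻¹ (Fin.last r) = (p * p⁻¹) (Fin.last r) := by
    rw [mul_apply_eq_vecMul, hp.2, single_one_vecMul]
    rfl
  ext j
  rw [hrow, mul_nonsing_inv p hp.1]
  simp [one_apply, Pi.single_apply, eq_comm]

theorem reindex_fromBlocks_mem_Pset {M r : ℕ} {A : Matrix (Fin M) (Fin M) F}
    {D : Matrix (Fin (r + 1)) (Fin (r + 1)) F} (hA : IsUnit A.det) (hD : D ∈ Pset F (r + 1))
    (B : Matrix (Fin M) (Fin (r + 1)) F) :
    reindex finSumFinEquiv finSumFinEquiv (fromBlocks A B 0 D) ∈ Pset F (M + (r + 1)) := by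
  rw [mem_Pset_succ_iff] at hD
  refine (mem_Pset_succ_iff (r := M + r)).mpr ⟨?_, ?_⟩
  · rw [reindex_apply, det_submatrix_equiv_self, det_fromBlocks_zero₂₁]
    exact hA.mul hD.1
  · have hlast : Fin.last (M + r) = finSumFinEquiv (Sum.inr (Fin.last r)) := by simp
    ext j
    obtain ⟨x, rfl⟩ := finSumFinEquiv.surjective j
    simp only [hlast, reindex_apply, submatrix_apply, Equiv.symm_apply_apply, Pi.single_apply,
      finSumFinEquiv.injective.eq_iff]
    rcases x with a | a
    · simp
    · simp [hD.2, Pi.single_apply]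

theorem uMat_eq_reindex_fromBlocks {r : ℕ} (β : Fin r → F) :
    uMat β =
      reindex finSumFinEquiv finSumFinEquiv (fromBlocks 1 (replicateCol (Fin 1) β) 0 1) := by
  ext i j
  induction i using Fin.lastCases <;> induction j using Fin.lastCases <;>
    simp [uMat, reindex_apply, one_apply, Fin.ext_iff, (Fin.is_lt _).ne, (Fin.is_lt _).ne']

end Mirabolic

section IntegralMirabolic

variable {O F : Type*} [CommRing O] [Field F] [Algebra O F]

theorem mem_POset {N : ℕ} {k : Matrix (Fin N) (Fin N) F} (hP : k ∈ Pset F N)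
    (hk : k ∈ integralGL O F (Fin N)) : k ∈ POset O F N := by
  obtain ⟨K, hK, rfl⟩ := hk
  refine ⟨hP, fun i j => ⟨K i j, rfl⟩, ((isUnit_iff_isUnit_det K).mp hK).unit, ?_⟩
  simp [RingHom.map_det]

theorem exists_upperTriangular_mul_of_lastRow_eq_zero {r : ℕ}
    (ih : ∀ A : Matrix (Fin r) (Fin r) F, A.det ≠ 0 →
      ∃ T, ∃ k ∈ integralGL O F (Fin r), T.BlockTriangular id ∧ A = T * k)
    {Z : Matrix (Fin (r + 1)) (Fin (r + 1)) F} (hZ : Z.det ≠ 0)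
    (hlast : ∀ j : Fin r, Z (Fin.last r) j.castSucc = 0) :
    ∃ T, ∃ k ∈ integralGL O F (Fin (r + 1)), T.BlockTriangular id ∧
      T (Fin.last r) = Z (Fin.last r) ∧ k (Fin.last r) = Pi.single (Fin.last r) 1 ∧
      Z = T * k := by
  obtain ⟨X, rfl⟩ := (reindex (finSumFinEquiv : Fin r ⊕ Fin 1 ≃ _) finSumFinEquiv).surjective Z
  rw [← fromBlocks_toBlocks X] at hZ hlast ⊢
  have hX₂₁ : X.toBlocks₂₁ = 0 := by
    ext i j
    rw [Subsingleton.elim i 0]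
    simpa using hlast j
  rw [hX₂₁] at hZ ⊢
  rw [reindex_apply, det_submatrix_equiv_self, det_fromBlocks_zero₂₁] at hZ
  obtain ⟨T, k, hk, hT, hA⟩ := ih _ (left_ne_zero_of_mul hZ)
  refine ⟨reindex finSumFinEquiv finSumFinEquiv (fromBlocks T X.toBlocks₁₂ 0 X.toBlocks₂₂),
    reindex finSumFinEquiv finSumFinEquiv (fromBlocks k 0 0 1), ?_,
    blockTriangular_reindex_fromBlocks hT _ _, ?_, ?_, ?_⟩
  · exact reindex_fromBlocks_mem_integralGL _ hk (one_mem _)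
  · ext j
    induction j using Fin.lastCases <;> simp
  · ext j
    induction j using Fin.lastCases <;> simp [Fin.castSucc_ne_last]
  · rw [reindex_mul_reindex, fromBlocks_multiply, hA]
    simp

end IntegralMirabolic

section DiscreteValuationRing

variable {O F : Type*} [CommRing O] [IsDomain O] [IsDiscreteValuationRing O]
  [Field F] [Algebra O F] [IsFractionRing O F]

theorem exists_pivot {ι : Type*} [Finite ι] (v : ι → F) (hv : v ≠ 0) :
    ∃ i₀, v i₀ ≠ 0 ∧ ∀ i, ∃ o : O, v i = algebraMap O F o * v i₀ := by
  obtain ⟨b, hb⟩ := IsLocalization.exist_integer_multiples_of_finite (nonZeroDivisors O) v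
  choose a ha using hb
  have hai : ∀ i, algebraMap O F (a i) = algebraMap O F b * v i := fun i => by
    rw [ha i, Algebra.smul_def]
  have : Nonempty ι := by
    by_contra h
    exact hv (funext fun i => (h ⟨i⟩).elim)
  -- an entry of least valuation divides all the others
  obtain ⟨i₀, hi₀⟩ := Finite.exists_min fun i => IsDiscreteValuationRing.addVal O (a i)
  have hmul : ∀ i, ∃ o : O, v i = algebraMap O F o * v i₀ := fun i => by
    obtain ⟨o, ho⟩ := IsDiscreteValuationRing.addVal_le_iff_dvd.mp (hi₀ i)
    refine ⟨o, mul_left_cancel₀ (IsFractionRing.to_map_ne_zero_of_mem_nonZeroDivisors b.2) ?_⟩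
    rw [← hai, ho, map_mul, hai]
    ring
  refine ⟨i₀, fun h => hv (funext fun i => ?_), hmul⟩
  obtain ⟨o, ho⟩ := hmul i
  simp [ho, h]

theorem exists_eq_diagonal_zpow_mul_diagonal_unit {ϖ : O} (hϖ : Irreducible ϖ)
    {D : Matrix (Fin 1) (Fin 1) F} (hD : D 0 0 ≠ 0) :
    ∃ (l : ℤ) (u : Oˣ),
      D = diagonal (fun _ => algebraMap O F ϖ ^ l) * diagonal (fun _ => algebraMap O F u) := by
  obtain ⟨l, u, hu⟩ := IsDiscreteValuationRing.exists_units_eq_smul_zpow_of_irreducible hϖ hD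
  refine ⟨l, u, ?_⟩
  ext i j
  simp [Subsingleton.elim i 0, Subsingleton.elim j 0, hu, Units.smul_def, Algebra.smul_def,
    mul_comm]

theorem exists_lastRow_eq_zero_mul_integralGL {r : ℕ} (Y : Matrix (Fin (r + 1)) (Fin (r + 1)) F)
    (hY : Y.det ≠ 0) :
    ∃ Z, ∃ k ∈ integralGL O F (Fin (r + 1)),
      (∀ j : Fin r, Z (Fin.last r) j.castSucc = 0) ∧ Y = Z * k := by
  have hy : Y (Fin.last r) ≠ 0 := fun h =>
    hY (det_eq_zero_of_row_eq_zero (Fin.last r) fun j => congrFun h j)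
  obtain ⟨j₀, -, hj₀⟩ := exists_pivot (O := O) (Y (Fin.last r)) hy
  choose o ho using hj₀
  obtain ⟨ρ, hρ⟩ : ∃ ρ : Equiv.Perm (Fin (r + 1)), ρ (Fin.last r) = j₀ :=
    ⟨Equiv.swap j₀ (Fin.last r), Equiv.swap_apply_right _ _⟩
  obtain ⟨X, hX⟩ := (reindex (finSumFinEquiv : Fin r ⊕ Fin 1 ≃ _) finSumFinEquiv).surjective
    (Y.submatrix (1 : Equiv.Perm (Fin (r + 1))) ρ)
  have hXe : ∀ x y, X x y = Y (finSumFinEquiv x) (ρ (finSumFinEquiv y)) := fun x y => by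
    simpa [reindex_apply] using congrFun₂ hX (finSumFinEquiv x) (finSumFinEquiv y)
  let E : Matrix (Fin 1) (Fin r) O := of fun _ j => o (ρ j.castSucc)
  have hX₂₁ : X.toBlocks₂₁ = X.toBlocks₂₂ * E.map (algebraMap O F) := by
    ext i j
    rw [Subsingleton.elim i 0, mul_apply, Fin.sum_univ_one]
    simp [toBlocks₂₁, toBlocks₂₂, E, hXe, hρ, ho (ρ j.castSucc), mul_comm]
  refine ⟨reindex finSumFinEquiv finSumFinEquiv
      (fromBlocks (X.toBlocks₁₁ - X.toBlocks₁₂ * E.map (algebraMap O F)) X.toBlocks₁₂ 0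
        X.toBlocks₂₂),
    reindex finSumFinEquiv finSumFinEquiv (fromBlocks 1 0 (E.map (algebraMap O F)) 1) *
      ρ.permMatrix F, ?_, fun j => by simp, ?_⟩
  · exact mul_mem (reindex_mem_integralGL _ (fromBlocks_zero₁₂_mem_integralGL (one_mem _)
      (one_mem _) E)) (permMatrix_mem_integralGL ρ)
  · have hXf : X = fromBlocks (X.toBlocks₁₁ - X.toBlocks₁₂ * E.map (algebraMap O F))
        X.toBlocks₁₂ 0 X.toBlocks₂₂ * fromBlocks 1 0 (E.map (algebraMap O F)) 1 := by
      rw [← fromBlocks_eq_fromBlocks_zero₂₁_mul, ← hX₂₁, fromBlocks_toBlocks]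
    conv_lhs => rw [← permMatrix_mul_submatrix_mul_permMatrix Y 1 ρ, ← hX, hXf]
    rw [← reindex_mul_reindex, inv_one, permMatrix_one, Matrix.one_mul, Matrix.mul_assoc]

theorem exists_upperTriangular_mul_integralGL (r : ℕ) (Y : Matrix (Fin r) (Fin r) F)
    (hY : Y.det ≠ 0) :
    ∃ T, ∃ k ∈ integralGL O F (Fin r), T.BlockTriangular id ∧ Y = T * k := by
  induction r with
  | zero => exact ⟨Y, 1, one_mem _, fun i => i.elim0, (mul_one Y).symm⟩
  | succ r ih =>
    obtain ⟨Z, k₁, hk₁, hlast, rfl⟩ := exists_lastRow_eq_zero_mul_integralGL (O := O) Y hY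
    obtain ⟨T, k₂, hk₂, hT, -, -, rfl⟩ := exists_upperTriangular_mul_of_lastRow_eq_zero ih
      (left_ne_zero_of_mul (by rwa [← det_mul])) hlast
    exact ⟨T, k₂ * k₁, mul_mem hk₂ hk₁, hT, mul_assoc _ _ _⟩

theorem exists_upperTriangular_mul_of_mem_Pset {r : ℕ}
    (p : Matrix (Fin (r + 1)) (Fin (r + 1)) F) (hp : p ∈ Pset F (r + 1)) :
    ∃ T, ∃ k ∈ integralGL O F (Fin (r + 1)), T.BlockTriangular id ∧ T ∈ Pset F (r + 1) ∧
      k ∈ Pset F (r + 1) ∧ p = T * k := by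
  rw [mem_Pset_succ_iff] at hp
  obtain ⟨T, k, hk, hT, hTlast, hklast, rfl⟩ := exists_upperTriangular_mul_of_lastRow_eq_zero
    (exists_upperTriangular_mul_integralGL (O := O) r) hp.1.ne_zero
    (fun j => by simp [hp.2, Fin.castSucc_ne_last])
  rw [det_mul] at hp
  exact ⟨T, k, hk, hT, mem_Pset_succ_iff.mpr ⟨isUnit_of_mul_isUnit_left hp.1, hTlast.trans hp.2⟩,
    mem_Pset_succ_iff.mpr ⟨isUnit_det_of_mem_integralGL hk, hklast⟩, rfl⟩

theorem exists_integralGL_mul_diagonal_mul_integralGL_of_corner {ϖ : O} (hϖ : Irreducible ϖ)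
    {r : ℕ}
    (ih : ∀ S : Matrix (Fin r) (Fin r) F, S.det ≠ 0 →
      ∃ c₁ ∈ integralGL O F (Fin r), ∃ c₂ ∈ integralGL O F (Fin r), ∃ f : Fin r → ℤ,
        S = c₁ * diagonal (fun i => algebraMap O F ϖ ^ f i) * c₂)
    {X : Matrix (Fin r ⊕ Fin 1) (Fin r ⊕ Fin 1) F} (hX : X.det ≠ 0)
    (B : Matrix (Fin r) (Fin 1) O) (C : Matrix (Fin 1) (Fin r) O)
    (hX₁₂ : X.toBlocks₁₂ = B.map (algebraMap O F) * X.toBlocks₂₂)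
    (hX₂₁ : X.toBlocks₂₁ = X.toBlocks₂₂ * C.map (algebraMap O F)) :
    ∃ c₁ ∈ integralGL O F (Fin (r + 1)), ∃ c₂ ∈ integralGL O F (Fin (r + 1)),
      ∃ f : Fin (r + 1) → ℤ,
        reindex finSumFinEquiv finSumFinEquiv X =
          c₁ * diagonal (fun i => algebraMap O F ϖ ^ f i) * c₂ := by
  set S := X.toBlocks₁₁ - B.map (algebraMap O F) * X.toBlocks₂₂ * C.map (algebraMap O F)
  have hXS : X = fromBlocks 1 (B.map (algebraMap O F)) 0 1 * fromBlocks S 0 0 X.toBlocks₂₂ *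
      fromBlocks 1 0 (C.map (algebraMap O F)) 1 := by
    rw [← fromBlocks_eq_unipotent_mul_fromBlocks_mul_unipotent, ← hX₁₂, ← hX₂₁,
      fromBlocks_toBlocks]
  have hdet : X.det = S.det * X.toBlocks₂₂ 0 0 := by
    conv_lhs => rw [hXS]
    simp [det_fromBlocks_zero₂₁]
  rw [hdet] at hX
  obtain ⟨c₁, hc₁, c₂, hc₂, f, hS⟩ := ih S (left_ne_zero_of_mul hX)
  obtain ⟨l, u, hD⟩ := exists_eq_diagonal_zpow_mul_diagonal_unit hϖ (right_ne_zero_of_mul hX)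
  have hSD : fromBlocks S 0 0 X.toBlocks₂₂ =
      fromBlocks c₁ 0 0 1 * fromBlocks (diagonal fun i => algebraMap O F ϖ ^ f i) 0 0
        (diagonal fun _ => algebraMap O F ϖ ^ l) *
          fromBlocks c₂ 0 0 (diagonal fun _ => algebraMap O F u) := by
    rw [fromBlocks_multiply, fromBlocks_multiply]
    simp only [Matrix.mul_zero, Matrix.zero_mul, add_zero, zero_add, Matrix.one_mul, hS, hD]
  refine ⟨reindex finSumFinEquiv finSumFinEquiv (fromBlocks 1 (B.map (algebraMap O F)) 0 1) *
      reindex finSumFinEquiv finSumFinEquiv (fromBlocks c₁ 0 0 1),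
    mul_mem (reindex_mem_integralGL _ (fromBlocks_zero₂₁_mem_integralGL (one_mem _) (one_mem _) B))
      (reindex_fromBlocks_mem_integralGL _ hc₁ (one_mem _)),
    reindex finSumFinEquiv finSumFinEquiv
        (fromBlocks c₂ 0 0 (diagonal fun _ => algebraMap O F u)) *
      reindex finSumFinEquiv finSumFinEquiv (fromBlocks 1 0 (C.map (algebraMap O F)) 1),
    mul_mem (reindex_fromBlocks_mem_integralGL _ hc₂ (diagonal_units_mem_integralGL fun _ => u))
      (reindex_mem_integralGL _ (fromBlocks_zero₁₂_mem_integralGL (one_mem _) (one_mem _) C)),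
    Fin.snoc f l, ?_⟩
  have hdiag : diagonal (fun i => algebraMap O F ϖ ^ (Fin.snoc f l : Fin (r + 1) → ℤ) i) =
      reindex finSumFinEquiv finSumFinEquiv
        (fromBlocks (diagonal fun i => algebraMap O F ϖ ^ f i) 0 0
          (diagonal fun _ => algebraMap O F ϖ ^ l)) := by
    rw [reindex_fromBlocks_diagonal]
    congr 1
    ext i
    induction i using Fin.lastCases <;> simp
  rw [hdiag, reindex_mul_reindex, reindex_mul_reindex, reindex_mul_reindex, reindex_mul_reindex,
    hXS, hSD]
  simp only [Matrix.mul_assoc]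

theorem exists_integralGL_mul_diagonal_mul_integralGL {ϖ : O} (hϖ : Irreducible ϖ) (r : ℕ)
    (H : Matrix (Fin r) (Fin r) F) (hH : H.det ≠ 0) :
    ∃ c₁ ∈ integralGL O F (Fin r), ∃ c₂ ∈ integralGL O F (Fin r), ∃ f : Fin r → ℤ,
      H = c₁ * diagonal (fun i => algebraMap O F ϖ ^ f i) * c₂ := by
  induction r with
  | zero => exact ⟨1, one_mem _, 1, one_mem _, fun i => i.elim0, Subsingleton.elim _ _⟩
  | succ r ih =>
    have hH₀ : (fun q : Fin (r + 1) × Fin (r + 1) => H q.1 q.2) ≠ 0 := fun h => hH <| by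
      rw [show H = 0 from funext₂ fun i j => congrFun h (i, j)]
      simp
    obtain ⟨⟨i₀, j₀⟩, -, hpiv⟩ := exists_pivot (O := O) _ hH₀
    choose o ho using hpiv
    obtain ⟨σ, hσ⟩ : ∃ σ : Equiv.Perm (Fin (r + 1)), σ (Fin.last r) = i₀ :=
      ⟨Equiv.swap i₀ (Fin.last r), Equiv.swap_apply_right _ _⟩
    obtain ⟨ρ, hρ⟩ : ∃ ρ : Equiv.Perm (Fin (r + 1)), ρ (Fin.last r) = j₀ :=
      ⟨Equiv.swap j₀ (Fin.last r), Equiv.swap_apply_right _ _⟩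
    obtain ⟨X, hX⟩ := (reindex (finSumFinEquiv : Fin r ⊕ Fin 1 ≃ _) finSumFinEquiv).surjective
      (H.submatrix σ ρ)
    have hXe : ∀ x y, X x y = H (σ (finSumFinEquiv x)) (ρ (finSumFinEquiv y)) := fun x y => by
      simpa [reindex_apply] using congrFun₂ hX (finSumFinEquiv x) (finSumFinEquiv y)
    have hX₀ : X.det ≠ 0 := fun h => hH <| by
      rw [← permMatrix_mul_submatrix_mul_permMatrix H σ ρ, ← hX, det_mul, det_mul, reindex_apply,
        det_submatrix_equiv_self, h, mul_zero, zero_mul]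
    obtain ⟨c₁, hc₁, c₂, hc₂, f, hXc⟩ :=
      exists_integralGL_mul_diagonal_mul_integralGL_of_corner hϖ ih hX₀
      (of fun i _ => o (σ i.castSucc, ρ (Fin.last r)))
      (of fun _ j => o (σ (Fin.last r), ρ j.castSucc))
      (by
        ext i j
        rw [Subsingleton.elim j 0, mul_apply, Fin.sum_univ_one]
        simpa [toBlocks₁₂, toBlocks₂₂, hXe, hσ, hρ] using ho (σ i.castSucc, j₀))
      (by
        ext i j
        rw [Subsingleton.elim i 0, mul_apply, Fin.sum_univ_one]
        simpa [toBlocks₂₁, toBlocks₂₂, hXe, hσ, hρ, mul_comm] using ho (i₀, ρ j.castSucc))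
    refine ⟨σ⁻¹.permMatrix F * c₁, mul_mem (permMatrix_mem_integralGL _) hc₁,
      c₂ * ρ.permMatrix F, mul_mem hc₂ (permMatrix_mem_integralGL _), f, ?_⟩
    rw [← permMatrix_mul_submatrix_mul_permMatrix H σ ρ, ← hX, hXc]
    simp only [Matrix.mul_assoc]

theorem exists_mirabolic_mul_uMat_mul_integralGL {ϖ : O} (hϖ : Irreducible ϖ) {r : ℕ}
    (h : Matrix (Fin (r + 1)) (Fin (r + 1)) F) (hh : h.det ≠ 0)
    (hlast : ∀ j : Fin r, h (Fin.last r) j.castSucc = 0) :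
    ∃ a ∈ integralGL O F (Fin (r + 1)), a ∈ Pset F (r + 1) ∧
      ∃ c ∈ integralGL O F (Fin (r + 1)), ∃ (β : Fin r → F) (f : Fin r → ℤ) (l : ℤ),
        h = a * (uMat β * diagonal (Fin.snoc (fun i => algebraMap O F ϖ ^ f i)
          (algebraMap O F ϖ ^ l))) * c := by
  obtain ⟨X, rfl⟩ := (reindex (finSumFinEquiv : Fin r ⊕ Fin 1 ≃ _) finSumFinEquiv).surjective h
  have hX₂₁ : X.toBlocks₂₁ = 0 := by
    ext i j
    rw [Subsingleton.elim i 0]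
    simpa [toBlocks₂₁] using hlast j
  have hdet : X.det = X.toBlocks₁₁.det * X.toBlocks₂₂ 0 0 := by
    conv_lhs => rw [← fromBlocks_toBlocks X, hX₂₁]
    rw [det_fromBlocks_zero₂₁, det_fin_one]
  rw [reindex_apply, det_submatrix_equiv_self, hdet] at hh
  obtain ⟨c₁, hc₁, c₂, hc₂, f, hA⟩ :=
    exists_integralGL_mul_diagonal_mul_integralGL hϖ r _ (left_ne_zero_of_mul hh)
  obtain ⟨l, u, hD⟩ := exists_eq_diagonal_zpow_mul_diagonal_unit hϖ (right_ne_zero_of_mul hh)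
  set β : Fin r → F := fun i => (c₁⁻¹ * X.toBlocks₁₂) i 0 / X.toBlocks₂₂ 0 0
  have hβ : replicateCol (Fin 1) β * X.toBlocks₂₂ = c₁⁻¹ * X.toBlocks₁₂ := by
    ext i j
    rw [Subsingleton.elim j 0, mul_apply, Fin.sum_univ_one]
    exact div_mul_cancel₀ _ (right_ne_zero_of_mul hh)
  refine ⟨reindex finSumFinEquiv finSumFinEquiv (fromBlocks c₁ 0 0 1), ?_, ?_,
    reindex finSumFinEquiv finSumFinEquiv
      (fromBlocks c₂ 0 0 (diagonal fun _ => algebraMap O F u)), ?_, β, f, l, ?_⟩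
  · exact reindex_fromBlocks_mem_integralGL _ hc₁ (one_mem _)
  · exact reindex_fromBlocks_mem_Pset (isUnit_det_of_mem_integralGL hc₁) one_mem_Pset 0
  · exact reindex_fromBlocks_mem_integralGL _ hc₂ (diagonal_units_mem_integralGL fun _ => u)
  · rw [uMat_eq_reindex_fromBlocks, ← reindex_fromBlocks_diagonal]
    simp only [reindex_mul_reindex]
    congr 1
    conv_lhs => rw [← fromBlocks_toBlocks X, hX₂₁]
    simp only [fromBlocks_multiply, Matrix.mul_zero, Matrix.zero_mul, add_zero, zero_add,
      Matrix.one_mul]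
    have hB : c₁ * (replicateCol (Fin 1) β * diagonal fun _ : Fin 1 => algebraMap O F ϖ ^ l) *
        diagonal (fun _ : Fin 1 => algebraMap O F u) = X.toBlocks₁₂ := by
      rw [Matrix.mul_assoc, Matrix.mul_assoc, ← hD, hβ, ← Matrix.mul_assoc,
        mul_nonsing_inv _ (isUnit_det_of_mem_integralGL hc₁), Matrix.one_mul]
    rw [hA, hB, ← hD]

end DiscreteValuationRing

section Shalika

variable {F : Type*} [Field F]

theorem exists_shalikaMat_mul_diagEmbed {M : ℕ}
    {T : Matrix (Fin ((M + 1) + (M + 1))) (Fin ((M + 1) + (M + 1))) F}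
    (hT : T.BlockTriangular id) (hTP : T ∈ Pset F ((M + 1) + (M + 1))) :
    ∃ a b h, a ∈ Pset F (M + 1) ∧ h.det ≠ 0 ∧ (∀ j : Fin M, h (Fin.last M) j.castSucc = 0) ∧
      T = shalikaMat a b * diagEmbed h := by
  obtain ⟨X, rfl⟩ :=
    (reindex (finSumFinEquiv : Fin (M + 1) ⊕ Fin (M + 1) ≃ _) finSumFinEquiv).surjective T
  have hX₂₁ : X.toBlocks₂₁ = 0 := by
    ext i j
    rw [toBlocks₂₁, of_apply, Matrix.zero_apply]
    simpa only [reindex_apply, submatrix_apply, Equiv.symm_apply_apply] using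
      hT (i := finSumFinEquiv (Sum.inr i)) (j := finSumFinEquiv (Sum.inl j))
        (by simp [Fin.lt_def]; omega)
  rw [← fromBlocks_toBlocks X, hX₂₁] at hT hTP ⊢
  obtain ⟨hdet, hrow⟩ := (mem_Pset_succ_iff (r := M + 1 + M)).mp hTP
  rw [reindex_apply, det_submatrix_equiv_self, det_fromBlocks_zero₂₁] at hdet
  have hlast : Fin.last (M + 1 + M) = finSumFinEquiv (Sum.inr (Fin.last M)) := by simp
  have haP : X.toBlocks₂₂ ∈ Pset F (M + 1) := by
    refine mem_Pset_succ_iff.mpr ⟨isUnit_of_mul_isUnit_right hdet, funext fun j => ?_⟩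
    have := congrFun hrow (finSumFinEquiv (Sum.inr j))
    rw [hlast] at this
    simpa only [reindex_apply, submatrix_apply, Equiv.symm_apply_apply, fromBlocks_apply₂₂,
      Pi.single_apply, finSumFinEquiv.injective.eq_iff, Sum.inr.injEq] using this
  have ha := mem_Pset_succ_iff.mp haP
  refine ⟨X.toBlocks₂₂, X.toBlocks₁₂, X.toBlocks₂₂⁻¹ * X.toBlocks₁₁, haP, ?_, fun j => ?_, ?_⟩
  · rw [det_mul]
    exact mul_ne_zero (isUnit_nonsing_inv_det _ ha.1).ne_zero
      (isUnit_of_mul_isUnit_left hdet).ne_zero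
  · rw [mul_apply_eq_vecMul, (mem_Pset_succ_iff.mp (nonsing_inv_mem_Pset haP)).2,
      single_one_vecMul]
    simpa [reindex_apply] using hT (i := finSumFinEquiv (Sum.inl (Fin.last M)))
      (j := finSumFinEquiv (Sum.inl j.castSucc)) (by simp [Fin.lt_def])
  · rw [shalikaMat, diagEmbed, reindex_mul_reindex, fromBlocks_multiply,
      mul_nonsing_inv_cancel_left _ _ ha.1]
    simp

theorem shalikaMat_mul_diagEmbed_mul {M : ℕ} (a b a₂ g c : Matrix (Fin M) (Fin M) F)
    (ha₂ : IsUnit a₂.det) :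
    shalikaMat a b * diagEmbed (a₂ * g * c) =
      shalikaMat (a * a₂) (b * a₂) * diagEmbed g *
        reindex finSumFinEquiv finSumFinEquiv (fromBlocks c 0 0 a₂⁻¹) := by
  simp only [shalikaMat, diagEmbed, reindex_mul_reindex, fromBlocks_multiply, Matrix.mul_zero,
    Matrix.zero_mul, add_zero, zero_add, Matrix.mul_one, Matrix.mul_assoc,
    mul_nonsing_inv _ ha₂]

theorem shalikaMat_mem_Sset_inter_Pset {O : Type*} [CommRing O] [Algebra O F] {M : ℕ}
    {a : Matrix (Fin (M + 1)) (Fin (M + 1)) F} (ha : a ∈ Pset F (M + 1))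
    (b : Matrix (Fin (M + 1)) (Fin (M + 1)) F) :
    shalikaMat a b ∈ Sset O F (M + 1) ∩ Pset F ((M + 1) + (M + 1)) :=
  ⟨⟨a, b, (mem_Pset_succ_iff.mp ha).1, rfl⟩,
    reindex_fromBlocks_mem_Pset (mem_Pset_succ_iff.mp ha).1 ha b⟩

end Shalika

variable {O F : Type*} [CommRing O] [IsDomain O] [IsDiscreteValuationRing O]
  [Field F] [Algebra O F] [IsFractionRing O F]

theorem stmt6_general (ϖ : O) (hϖ : Irreducible ϖ) (m : ℕ)
    (p : Matrix (Fin ((m + 1) + (m + 1))) (Fin ((m + 1) + (m + 1))) F)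
    (hp : p ∈ Pset F ((m + 1) + (m + 1))) :
    ∃ s ∈ Sset O F (m + 1) ∩ Pset F ((m + 1) + (m + 1)),
      ∃ k ∈ POset O F ((m + 1) + (m + 1)),
        ∃ (β : Fin m → F) (f : Fin m → ℤ) (l : ℤ),
          p = s * diagEmbed (uMat β *
            diagonal (Fin.snoc (fun i => (algebraMap O F ϖ) ^ f i)
              ((algebraMap O F ϖ) ^ l))) * k := by
  obtain ⟨T, k, hk, hT, hTP, hkP, rfl⟩ :=
    exists_upperTriangular_mul_of_mem_Pset (O := O) (r := m + 1 + m) p hp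
  obtain ⟨a, b, h, haP, hh, hlast, rfl⟩ := exists_shalikaMat_mul_diagEmbed hT hTP
  obtain ⟨a₂, ha₂, ha₂P, c, hc, β, f, l, rfl⟩ :=
    exists_mirabolic_mul_uMat_mul_integralGL hϖ h hh hlast
  have hcP := reindex_fromBlocks_mem_Pset (isUnit_det_of_mem_integralGL hc)
    (nonsing_inv_mem_Pset ha₂P) 0
  have hcO := reindex_fromBlocks_mem_integralGL finSumFinEquiv hc (nonsing_inv_mem_integralGL ha₂)
  refine ⟨_, shalikaMat_mem_Sset_inter_Pset (mul_mem_Pset haP ha₂P) (b * a₂), _,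
    mem_POset (mul_mem_Pset (r := m + 1 + m) hcP hkP) (mul_mem hcO hk), β, f, l, ?_⟩
  rw [shalikaMat_mul_diagEmbed_mul _ _ _ _ _ (isUnit_det_of_mem_integralGL ha₂), Matrix.mul_assoc]

/-- Every `(S°_{n+2}, P_{n+2}(O))`-double coset in `P_{n+2}` (where `n = 2m`) contains a matrix
`diag([[1_m, βᵀ],[0,1]]·diag(ϖ^{f_1},…,ϖ^{f_m},ϖ^l), 1_{m+1})`. -/
theorem stmt6 (ϖ : O) (hϖ : Irreducible ϖ) (m : ℕ) (hm : 0 < m)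
    (p : Matrix (Fin ((m + 1) + (m + 1))) (Fin ((m + 1) + (m + 1))) F)
    (hp : p ∈ Pset F ((m + 1) + (m + 1))) :
    ∃ s ∈ Sset O F (m + 1) ∩ Pset F ((m + 1) + (m + 1)),
      ∃ k ∈ POset O F ((m + 1) + (m + 1)),
        ∃ (β : Fin m → F) (f : Fin m → ℤ) (l : ℤ),
          p = s * diagEmbed (uMat β *
            diagonal (Fin.snoc (fun i => (algebraMap O F ϖ) ^ f i)
              ((algebraMap O F ϖ) ^ l))) * k :=
  stmt6_general ϖ hϖ m p hp

end ShalikaStmt6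
end

section
/- Let n = 2m be an even positive integer, χ : F^× → ℂ^× a group homomorphism, and ψ : F → ℂ^× an additive character with ψ(O) = {1} and ψ(𝔭^{-1}) ≠ {1}. Suppose J : P_n → ℂ satisfies J(s·p) = χ_ψ(s)·J(p) for all s ∈ S°_n and p ∈ P_n, and J(p·k) = J(p) for all k ∈ P_n(O). Then for every nonzero f ∈ ℤ^m with f_1 + … + f_m = 0 and every β ∈ F^{m−1}, J(diag(u_β·diag(ϖ^{f_1},…,ϖ^{f_m}), 1_m)) = 0, where u_β = [[1_{m−1}, βᵀ],[0,1]] ∈ GL_m(F). -/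
/-!
Pick `j` with `f j < 0` (possible as `f ≠ 0` has sum zero) and `x ∈ 𝔭⁻¹` with `ψ x ≠ 1`. The matrix
`b` with the single entry `c = ϖ^{-f_j} x ∈ O` at `(j, j)` makes `k = [[1, b], [0, 1]]` an element of
`P_n(O)`, and for `g = u_β ϖ^f` one has `diag(g, 1) k = [[1, g b], [0, 1]] diag(g, 1)`. Right
`P_n(O)`-invariance and left `S°_n`-equivariance then give `J(diag(g, 1)) = ψ(tr(g b)) J(diag(g, 1))`,
and `tr(g b) = g_jj c = x` because `u_β` is unipotent upper triangular.
-/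

open Matrix

namespace ShalikaStmt9

variable {O F : Type*} [CommRing O] [IsDomain O] [IsDiscreteValuationRing O]
  [Field F] [Algebra O F] [IsFractionRing O F]

/-- `x ∈ F` lies in (the image of) `O`. -/
def IsInt (O : Type*) {F : Type*} [CommRing O] [Field F] [Algebra O F] (x : F) : Prop :=
  ∃ a : O, algebraMap O F a = x

/-- The mirabolic subgroup `P_N ⊂ GL_N(F)`: invertible matrices with last row `(0,…,0,1)`. -/
def Pset (F : Type*) [Field F] (N : ℕ) : Set (Matrix (Fin N) (Fin N) F) :=
  {p | IsUnit p.det ∧ ∀ i j : Fin N, (i : ℕ) = N - 1 →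
    p i j = if (j : ℕ) = N - 1 then 1 else 0}

/-- `P_N(O) = P_N ∩ GL_N(O)`. -/
def POset (O : Type*) (F : Type*) [CommRing O] [Field F] [Algebra O F] (N : ℕ) :
    Set (Matrix (Fin N) (Fin N) F) :=
  {p | p ∈ Pset F N ∧ (∀ i j, IsInt O (p i j)) ∧ ∃ u : Oˣ, algebraMap O F (u : O) = p.det}

/-- The block matrix `[[a,b],[0,a]]` of size `(M+M) × (M+M)`. -/
def shalikaMat {F : Type*} [Field F] {M : ℕ} (a b : Matrix (Fin M) (Fin M) F) :
    Matrix (Fin (M + M)) (Fin (M + M)) F :=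
  Matrix.reindex finSumFinEquiv finSumFinEquiv (Matrix.fromBlocks a b 0 a)

/-- The embedding `g ↦ diag(g, 1_M)`. -/
def diagEmbed {F : Type*} [Field F] {M : ℕ} (g : Matrix (Fin M) (Fin M) F) :
    Matrix (Fin (M + M)) (Fin (M + M)) F :=
  Matrix.reindex finSumFinEquiv finSumFinEquiv (Matrix.fromBlocks g 0 0 1)

/-- The upper unipotent matrix `u_β = [[1_r, βᵀ],[0,1]]`. -/
def uMat {F : Type*} [Field F] {r : ℕ} (β : Fin r → F) :
    Matrix (Fin (r + 1)) (Fin (r + 1)) F :=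
  Matrix.of fun i j =>
    if i = j then 1
    else if (j : ℕ) = r then (if h : (i : ℕ) < r then β ⟨i, h⟩ else 0) else 0

/-- The diagonal matrix `ϖ^f`. -/
noncomputable def Dpow {F : Type*} [Field F] {r : ℕ} (ϖF : F) (f : Fin r → ℤ) :
    Matrix (Fin r) (Fin r) F :=
  diagonal fun i => ϖF ^ f i

lemma reindex_fromBlocks_mem_Pset {M : ℕ} {A B : Matrix (Fin M) (Fin M) F} (hA : IsUnit A.det) :
    reindex finSumFinEquiv finSumFinEquiv (fromBlocks A B 0 1) ∈ Pset F (M + M) := by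
  refine ⟨by simpa [det_fromBlocks_zero₂₁] using hA, fun i j hi => ?_⟩
  obtain ⟨i, rfl⟩ := finSumFinEquiv.surjective i
  obtain ⟨j, rfl⟩ := finSumFinEquiv.surjective j
  rw [reindex_apply, submatrix_apply, Equiv.symm_apply_apply, Equiv.symm_apply_apply]
  rcases i with k | k
  · simp only [finSumFinEquiv_apply_left, Fin.val_castAdd] at hi
    omega
  · simp only [finSumFinEquiv_apply_right, Fin.val_natAdd] at hi
    split_ifs with hj <;> rcases j with l | l <;>
      simp only [finSumFinEquiv_apply_left, finSumFinEquiv_apply_right, Fin.val_castAdd,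
        Fin.val_natAdd] at hj
    all_goals try omega
    · obtain rfl : k = l := Fin.ext (by omega)
      exact one_apply_eq k
    · exact rfl
    · exact one_apply_ne (by rw [Ne, Fin.ext_iff]; omega)

lemma shalikaMat_one_mem_Pset {M : ℕ} (b : Matrix (Fin M) (Fin M) F) :
    shalikaMat 1 b ∈ Pset F (M + M) :=
  reindex_fromBlocks_mem_Pset (by simp)

lemma diagEmbed_mem_Pset {M : ℕ} {g : Matrix (Fin M) (Fin M) F} (hg : IsUnit g.det) :
    diagEmbed g ∈ Pset F (M + M) :=
  reindex_fromBlocks_mem_Pset hg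

lemma diagEmbed_mul_shalikaMat_one {M : ℕ} (g b : Matrix (Fin M) (Fin M) F) :
    diagEmbed g * shalikaMat 1 b = shalikaMat 1 (g * b) * diagEmbed g := by
  simp only [diagEmbed, shalikaMat, reindex_apply, submatrix_mul_equiv, fromBlocks_multiply]
  simp

lemma trace_mul_diagonal_single {n R : Type*} [Fintype n] [DecidableEq n] [CommSemiring R]
    (A : Matrix n n R) (j : n) (c : R) : trace (A * diagonal (Pi.single j c)) = A j j * c := by
  simp [trace, mul_diagonal, Pi.single_apply]

lemma apply_shalikaMat_one_mul {M : ℕ} (χ : Fˣ →* ℂˣ) (ψ : AddChar F ℂ)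
    (J : Matrix (Fin (M + M)) (Fin (M + M)) F → ℂ)
    (hJS : ∀ (a b : Matrix (Fin M) (Fin M) F) (ha : IsUnit a.det)
      (p : Matrix (Fin (M + M)) (Fin (M + M)) F),
      shalikaMat a b ∈ Pset F (M + M) → p ∈ Pset F (M + M) →
      J (shalikaMat a b * p) = (χ ha.unit : ℂ) * ψ (Matrix.trace (a⁻¹ * b)) * J p)
    (b : Matrix (Fin M) (Fin M) F) {p : Matrix (Fin (M + M)) (Fin (M + M)) F}
    (hp : p ∈ Pset F (M + M)) : J (shalikaMat 1 b * p) = ψ (trace b) * J p := by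
  have hdet : IsUnit (1 : Matrix (Fin M) (Fin M) F).det := by simp
  have hunit : hdet.unit = 1 := Units.ext (by simp)
  simpa [hunit] using hJS 1 b hdet p (shalikaMat_one_mem_Pset b) hp

section Integral

variable {R K : Type*} [CommRing R] [Field K] [Algebra R K]

lemma isInt_one_apply {n : Type*} [DecidableEq n] (i j : n) :
    IsInt R ((1 : Matrix n n K) i j) := by
  rw [one_apply]
  split_ifs
  exacts [⟨1, map_one _⟩, ⟨0, map_zero _⟩]

lemma isInt_diagonal_single_apply {n : Type*} [DecidableEq n] {c : K} (hc : IsInt R c)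
    (j : n) (i k : n) : IsInt R (diagonal (Pi.single j c) i k) := by
  rw [diagonal_apply, Pi.single_apply]
  split_ifs
  exacts [hc, ⟨0, map_zero _⟩, ⟨0, map_zero _⟩]

lemma shalikaMat_one_mem_POset {M : ℕ} {b : Matrix (Fin M) (Fin M) K}
    (hb : ∀ i j, IsInt R (b i j)) : shalikaMat 1 b ∈ POset R K (M + M) := by
  refine ⟨shalikaMat_one_mem_Pset b, fun i j => ?_, 1, by simp [shalikaMat]⟩
  obtain ⟨i, rfl⟩ := finSumFinEquiv.surjective i
  obtain ⟨j, rfl⟩ := finSumFinEquiv.surjective j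
  rw [shalikaMat, reindex_apply, submatrix_apply, Equiv.symm_apply_apply, Equiv.symm_apply_apply]
  rcases i with i | i <;> rcases j with j | j
  exacts [isInt_one_apply i j, hb i j, ⟨0, map_zero _⟩, isInt_one_apply i j]

lemma exists_isInt_zpow_mul_eq {ϖ : R} (hϖ : algebraMap R K ϖ ≠ 0) {x : K}
    (hx : IsInt R (x * algebraMap R K ϖ)) {e : ℤ} (he : e < 0) :
    ∃ c : K, IsInt R c ∧ algebraMap R K ϖ ^ e * c = x := by
  obtain ⟨n, rfl⟩ : ∃ n : ℕ, e = -(n + 1 : ℕ) := ⟨(-e - 1).toNat, by omega⟩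
  obtain ⟨a, ha⟩ := hx
  refine ⟨algebraMap R K (a * ϖ ^ n), ⟨_, rfl⟩, ?_⟩
  rw [map_mul, map_pow, ha, _root_.zpow_neg, zpow_natCast]
  field_simp
  ring

theorem diagEmbed_eq_zero_of_trace {M : ℕ} (ψ : AddChar K ℂ)
    (J : Matrix (Fin (M + M)) (Fin (M + M)) K → ℂ)
    (hJS : ∀ b {p}, p ∈ Pset K (M + M) → J (shalikaMat 1 b * p) = ψ (trace b) * J p)
    (hJK : ∀ p k, p ∈ Pset K (M + M) → k ∈ POset R K (M + M) → J (p * k) = J p)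
    {g b : Matrix (Fin M) (Fin M) K} (hg : IsUnit g.det) (hb : ∀ i j, IsInt R (b i j))
    (hψ : ψ (trace (g * b)) ≠ 1) : J (diagEmbed g) = 0 := by
  have hfix : J (diagEmbed g) = ψ (trace (g * b)) * J (diagEmbed g) :=
    calc J (diagEmbed g)
        = J (diagEmbed g * shalikaMat 1 b) :=
          (hJK _ _ (diagEmbed_mem_Pset hg) (shalikaMat_one_mem_POset hb)).symm
      _ = J (shalikaMat 1 (g * b) * diagEmbed g) := by rw [diagEmbed_mul_shalikaMat_one]
      _ = ψ (trace (g * b)) * J (diagEmbed g) := hJS _ (diagEmbed_mem_Pset hg)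
  have : (ψ (trace (g * b)) - 1) * J (diagEmbed g) = 0 := by
    rw [sub_mul, ← hfix, one_mul, sub_self]
  exact (mul_eq_zero.mp this).resolve_left (sub_ne_zero.mpr hψ)

end Integral

lemma uMat_apply_self {r : ℕ} (β : Fin r → F) (i : Fin (r + 1)) : uMat β i i = 1 := by
  simp [uMat]

lemma det_uMat {r : ℕ} (β : Fin r → F) : (uMat β).det = 1 := by
  rw [det_of_isUpperTriangular]
  · simp [uMat_apply_self]
  · intro i j (hji : j < i)
    have : (j : ℕ) ≠ r := by omega
    simp [uMat, hji.ne', this]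

lemma isUnit_det_uMat_mul_Dpow {r : ℕ} (β : Fin r → F) {ϖF : F} (hϖ : ϖF ≠ 0)
    (f : Fin (r + 1) → ℤ) : IsUnit (uMat β * Dpow ϖF f).det := by
  rw [det_mul, det_uMat, one_mul, Dpow, det_diagonal, isUnit_iff_ne_zero]
  exact Finset.prod_ne_zero_iff.mpr fun i _ => zpow_ne_zero _ hϖ

lemma uMat_mul_Dpow_apply_self {r : ℕ} (β : Fin r → F) (ϖF : F) (f : Fin (r + 1) → ℤ)
    (j : Fin (r + 1)) : (uMat β * Dpow ϖF f) j j = ϖF ^ f j := by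
  rw [Dpow, mul_diagonal, uMat_apply_self, one_mul]

lemma exists_neg_of_sum_eq_zero {ι M : Type*} [Fintype ι] [AddCommMonoid M] [LinearOrder M]
    [IsOrderedAddMonoid M] {f : ι → M} (hf : f ≠ 0) (hsum : ∑ i, f i = 0) : ∃ i, f i < 0 := by
  by_contra! hnonneg
  exact hf ((Fintype.sum_eq_zero_iff_of_nonneg hnonneg).mp hsum)

theorem stmt9_general (ϖ : O) (hϖ : Irreducible ϖ) (m' : ℕ)
    (χ : Fˣ →* ℂˣ) (ψ : AddChar F ℂ)
    (hψ2 : ∃ x : F, IsInt O (x * algebraMap O F ϖ) ∧ ψ x ≠ 1)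
    (J : Matrix (Fin ((m' + 1) + (m' + 1))) (Fin ((m' + 1) + (m' + 1))) F → ℂ)
    (hJS : ∀ (a b : Matrix (Fin (m' + 1)) (Fin (m' + 1)) F) (ha : IsUnit a.det)
      (p : Matrix (Fin ((m' + 1) + (m' + 1))) (Fin ((m' + 1) + (m' + 1))) F),
      shalikaMat a b ∈ Pset F ((m' + 1) + (m' + 1)) → p ∈ Pset F ((m' + 1) + (m' + 1)) →
      J (shalikaMat a b * p) = (χ ha.unit : ℂ) * ψ (Matrix.trace (a⁻¹ * b)) * J p)
    (hJK : ∀ p k, p ∈ Pset F ((m' + 1) + (m' + 1)) → k ∈ POset O F ((m' + 1) + (m' + 1)) →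
      J (p * k) = J p) :
    ∀ f : Fin (m' + 1) → ℤ, f ≠ 0 → (∑ i, f i) = 0 →
      ∀ β : Fin m' → F,
        J (diagEmbed (uMat β * Dpow (algebraMap O F ϖ) f)) = 0 := by
  intro f hf hsum β
  have hϖ0 : algebraMap O F ϖ ≠ 0 :=
    (map_ne_zero_iff _ (IsFractionRing.injective O F)).mpr hϖ.ne_zero
  obtain ⟨j, hj⟩ := exists_neg_of_sum_eq_zero hf hsum
  obtain ⟨x, hxϖ, hx⟩ := hψ2
  obtain ⟨c, hc, hcx⟩ := exists_isInt_zpow_mul_eq hϖ0 hxϖ hj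
  refine diagEmbed_eq_zero_of_trace ψ J (apply_shalikaMat_one_mul χ ψ J hJS) hJK
    (isUnit_det_uMat_mul_Dpow β hϖ0 f) (isInt_diagonal_single_apply hc j) ?_
  rwa [trace_mul_diagonal_single, uMat_mul_Dpow_apply_self, hcx]

/-- If `J` on `P_n` (with `n = 2m`, `m = m' + 1`) transforms on the left under `S°_n` by
`χ_ψ` and is right `P_n(O)`-invariant, and `ψ` is trivial on `O` but not on `𝔭⁻¹`, then `J`
vanishes at `diag(u_β · ϖ^f, 1_m)` for every nonzero `f ∈ ℤ^m` with `∑ f_i = 0` and every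
`β ∈ F^{m−1}`. -/
theorem stmt9 (ϖ : O) (hϖ : Irreducible ϖ) (m' : ℕ)
    (χ : Fˣ →* ℂˣ) (ψ : AddChar F ℂ)
    (hψ1 : ∀ a : O, ψ (algebraMap O F a) = 1)
    (hψ2 : ∃ x : F, IsInt O (x * algebraMap O F ϖ) ∧ ψ x ≠ 1)
    (J : Matrix (Fin ((m' + 1) + (m' + 1))) (Fin ((m' + 1) + (m' + 1))) F → ℂ)
    (hJS : ∀ (a b : Matrix (Fin (m' + 1)) (Fin (m' + 1)) F) (ha : IsUnit a.det)
      (p : Matrix (Fin ((m' + 1) + (m' + 1))) (Fin ((m' + 1) + (m' + 1))) F),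
      shalikaMat a b ∈ Pset F ((m' + 1) + (m' + 1)) → p ∈ Pset F ((m' + 1) + (m' + 1)) →
      J (shalikaMat a b * p) = (χ ha.unit : ℂ) * ψ (Matrix.trace (a⁻¹ * b)) * J p)
    (hJK : ∀ p k, p ∈ Pset F ((m' + 1) + (m' + 1)) → k ∈ POset O F ((m' + 1) + (m' + 1)) →
      J (p * k) = J p) :
    ∀ f : Fin (m' + 1) → ℤ, f ≠ 0 → (∑ i, f i) = 0 →
      ∀ β : Fin m' → F,
        J (diagEmbed (uMat β * Dpow (algebraMap O F ϖ) f)) = 0 :=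
  stmt9_general ϖ hϖ m' χ ψ hψ2 J hJS hJK

end ShalikaStmt9
end

section
/- Let n = 2m be an even positive integer and l a positive integer. Let g, h ∈ P_n, and let u = [[1_n, xᵀ, yᵀ],[0,1,z],[0,0,1]] and v = [[1_n, x′ᵀ, y′ᵀ],[0,1,z′],[0,0,1]] with x, x′, y, y′ ∈ F^n and z, z′ ∈ F. If diag(g,1,1)·u·C_{n+2}(l) = diag(h,1,1)·v·C_{n+2}(l) as left cosets in GL_{n+2}(F), then h^{-1}·g ∈ C_n(l), x_n − x′_n ∈ 𝔭^l, and z − z′ ∈ 𝔭^l. -/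
/-!
Cancelling `diag(h,1,1)` turns the coset equality into `diag(k,1,1) · u = v · c` with
`k = h⁻¹g` and `c ∈ C_{n+2}(l)`. The last row of `c` is that of the identity, and row `n+1` of
`diag(k,1,1) · u` is row `n+1` of `u`; comparing entries then identifies the `n × n` block of `c`
with `k`, the entry `c_{n,n+1}` with `(k x)_n - x'_n = x_n - x'_n` (the last row of `k` is that
of the identity), and `c_{n+1,n+2}` with `z - z'`. So all three are congruent to the identity
modulo `𝔭^l`, and `k ∈ P_n(O)` because a matrix congruent to `1` modulo `𝔭` has unit determinant
over the local ring `O`.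
-/

open Matrix

namespace ShalikaStmt10

variable {O F : Type*} [CommRing O] [IsDomain O] [IsDiscreteValuationRing O]
  [Field F] [Algebra O F] [IsFractionRing O F]

/-- `x ∈ F` lies in (the image of) `O`. -/
def IsInt (O : Type*) {F : Type*} [CommRing O] [Field F] [Algebra O F] (x : F) : Prop :=
  ∃ a : O, algebraMap O F a = x

/-- The mirabolic subgroup `P_N ⊂ GL_N(F)`: invertible matrices with last row `(0,…,0,1)`. -/
def Pset (F : Type*) [Field F] (N : ℕ) : Set (Matrix (Fin N) (Fin N) F) :=
  {p | IsUnit p.det ∧ ∀ i j : Fin N, (i : ℕ) = N - 1 →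
    p i j = if (j : ℕ) = N - 1 then 1 else 0}

/-- `P_N(O) = P_N ∩ GL_N(O)`. -/
def POset (O : Type*) (F : Type*) [CommRing O] [Field F] [Algebra O F] (N : ℕ) :
    Set (Matrix (Fin N) (Fin N) F) :=
  {p | p ∈ Pset F N ∧ (∀ i j, IsInt O (p i j)) ∧ ∃ u : Oˣ, algebraMap O F (u : O) = p.det}

/-- `C_N(l) = {p ∈ P_N(O) : p ≡ 1_N (mod 𝔭^l)}`. -/
def Cset (O : Type*) (F : Type*) [CommRing O] [Field F] [Algebra O F]
    (ϖ : O) (N l : ℕ) : Set (Matrix (Fin N) (Fin N) F) :=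
  {p | p ∈ POset O F N ∧ ∀ i j : Fin N,
    ∃ a : O, algebraMap O F (ϖ ^ l * a) = p i j - (if i = j then 1 else 0)}

/-- The unipotent matrix `[[1_n, xᵀ, yᵀ],[0,1,z],[0,0,1]]` of size `(n+2) × (n+2)`. -/
def bigU {F : Type*} [Field F] (n : ℕ) (x y : Fin n → F) (z : F) :
    Matrix (Fin (n + 2)) (Fin (n + 2)) F :=
  Matrix.of fun i j =>
    if i = j then 1
    else if hi : (i : ℕ) < n then
      (if (j : ℕ) = n then x ⟨i, hi⟩ else if (j : ℕ) = n + 1 then y ⟨i, hi⟩ else 0)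
    else if (i : ℕ) = n ∧ (j : ℕ) = n + 1 then z else 0

/-- The embedding `g ↦ diag(g, 1, 1)` of `n × n` matrices into `(n+2) × (n+2)` matrices. -/
def embed2 {F : Type*} [Field F] (n : ℕ) (g : Matrix (Fin n) (Fin n) F) :
    Matrix (Fin (n + 2)) (Fin (n + 2)) F :=
  Matrix.of fun i j =>
    if hi : (i : ℕ) < n then (if hj : (j : ℕ) < n then g ⟨i, hi⟩ ⟨j, hj⟩ else 0)
    else if (i : ℕ) = (j : ℕ) then 1 else 0

lemma mul_apply_of_apply_eq_single {m n o R : Type*} [Fintype n] [DecidableEq n]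
    [NonAssocSemiring R] {A : Matrix m n R} {i : m} {i' : n} (hA : A i = Pi.single i' 1)
    (B : Matrix n o R) : (A * B) i = B i' := by
  rw [mul_apply_eq_vecMul, hA, single_one_vecMul, row]

lemma isUnit_det_one_add_smul {R n : Type*} [CommRing R] [IsLocalRing R] [Fintype n]
    [DecidableEq n] {t : R} (ht : t ∈ IsLocalRing.maximalIdeal R) (A : Matrix n n R) :
    IsUnit (1 + t • A).det := by
  have hres : (IsLocalRing.residue R).mapMatrix (1 + t • A) = 1 := by
    ext i j
    simp [(IsLocalRing.residue_eq_zero_iff t).mpr ht, one_apply,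
      apply_ite (IsLocalRing.residue R)]
  rw [← IsLocalRing.residue_ne_zero_iff_isUnit, RingHom.map_det, hres, det_one]
  exact one_ne_zero

lemma exists_mem_mul_eq_of_image_mul_eq {M : Type*} [Monoid M] {S : Set M} (hS : 1 ∈ S)
    {a b : M} (h : (a * ·) '' S = (b * ·) '' S) : ∃ c ∈ S, a = b * c := by
  obtain ⟨c, hc, hbc⟩ : a ∈ (b * ·) '' S := h ▸ ⟨1, hS, mul_one a⟩
  exact ⟨c, hc, hbc.symm⟩

section Mirabolic

variable {F : Type*} [Field F] {n : ℕ}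

lemma mem_Pset_succ_iff {p : Matrix (Fin (n + 1)) (Fin (n + 1)) F} :
    p ∈ Pset F (n + 1) ↔ IsUnit p.det ∧ p (Fin.last n) = Pi.single (Fin.last n) 1 := by
  refine and_congr_right fun _ => ⟨fun hp => funext fun j => ?_, fun hp i j hi => ?_⟩
  · simpa [Pi.single_apply, Fin.ext_iff] using hp (Fin.last n) j (by simp)
  · obtain rfl : i = Fin.last n := Fin.ext (by simpa using hi)
    simp [hp, Pi.single_apply, Fin.ext_iff]

lemma inv_mul_mem_Pset {g h : Matrix (Fin (n + 1)) (Fin (n + 1)) F} (hh : h ∈ Pset F (n + 1))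
    (hg : g ∈ Pset F (n + 1)) : h⁻¹ * g ∈ Pset F (n + 1) := by
  rw [mem_Pset_succ_iff] at hh hg ⊢
  have hinv : h⁻¹ (Fin.last n) = Pi.single (Fin.last n) 1 := by
    rw [← mul_apply_of_apply_eq_single hh.2 h⁻¹, mul_nonsing_inv _ hh.1]
    ext j
    exact one_eq_pi_single
  refine ⟨?_, by rw [mul_apply_of_apply_eq_single hinv, hg.2]⟩
  rw [det_mul]
  exact (isUnit_nonsing_inv_det h hh.1).mul hg.1

lemma mulVec_apply_last_of_mem_Pset {p : Matrix (Fin (n + 1)) (Fin (n + 1)) F}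
    (hp : p ∈ Pset F (n + 1)) (v : Fin (n + 1) → F) : (p *ᵥ v) (Fin.last n) = v (Fin.last n) := by
  rw [mulVec, (mem_Pset_succ_iff.mp hp).2, single_one_dotProduct]

end Mirabolic

section Congruence

variable {O F : Type*} [CommRing O] [Field F] [Algebra O F] {ϖ : O} {N l : ℕ}

lemma one_mem_Cset : (1 : Matrix (Fin N) (Fin N) F) ∈ Cset O F ϖ N l := by
  refine ⟨⟨⟨by simp, fun i j hi => ?_⟩, fun i j => ?_, 1, by simp⟩,
    fun i j => ⟨0, by simp [one_apply]⟩⟩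
  · simp [one_apply, Fin.ext_iff, hi, eq_comm]
  · exact ⟨(1 : Matrix (Fin N) (Fin N) O) i j, by simp [one_apply, apply_ite (algebraMap O F)]⟩

lemma exists_algebraMap_eq_apply_of_mem_Cset {c : Matrix (Fin N) (Fin N) F}
    (hc : c ∈ Cset O F ϖ N l) {i j : Fin N} (hij : i ≠ j) :
    ∃ a : O, algebraMap O F (ϖ ^ l * a) = c i j := by
  simpa [hij] using hc.2 i j

lemma mem_Cset_of_mem_Pset [IsLocalRing O] (hϖ : ϖ ∈ IsLocalRing.maximalIdeal O) (hl : 0 < l)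
    {p : Matrix (Fin N) (Fin N) F} (hp : p ∈ Pset F N)
    (hcong : ∀ i j, ∃ a : O, algebraMap O F (ϖ ^ l * a) = p i j - if i = j then 1 else 0) :
    p ∈ Cset O F ϖ N l := by
  choose a ha using hcong
  set K : Matrix (Fin N) (Fin N) O := 1 + ϖ ^ l • Matrix.of a
  have hK : (algebraMap O F).mapMatrix K = p := by
    ext i j
    simp [K, ha, one_apply, apply_ite (algebraMap O F)]
  have hKdet : IsUnit K.det := isUnit_det_one_add_smul (Ideal.pow_mem_of_mem _ hϖ l hl) _
  refine ⟨⟨hp, fun i j => ⟨K i j, by rw [← hK]; rfl⟩, hKdet.unit, ?_⟩, fun i j => ⟨a i j, ha i j⟩⟩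
  rw [IsUnit.unit_spec, ← hK, RingHom.map_det]

end Congruence

section BlockEntries

variable {F : Type*} [Field F] {n : ℕ} (x y : Fin n → F) (z : F) (k : Matrix (Fin n) (Fin n) F)

@[simp] lemma bigU_apply₁₁ (i j : Fin n) :
    bigU n x y z i.castSucc.castSucc j.castSucc.castSucc =
      (1 : Matrix (Fin n) (Fin n) F) i j := by
  simp [bigU, one_apply, j.isLt.ne, (j.isLt.trans n.lt_succ_self).ne]

@[simp] lemma bigU_apply₁₂ (i : Fin n) :
    bigU n x y z i.castSucc.castSucc (Fin.last n).castSucc = x i := by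
  simp [bigU, Fin.ext_iff, i.isLt.ne]

@[simp] lemma bigU_apply₁₃ (i : Fin n) :
    bigU n x y z i.castSucc.castSucc (Fin.last (n + 1)) = y i := by
  simp [bigU, Fin.ext_iff, (i.isLt.trans n.lt_succ_self).ne]

@[simp] lemma bigU_apply₂₁ (j : Fin n) :
    bigU n x y z (Fin.last n).castSucc j.castSucc.castSucc = 0 := by
  simp [bigU, Fin.ext_iff, j.isLt.ne', (j.isLt.trans n.lt_succ_self).ne]

@[simp] lemma bigU_apply₂₂ : bigU n x y z (Fin.last n).castSucc (Fin.last n).castSucc = 1 := by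
  simp [bigU]

@[simp] lemma bigU_apply₂₃ : bigU n x y z (Fin.last n).castSucc (Fin.last (n + 1)) = z := by
  simp [bigU, Fin.ext_iff]

@[simp] lemma embed2_apply₁₁ (i j : Fin n) :
    embed2 n k i.castSucc.castSucc j.castSucc.castSucc = k i j := by
  simp [embed2]

@[simp] lemma embed2_apply₁₂ (i : Fin n) :
    embed2 n k i.castSucc.castSucc (Fin.last n).castSucc = 0 := by
  simp [embed2]

@[simp] lemma embed2_apply₁₃ (i : Fin n) :
    embed2 n k i.castSucc.castSucc (Fin.last (n + 1)) = 0 := by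
  simp [embed2]

@[simp] lemma embed2_apply₂ :
    embed2 n k (Fin.last n).castSucc = Pi.single (Fin.last n).castSucc 1 := by
  ext j
  simp [embed2, Pi.single_apply, Fin.ext_iff, eq_comm]

@[simp] lemma embed2_apply₃ : embed2 n k (Fin.last (n + 1)) = Pi.single (Fin.last (n + 1)) 1 := by
  ext j
  simp [embed2, Pi.single_apply, Fin.ext_iff, eq_comm]

lemma embed2_mul (a b : Matrix (Fin n) (Fin n) F) :
    embed2 n (a * b) = embed2 n a * embed2 n b := by
  ext i j
  induction i using Fin.lastCases with
  | last => simp [mul_apply_of_apply_eq_single (embed2_apply₃ a)]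
  | cast i =>
    induction i using Fin.lastCases with
    | last => simp [mul_apply_of_apply_eq_single (embed2_apply₂ a)]
    | cast i =>
      induction j using Fin.lastCases with
      | last => simp [mul_apply, Fin.sum_univ_castSucc]
      | cast j =>
        induction j using Fin.lastCases with
        | last => simp [mul_apply, Fin.sum_univ_castSucc]
        | cast j => simp [mul_apply, Fin.sum_univ_castSucc]

lemma embed2_one : embed2 n (1 : Matrix (Fin n) (Fin n) F) = 1 := by
  ext i j
  induction i using Fin.lastCases with
  | last => simp [one_eq_pi_single]
  | cast i =>
    induction i using Fin.lastCases with
    | last => simp [one_eq_pi_single]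
    | cast i =>
      induction j using Fin.lastCases with
      | last => simp
      | cast j =>
        induction j using Fin.lastCases with
        | last => simp
        | cast j => simp [one_apply]

lemma embed2_mul_bigU_apply₁₁ (i j : Fin n) :
    (embed2 n k * bigU n x y z) i.castSucc.castSucc j.castSucc.castSucc = k i j := by
  simp [mul_apply, Fin.sum_univ_castSucc, one_apply]

lemma embed2_mul_bigU_apply₁₂ (i : Fin n) :
    (embed2 n k * bigU n x y z) i.castSucc.castSucc (Fin.last n).castSucc = (k *ᵥ x) i := by
  simp [mul_apply, Fin.sum_univ_castSucc, mulVec, dotProduct]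

lemma embed2_mul_bigU_apply₂ :
    (embed2 n k * bigU n x y z) (Fin.last n).castSucc = bigU n x y z (Fin.last n).castSucc :=
  mul_apply_of_apply_eq_single (embed2_apply₂ k) _

lemma bigU_mul_apply₁ (c : Matrix (Fin (n + 2)) (Fin (n + 2)) F) (i : Fin n)
    (j : Fin (n + 2)) :
    (bigU n x y z * c) i.castSucc.castSucc j = c i.castSucc.castSucc j +
      x i * c (Fin.last n).castSucc j + y i * c (Fin.last (n + 1)) j := by
  simp [mul_apply, Fin.sum_univ_castSucc, one_apply]

lemma bigU_mul_apply₂ (c : Matrix (Fin (n + 2)) (Fin (n + 2)) F) (j : Fin (n + 2)) :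
    (bigU n x y z * c) (Fin.last n).castSucc j =
      c (Fin.last n).castSucc j + z * c (Fin.last (n + 1)) j := by
  simp [mul_apply, Fin.sum_univ_castSucc]

end BlockEntries

lemma apply_eq_of_embed2_mul_bigU_eq {F : Type*} [Field F] {n : ℕ}
    {k : Matrix (Fin n) (Fin n) F} {x y x' y' : Fin n → F} {z z' : F}
    {c : Matrix (Fin (n + 2)) (Fin (n + 2)) F}
    (hc : c (Fin.last (n + 1)) = Pi.single (Fin.last (n + 1)) 1)
    (hM : embed2 n k * bigU n x y z = bigU n x' y' z' * c) :
    (∀ i j, c i.castSucc.castSucc j.castSucc.castSucc = k i j) ∧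
    (∀ i, c i.castSucc.castSucc (Fin.last n).castSucc = (k *ᵥ x) i - x' i) ∧
    c (Fin.last n).castSucc (Fin.last (n + 1)) = z - z' := by
  have hrow₂ (j) : bigU n x y z (Fin.last n).castSucc j =
      c (Fin.last n).castSucc j + z' * c (Fin.last (n + 1)) j := by
    rw [← bigU_mul_apply₂, ← hM, embed2_mul_bigU_apply₂]
  have hrow₁ (i j) : (embed2 n k * bigU n x y z) i.castSucc.castSucc j =
      c i.castSucc.castSucc j + x' i * c (Fin.last n).castSucc j +
        y' i * c (Fin.last (n + 1)) j := by
    rw [hM, bigU_mul_apply₁]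
  have hc₂₁ (j : Fin n) : c (Fin.last n).castSucc j.castSucc.castSucc = 0 := by
    simpa [hc] using (hrow₂ j.castSucc.castSucc).symm
  have hc₂₂ : c (Fin.last n).castSucc (Fin.last n).castSucc = 1 := by
    simpa [hc] using (hrow₂ (Fin.last n).castSucc).symm
  refine ⟨fun i j => ?_, fun i => ?_, ?_⟩
  · simpa [hc, hc₂₁, embed2_mul_bigU_apply₁₁] using (hrow₁ i j.castSucc.castSucc).symm
  · have hx := hrow₁ i (Fin.last n).castSucc
    rw [embed2_mul_bigU_apply₁₂, hc₂₂, hc, Pi.single_eq_of_ne (Fin.castSucc_ne_last _)] at hx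
    linear_combination -hx
  · have hz := hrow₂ (Fin.last (n + 1))
    rw [bigU_apply₂₃, hc, Pi.single_eq_same] at hz
    linear_combination -hz

/-- If `diag(g,1,1)·u·C_{n+2}(l) = diag(h,1,1)·v·C_{n+2}(l)` as left cosets (where `n = 2m`,
`m = m' + 1`, `l > 0`), then `h⁻¹·g ∈ C_n(l)`, `x_n − x'_n ∈ 𝔭^l` and `z − z' ∈ 𝔭^l`. -/
theorem stmt10 (ϖ : O) (hϖ : Irreducible ϖ) (m' l : ℕ) (hl : 0 < l)
    (g h : Matrix (Fin ((m' + 1) + (m' + 1))) (Fin ((m' + 1) + (m' + 1))) F)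
    (hg : g ∈ Pset F ((m' + 1) + (m' + 1))) (hh : h ∈ Pset F ((m' + 1) + (m' + 1)))
    (x x' y y' : Fin ((m' + 1) + (m' + 1)) → F) (z z' : F)
    (hcoset :
      (fun c => embed2 ((m' + 1) + (m' + 1)) g * bigU ((m' + 1) + (m' + 1)) x y z * c) ''
          Cset O F ϖ (((m' + 1) + (m' + 1)) + 2) l =
        (fun c => embed2 ((m' + 1) + (m' + 1)) h * bigU ((m' + 1) + (m' + 1)) x' y' z' * c) ''
          Cset O F ϖ (((m' + 1) + (m' + 1)) + 2) l) :
    h⁻¹ * g ∈ Cset O F ϖ ((m' + 1) + (m' + 1)) l ∧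
    (∃ a : O, algebraMap O F (ϖ ^ l * a) =
      x (Fin.last (m' + 1 + m')) - x' (Fin.last (m' + 1 + m'))) ∧
    (∃ a : O, algebraMap O F (ϖ ^ l * a) = z - z') := by
  obtain ⟨c, hcC, hgc⟩ := exists_mem_mul_eq_of_image_mul_eq one_mem_Cset hcoset
  have hk : h⁻¹ * g ∈ Pset F _ := inv_mul_mem_Pset hh hg
  have hM : embed2 _ (h⁻¹ * g) * bigU _ x y z = bigU _ x' y' z' * c := by
    rw [embed2_mul, mul_assoc, hgc, ← mul_assoc, ← mul_assoc, ← embed2_mul,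
      nonsing_inv_mul _ hh.1, embed2_one, one_mul]
  obtain ⟨hc₁₁, hc₁₂, hc₂₃⟩ :=
    apply_eq_of_embed2_mul_bigU_eq (mem_Pset_succ_iff.mp hcC.1.1).2 hM
  refine ⟨mem_Cset_of_mem_Pset ((IsLocalRing.mem_maximalIdeal ϖ).mpr hϖ.not_isUnit) hl hk
    fun i j => ?_, ?_, ?_⟩
  · simpa [hc₁₁] using hcC.2 i.castSucc.castSucc j.castSucc.castSucc
  · rw [← mulVec_apply_last_of_mem_Pset (n := m' + 1 + m') hk x, ← hc₁₂]
    exact exists_algebraMap_eq_apply_of_mem_Cset hcC (by simp [Fin.ext_iff])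
  · rw [← hc₂₃]
    exact exists_algebraMap_eq_apply_of_mem_Cset hcC (Fin.castSucc_ne_last _)

end ShalikaStmt10
end

section
/- Let m ≥ 2 and let e ≥ 1 be an integer, and set n = 2m. Let δ_m = diag(ϖ^e, ϖ^{3e}, …, ϖ^{(2m−3)e}, ϖ^{(m−1)e}) (i.e. the i-th diagonal entry is ϖ^{(2i−1)e} for 1 ≤ i ≤ m−1 and the last entry is ϖ^{(m−1)e}), δ♯_m = diag(1, ϖ^{2e}, …, ϖ^{2(m−1)e}), v_m = [[1_{m−1}, yᵀ],[0,1]] with y = (ϖ^{−(m−1)e}, ϖ^{−(m−2)e}, …, ϖ^{−e}), and v♯_m = [[1_{m−1}, 0],[z, 1]] with z = (ϖ^{(m−1)e}, ϖ^{(m−2)e}, …, ϖ^{e}). Then the (S°_n, P_n(O))-double cosets S°_n · diag(v_m·δ_m, 1_m) · P_n(O) and S°_n · diag(v♯_m·δ♯_m, 1_m) · P_n(O) in GL_n(F) are equal. -/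
open Matrix

namespace ShalikaStmt11

variable {O F : Type*} [CommRing O] [IsDomain O] [IsDiscreteValuationRing O]
  [Field F] [Algebra O F] [IsFractionRing O F]

/-- `x ∈ F` lies in (the image of) `O`. -/
def IsInt (O : Type*) {F : Type*} [CommRing O] [Field F] [Algebra O F] (x : F) : Prop :=
  ∃ a : O, algebraMap O F a = x

/-- The mirabolic subgroup `P_N ⊂ GL_N(F)`: invertible matrices with last row `(0,…,0,1)`. -/
def Pset (F : Type*) [Field F] (N : ℕ) : Set (Matrix (Fin N) (Fin N) F) :=
  {p | IsUnit p.det ∧ ∀ i j : Fin N, (i : ℕ) = N - 1 →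
    p i j = if (j : ℕ) = N - 1 then 1 else 0}

/-- `P_N(O) = P_N ∩ GL_N(O)`. -/
def POset (O : Type*) (F : Type*) [CommRing O] [Field F] [Algebra O F] (N : ℕ) :
    Set (Matrix (Fin N) (Fin N) F) :=
  {p | p ∈ Pset F N ∧ (∀ i j, IsInt O (p i j)) ∧ ∃ u : Oˣ, algebraMap O F (u : O) = p.det}

/-- The block matrix `[[a,b],[0,a]]` of size `(M+M) × (M+M)`. -/
def shalikaMat {F : Type*} [Field F] {M : ℕ} (a b : Matrix (Fin M) (Fin M) F) :
    Matrix (Fin (M + M)) (Fin (M + M)) F :=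
  Matrix.reindex finSumFinEquiv finSumFinEquiv (Matrix.fromBlocks a b 0 a)

/-- The Shalika subgroup `S_{M+M} ⊂ GL_{M+M}(F)`. -/
def Sset (O : Type*) (F : Type*) [CommRing O] [Field F] [Algebra O F] (M : ℕ) :
    Set (Matrix (Fin (M + M)) (Fin (M + M)) F) :=
  {s | ∃ a b : Matrix (Fin M) (Fin M) F, IsUnit a.det ∧ s = shalikaMat a b}

/-- The embedding `g ↦ diag(g, 1_M)`. -/
def diagEmbed {F : Type*} [Field F] {M : ℕ} (g : Matrix (Fin M) (Fin M) F) :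
    Matrix (Fin (M + M)) (Fin (M + M)) F :=
  Matrix.reindex finSumFinEquiv finSumFinEquiv (Matrix.fromBlocks g 0 0 1)

/-- The upper unipotent matrix `[[1_r, yᵀ],[0,1]]`. -/
def uMat {F : Type*} [Field F] {r : ℕ} (y : Fin r → F) :
    Matrix (Fin (r + 1)) (Fin (r + 1)) F :=
  Matrix.of fun i j =>
    if i = j then 1
    else if (j : ℕ) = r then (if h : (i : ℕ) < r then y ⟨i, h⟩ else 0) else 0

/-- The lower unipotent matrix `[[1_r, 0],[z,1]]`. -/
def lMat {F : Type*} [Field F] {r : ℕ} (z : Fin r → F) :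
    Matrix (Fin (r + 1)) (Fin (r + 1)) F :=
  Matrix.of fun i j =>
    if i = j then 1
    else if (i : ℕ) = r then (if h : (j : ℕ) < r then z ⟨j, h⟩ else 0) else 0

/-!
Put `t = ϖ^e`. The unipotent lower bidiagonal matrix `b = bMat t m` and the matrix `k = kMat t m`
lie in `GL_m(O)`, and `b · v_m δ_m = v♯_m δ♯_m · k`. As the last row of `b` is `(0,…,0,1)`,
`diag(b⁻¹, b⁻¹) ∈ S°_n` and `diag(k, b) ∈ P_n(O)`, and
`diag(v_m δ_m, 1) = diag(b⁻¹, b⁻¹) · diag(v♯_m δ♯_m, 1) · diag(k, b)`.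
Inverting `b` and `k` gives the reverse factorisation, so each double coset contains the other
representative.
-/

section DoubleCoset

variable {M : Type*} [Monoid M] {H K : Set M}

lemma doubleCoset_subset (hH : ∀ a ∈ H, ∀ b ∈ H, a * b ∈ H) (hK : ∀ a ∈ K, ∀ b ∈ K, a * b ∈ K)
    {g g' : M} (hg : ∃ s ∈ H, ∃ k ∈ K, g = s * g' * k) :
    {x | ∃ s ∈ H, ∃ k ∈ K, x = s * g * k} ⊆ {x | ∃ s ∈ H, ∃ k ∈ K, x = s * g' * k} := by
  rintro _ ⟨s, hs, k, hk, rfl⟩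
  obtain ⟨s', hs', k', hk', rfl⟩ := hg
  exact ⟨s * s', hH s hs s' hs', k' * k, hK k' hk' k hk, by simp only [mul_assoc]⟩

lemma doubleCoset_eq (hH : ∀ a ∈ H, ∀ b ∈ H, a * b ∈ H) (hK : ∀ a ∈ K, ∀ b ∈ K, a * b ∈ K)
    {g g' : M} (hg : ∃ s ∈ H, ∃ k ∈ K, g = s * g' * k) (hg' : ∃ s ∈ H, ∃ k ∈ K, g' = s * g * k) :
    {x | ∃ s ∈ H, ∃ k ∈ K, x = s * g * k} = {x | ∃ s ∈ H, ∃ k ∈ K, x = s * g' * k} :=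
  (doubleCoset_subset hH hK hg).antisymm (doubleCoset_subset hH hK hg')

end DoubleCoset

section LastRow

variable {R S : Type*} [CommRing R] [CommRing S] {N : ℕ}

/-- `Pset K N` is `{p | IsUnit p.det ∧ HasStdLastRow p}` by definition. -/
def HasStdLastRow (p : Matrix (Fin N) (Fin N) R) : Prop :=
  ∀ i j : Fin N, (i : ℕ) = N - 1 → p i j = if (j : ℕ) = N - 1 then 1 else 0

lemma HasStdLastRow.mul_apply {p : Matrix (Fin N) (Fin N) R} (hp : HasStdLastRow p)
    (q : Matrix (Fin N) (Fin N) R) {i : Fin N} (hi : (i : ℕ) = N - 1) (j : Fin N) :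
    (p * q) i j = q i j := by
  rw [Matrix.mul_apply, Finset.sum_eq_single i]
  · rw [hp i i hi, if_pos hi, one_mul]
  · intro r _ hr
    rw [hp i r hi, if_neg (fun h => hr (Fin.ext (h.trans hi.symm))), zero_mul]
  · exact fun h => absurd (Finset.mem_univ i) h

lemma HasStdLastRow.mul {p q : Matrix (Fin N) (Fin N) R} (hp : HasStdLastRow p)
    (hq : HasStdLastRow q) : HasStdLastRow (p * q) := fun i j hi => by
  rw [hp.mul_apply q hi, hq i j hi]

lemma HasStdLastRow.map {p : Matrix (Fin N) (Fin N) R} (hp : HasStdLastRow p) (f : R →+* S) :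
    HasStdLastRow (p.map f) := fun i j hi => by
  rw [Matrix.map_apply, hp i j hi, apply_ite f, map_one, map_zero]

end LastRow

section Closure

variable {R K : Type*} [CommRing R] [Field K] [Algebra R K]

lemma Pset_mul {N : ℕ} {p q : Matrix (Fin N) (Fin N) K} (hp : p ∈ Pset K N) (hq : q ∈ Pset K N) :
    p * q ∈ Pset K N :=
  ⟨by rw [det_mul]; exact hp.1.mul hq.1, HasStdLastRow.mul hp.2 hq.2⟩

lemma POset_mul {N : ℕ} {p q : Matrix (Fin N) (Fin N) K} (hp : p ∈ POset R K N)
    (hq : q ∈ POset R K N) : p * q ∈ POset R K N := by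
  obtain ⟨hpP, hpInt, u, hu⟩ := hp
  obtain ⟨hqP, hqInt, v, hv⟩ := hq
  refine ⟨Pset_mul hpP hqP, fun i j => ?_, u * v, by rw [Units.val_mul, map_mul, hu, hv, det_mul]⟩
  rw [IsInt, ← RingHom.mem_range, Matrix.mul_apply]
  exact Subring.sum_mem _ fun r _ => Subring.mul_mem _ (hpInt i r) (hqInt r j)

lemma Sset_mul {M : ℕ} {s s' : Matrix (Fin (M + M)) (Fin (M + M)) K} (hs : s ∈ Sset R K M)
    (hs' : s' ∈ Sset R K M) : s * s' ∈ Sset R K M := by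
  obtain ⟨a, b, ha, rfl⟩ := hs
  obtain ⟨a', b', ha', rfl⟩ := hs'
  refine ⟨a * a', a * b' + b * a', by rw [det_mul]; exact ha.mul ha', ?_⟩
  simp only [shalikaMat, reindex_apply, submatrix_mul_equiv, fromBlocks_multiply,
    Matrix.mul_zero, Matrix.zero_mul, add_zero, zero_add]

end Closure

section BlockDiag

variable {R S : Type*} [CommRing R] [CommRing S] {M : ℕ}

/-- `diag(A, D)`; `shalikaMat A 0 = blockDiag A A` and `diagEmbed g = blockDiag g 1` hold by `rfl`. -/
def blockDiag (A D : Matrix (Fin M) (Fin M) R) : Matrix (Fin (M + M)) (Fin (M + M)) R :=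
  reindex finSumFinEquiv finSumFinEquiv (fromBlocks A 0 0 D)

lemma blockDiag_mul_blockDiag (A D A' D' : Matrix (Fin M) (Fin M) R) :
    blockDiag A D * blockDiag A' D' = blockDiag (A * A') (D * D') := by
  simp only [blockDiag, reindex_apply, submatrix_mul_equiv, fromBlocks_multiply,
    Matrix.mul_zero, Matrix.zero_mul, add_zero, zero_add]

lemma det_blockDiag (A D : Matrix (Fin M) (Fin M) R) : (blockDiag A D).det = A.det * D.det := by
  rw [blockDiag, det_reindex_self, det_fromBlocks_zero₂₁]

lemma blockDiag_map (A D : Matrix (Fin M) (Fin M) R) (f : R →+* S) :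
    (blockDiag A D).map f = blockDiag (A.map f) (D.map f) := by
  rw [blockDiag, blockDiag, reindex_apply, reindex_apply, ← submatrix_map, fromBlocks_map,
    Matrix.map_zero _ f.map_zero]

lemma blockDiag_apply (A D : Matrix (Fin M) (Fin M) R) (p q : Fin M ⊕ Fin M) :
    blockDiag A D (finSumFinEquiv p) (finSumFinEquiv q) = fromBlocks A 0 0 D p q := by
  simp only [blockDiag, reindex_apply, submatrix_apply, Equiv.symm_apply_apply]

lemma HasStdLastRow.blockDiag {D : Matrix (Fin M) (Fin M) R} (hD : HasStdLastRow D)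
    (A : Matrix (Fin M) (Fin M) R) : HasStdLastRow (blockDiag A D) := by
  intro i j hi
  obtain ⟨i | i, rfl⟩ := finSumFinEquiv.surjective i
  · simp only [finSumFinEquiv_apply_left, Fin.val_castAdd] at hi
    omega
  simp only [finSumFinEquiv_apply_right, Fin.val_natAdd] at hi
  obtain ⟨j | j, rfl⟩ := finSumFinEquiv.surjective j
  · rw [if_neg (by simp only [finSumFinEquiv_apply_left, Fin.val_castAdd]; omega),
      blockDiag_apply, fromBlocks_apply₂₁, Matrix.zero_apply]
  · rw [blockDiag_apply, fromBlocks_apply₂₂, hD i j (by omega)]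
    exact if_congr (by simp only [finSumFinEquiv_apply_right, Fin.val_natAdd]; omega) rfl rfl

end BlockDiag

section Membership

variable {R K : Type*} [CommRing R] [Field K] [Algebra R K] {M : ℕ}

lemma blockDiag_mul_diagEmbed_mul_blockDiag {A D g C : Matrix (Fin M) (Fin M) K}
    (hAD : A * D = 1) : blockDiag A A * diagEmbed g * blockDiag C D = diagEmbed (A * g * C) := by
  rw [show diagEmbed g = blockDiag g 1 from rfl, blockDiag_mul_blockDiag, blockDiag_mul_blockDiag,
    mul_one, hAD]
  rfl

lemma blockDiag_mem_shalika {A A' : Matrix (Fin M) (Fin M) K} (hAA' : A * A' = 1)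
    (hA : HasStdLastRow A) : blockDiag A A ∈ Sset R K M ∩ Pset K (M + M) := by
  have hdet := isUnit_det_of_right_inverse hAA'
  exact ⟨⟨A, 0, hdet, rfl⟩, by rw [det_blockDiag]; exact hdet.mul hdet, hA.blockDiag A⟩

lemma blockDiag_map_mem_POset {C C' D D' : Matrix (Fin M) (Fin M) R} (hC : C * C' = 1)
    (hD : D * D' = 1) (hDrow : HasStdLastRow D) :
    blockDiag (C.map (algebraMap R K)) (D.map (algebraMap R K)) ∈ POset R K (M + M) := by
  have hdet : IsUnit (C.det * D.det) :=
    (isUnit_det_of_right_inverse hC).mul (isUnit_det_of_right_inverse hD)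
  have hdetK : (blockDiag (C.map (algebraMap R K)) (D.map (algebraMap R K))).det =
      algebraMap R K (C.det * D.det) := by
    rw [← blockDiag_map, ← RingHom.mapMatrix_apply, ← RingHom.map_det, det_blockDiag]
  refine ⟨⟨?_, (hDrow.map _).blockDiag _⟩, fun i j => ⟨blockDiag C D i j, ?_⟩, hdet.unit, ?_⟩
  · rw [hdetK]
    exact hdet.map _
  · rw [← blockDiag_map, Matrix.map_apply]
  · rw [IsUnit.unit_spec, hdetK]

end Membership

section Factors

variable {R S : Type*} [CommRing R] [CommRing S] (t : R) (m : ℕ)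

def bMat : Matrix (Fin (m + 2)) (Fin (m + 2)) R :=
  of fun i j => if i = j then 1 else if (i : ℕ) = j + 1 ∧ (i : ℕ) ≠ m + 1 then -t else 0

def bMatInv : Matrix (Fin (m + 2)) (Fin (m + 2)) R :=
  of fun i j =>
    if i = j then 1 else if (j : ℕ) < i ∧ (i : ℕ) ≠ m + 1 then t ^ ((i : ℕ) - j) else 0

def kMat : Matrix (Fin (m + 2)) (Fin (m + 2)) R :=
  of fun i j =>
    if (i : ℕ) = j ∧ (i : ℕ) ≠ m + 1 then t
    else if (i : ℕ) = j + 1 then -1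
    else if (i : ℕ) = 0 ∧ (j : ℕ) = m + 1 then 1 else 0

def kMatInv : Matrix (Fin (m + 2)) (Fin (m + 2)) R :=
  of fun i j =>
    if (i : ℕ) = m + 1 then t ^ (j : ℕ) else if (i : ℕ) < j then -t ^ ((j : ℕ) - (i + 1)) else 0

lemma pow_add_one_sub {a b : ℕ} (h : b ≤ a) : t ^ (a + 1 - b) = t * t ^ (a - b) := by
  rw [Nat.sub_add_comm h, pow_succ']

lemma bMat_mul_apply_zero (X : Matrix (Fin (m + 2)) (Fin (m + 2)) R) (j : Fin (m + 2)) :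
    (bMat t m * X) 0 j = X 0 j := by
  rw [mul_apply, Fintype.sum_eq_single 0 fun r hr => ?_]
  · simp [bMat]
  · simp [bMat, Ne.symm hr]

lemma bMat_mul_apply_succ (X : Matrix (Fin (m + 2)) (Fin (m + 2)) R) (i : Fin (m + 1))
    (j : Fin (m + 2)) :
    (bMat t m * X) i.succ j = X i.succ j - if (i : ℕ) ≠ m then t * X i.castSucc j else 0 := by
  rw [mul_apply, Fintype.sum_eq_add i.succ i.castSucc Fin.castSucc_lt_succ.ne' ?_]
  · simp only [bMat, of_apply, Fin.ext_iff, Fin.val_succ, Fin.val_castSucc, true_and, ne_eq]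
    split_ifs <;> first | omega | ring1
  · rintro r ⟨hr₁, hr₂⟩
    simp only [bMat, of_apply, Fin.ext_iff, Fin.val_succ, Fin.val_castSucc, ne_eq] at hr₁ hr₂ ⊢
    split_ifs <;> first | omega | ring1

lemma mul_kMat_apply_last (X : Matrix (Fin (m + 2)) (Fin (m + 2)) R) (i : Fin (m + 2)) :
    (X * kMat t m) i (Fin.last _) = X i 0 := by
  rw [mul_apply, Fintype.sum_eq_single 0 fun r hr => ?_]
  · simp [kMat]
  · have := r.isLt
    simp only [kMat, of_apply, Fin.val_last, Fin.ext_iff, Fin.val_zero, ne_eq] at hr ⊢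
    split_ifs <;> first | omega | ring1

lemma mul_kMat_apply_castSucc (X : Matrix (Fin (m + 2)) (Fin (m + 2)) R) (i : Fin (m + 2))
    (j : Fin (m + 1)) : (X * kMat t m) i j.castSucc = t * X i j.castSucc - X i j.succ := by
  rw [mul_apply, Fintype.sum_eq_add j.castSucc j.succ Fin.castSucc_lt_succ.ne ?_]
  · simp only [kMat, of_apply, Fin.val_succ, Fin.val_castSucc, true_and, ne_eq]
    split_ifs <;> first | omega | ring1
  · rintro r ⟨hr₁, hr₂⟩
    simp only [kMat, of_apply, Fin.ext_iff, Fin.val_succ, Fin.val_castSucc, ne_eq] at hr₁ hr₂ ⊢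
    split_ifs <;> first | omega | ring1

lemma bMat_mul_bMatInv : bMat t m * bMatInv t m = 1 := by
  ext i j
  induction i using Fin.cases with
  | zero => simp [bMat_mul_apply_zero, bMatInv, one_apply]
  | succ i =>
    rw [bMat_mul_apply_succ]
    simp only [bMatInv, of_apply, one_apply, Fin.ext_iff, Fin.val_succ, Fin.val_castSucc]
    split_ifs <;> first | omega | ring1 | (rw [pow_add_one_sub t (by omega)]; ring1) | simp [*]

lemma kMatInv_mul_kMat : kMatInv t m * kMat t m = 1 := by
  ext i j
  induction j using Fin.lastCases with
  | last => simp [mul_kMat_apply_last, kMatInv, one_apply, Fin.ext_iff]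
  | cast j =>
    rw [mul_kMat_apply_castSucc]
    simp only [kMatInv, of_apply, one_apply, Fin.ext_iff, Fin.val_succ, Fin.val_castSucc]
    split_ifs <;> first | omega | ring1 | (rw [pow_add_one_sub t (by omega)]; ring1) | simp [*]

lemma hasStdLastRow_bMat : HasStdLastRow (bMat t m) := fun i j hi => by
  simp only [bMat, of_apply, Fin.ext_iff]
  split_ifs <;> first | rfl | omega

lemma hasStdLastRow_bMatInv : HasStdLastRow (bMatInv t m) := fun i j hi => by
  simp only [bMatInv, of_apply, Fin.ext_iff]
  split_ifs <;> first | rfl | omega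

lemma bMat_map (f : R →+* S) : (bMat t m).map f = bMat (f t) m := by
  ext i j
  simp only [bMat, map_apply, of_apply, apply_ite f, map_one, map_neg, map_zero]

lemma bMatInv_map (f : R →+* S) : (bMatInv t m).map f = bMatInv (f t) m := by
  ext i j
  simp only [bMatInv, map_apply, of_apply, apply_ite f, map_one, map_pow, map_zero]

lemma kMat_map (f : R →+* S) : (kMat t m).map f = kMat (f t) m := by
  ext i j
  simp only [kMat, map_apply, of_apply, apply_ite f, map_one, map_neg, map_zero]

lemma kMatInv_map (f : R →+* S) : (kMatInv t m).map f = kMatInv (f t) m := by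
  ext i j
  simp only [kMatInv, map_apply, of_apply, apply_ite f, map_neg, map_pow, map_zero]

lemma bMatInv_mul_bMat : bMatInv t m * bMat t m = 1 :=
  mul_eq_one_comm.mp (bMat_mul_bMatInv t m)

lemma kMat_mul_kMatInv : kMat t m * kMatInv t m = 1 :=
  mul_eq_one_comm.mp (kMatInv_mul_kMat t m)

end Factors

section Representatives

variable {K : Type*} [Field K]

/-- `v_{m+2} δ_{m+2}` of the paper, with `t = ϖ^e`. -/
def vDelta (t : K) (m : ℕ) : Matrix (Fin (m + 2)) (Fin (m + 2)) K :=
  uMat (fun i : Fin (m + 1) => (t ^ (m + 1 - (i : ℕ)))⁻¹) *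
    diagonal (Fin.snoc (fun i : Fin (m + 1) => t ^ (2 * (i : ℕ) + 1)) (t ^ (m + 1)))

/-- `v♯_{m+2} δ♯_{m+2}` of the paper, with `t = ϖ^e`. -/
def vDeltaSharp (t : K) (m : ℕ) : Matrix (Fin (m + 2)) (Fin (m + 2)) K :=
  lMat (fun i : Fin (m + 1) => t ^ (m + 1 - (i : ℕ))) *
    diagonal (fun i : Fin (m + 2) => t ^ (2 * (i : ℕ)))

lemma vDelta_apply {t : K} (ht : t ≠ 0) (m : ℕ) (i j : Fin (m + 2)) :
    vDelta t m i j =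
      if (j : ℕ) = m + 1 then t ^ (i : ℕ) else if i = j then t ^ (2 * (j : ℕ) + 1) else 0 := by
  rw [vDelta, mul_diagonal]
  induction j using Fin.lastCases with
  | last =>
    rw [Fin.snoc_last]
    by_cases hi : i = Fin.last _
    · simp [uMat, hi]
    · have hi' : (i : ℕ) < m + 1 := Fin.val_lt_last hi
      simp only [uMat, of_apply, hi, if_false, Fin.val_last, if_true, dif_pos hi']
      rw [inv_mul_eq_iff_eq_mul₀ (pow_ne_zero _ ht), ← pow_add]
      congr 1
      omega
  | cast j =>
    have hj : (j : ℕ) ≠ m + 1 := j.isLt.ne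
    rw [Fin.snoc_castSucc]
    simp only [uMat, of_apply, Fin.val_castSucc, hj, if_false]
    rw [ite_mul, one_mul, zero_mul]

lemma vDeltaSharp_apply (t : K) (m : ℕ) (i j : Fin (m + 2)) :
    vDeltaSharp t m i j =
      if (i : ℕ) = m + 1 then t ^ ((i : ℕ) + j) else if i = j then t ^ (2 * (j : ℕ)) else 0 := by
  rw [vDeltaSharp, mul_diagonal]
  by_cases hij : i = j
  · subst hij
    simp only [lMat, of_apply, if_true, one_mul]
    split_ifs <;> ring1
  · by_cases hi : (i : ℕ) = m + 1
    · have hj : (j : ℕ) < m + 1 := by have := j.isLt; have := Fin.val_injective.ne hij; omega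
      simp only [lMat, of_apply, hij, hi, if_false, if_true, dif_pos hj, ← pow_add]
      congr 1
      omega
    · simp only [lMat, of_apply, hij, hi, if_false, zero_mul]

lemma bMat_mul_vDelta {t : K} (ht : t ≠ 0) (m : ℕ) :
    bMat t m * vDelta t m = vDeltaSharp t m * kMat t m := by
  ext i j
  cases i using Fin.cases <;> cases j using Fin.lastCases <;>
    simp only [bMat_mul_apply_zero, bMat_mul_apply_succ, mul_kMat_apply_last,
      mul_kMat_apply_castSucc, vDelta_apply ht m, vDeltaSharp_apply, Fin.ext_iff, Fin.val_zero,
      Fin.val_succ, Fin.val_castSucc, Fin.val_last] <;>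
    split_ifs <;> first | contradiction | omega | ring1

end Representatives

theorem doubleCoset_vDelta_eq_vDeltaSharp {R K : Type*} [CommRing R] [Field K] [Algebra R K]
    (t : R) (ht : algebraMap R K t ≠ 0) (m : ℕ) :
    {g : Matrix (Fin ((m + 2) + (m + 2))) (Fin ((m + 2) + (m + 2))) K |
      ∃ s ∈ Sset R K (m + 2) ∩ Pset K ((m + 2) + (m + 2)), ∃ k ∈ POset R K ((m + 2) + (m + 2)),
        g = s * diagEmbed (vDelta (algebraMap R K t) m) * k} =
    {g | ∃ s ∈ Sset R K (m + 2) ∩ Pset K ((m + 2) + (m + 2)), ∃ k ∈ POset R K ((m + 2) + (m + 2)),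
        g = s * diagEmbed (vDeltaSharp (algebraMap R K t) m) * k} := by
  set x := algebraMap R K t
  have key := bMat_mul_vDelta ht m
  refine doubleCoset_eq ?_ ?_ ⟨blockDiag (bMatInv x m) (bMatInv x m),
      blockDiag_mem_shalika (bMatInv_mul_bMat x m) (hasStdLastRow_bMatInv x m),
      blockDiag (kMat x m) (bMat x m), ?_, ?_⟩ ⟨blockDiag (bMat x m) (bMat x m),
      blockDiag_mem_shalika (bMat_mul_bMatInv x m) (hasStdLastRow_bMat x m),
      blockDiag (kMatInv x m) (bMatInv x m), ?_, ?_⟩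
  · exact fun _ ha _ hb => ⟨Sset_mul ha.1 hb.1, Pset_mul ha.2 hb.2⟩
  · exact fun _ ha _ hb => POset_mul ha hb
  · rw [← kMat_map, ← bMat_map]
    exact blockDiag_map_mem_POset (kMat_mul_kMatInv t m) (bMat_mul_bMatInv t m)
      (hasStdLastRow_bMat t m)
  · rw [blockDiag_mul_diagEmbed_mul_blockDiag (bMatInv_mul_bMat x m), mul_assoc, ← key,
      ← mul_assoc, bMatInv_mul_bMat, one_mul]
  · rw [← kMatInv_map, ← bMatInv_map]
    exact blockDiag_map_mem_POset (kMatInv_mul_kMat t m) (bMatInv_mul_bMat t m)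
      (hasStdLastRow_bMatInv t m)
  · rw [blockDiag_mul_diagEmbed_mul_blockDiag (bMat_mul_bMatInv x m), key, mul_assoc,
      kMat_mul_kMatInv, mul_one]

theorem stmt11_general (ϖ : O) (hϖ : Irreducible ϖ) (m'' e : ℕ) :
    {g : Matrix (Fin ((m'' + 2) + (m'' + 2))) (Fin ((m'' + 2) + (m'' + 2))) F |
      ∃ s ∈ Sset O F (m'' + 2) ∩ Pset F ((m'' + 2) + (m'' + 2)),
        ∃ k ∈ POset O F ((m'' + 2) + (m'' + 2)),
          g = s * diagEmbed
            (uMat (fun i : Fin (m'' + 1) =>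
                ((algebraMap O F ϖ) ^ ((m'' + 1 - (i : ℕ)) * e))⁻¹) *
              diagonal (Fin.snoc
                (fun i : Fin (m'' + 1) => (algebraMap O F ϖ) ^ ((2 * (i : ℕ) + 1) * e))
                ((algebraMap O F ϖ) ^ ((m'' + 1) * e)))) * k} =
    {g : Matrix (Fin ((m'' + 2) + (m'' + 2))) (Fin ((m'' + 2) + (m'' + 2))) F |
      ∃ s ∈ Sset O F (m'' + 2) ∩ Pset F ((m'' + 2) + (m'' + 2)),
        ∃ k ∈ POset O F ((m'' + 2) + (m'' + 2)),
          g = s * diagEmbed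
            (lMat (fun i : Fin (m'' + 1) =>
                (algebraMap O F ϖ) ^ ((m'' + 1 - (i : ℕ)) * e)) *
              diagonal
                (fun i : Fin (m'' + 2) => (algebraMap O F ϖ) ^ (2 * (i : ℕ) * e))) * k} := by
  have ht : algebraMap O F (ϖ ^ e) ≠ 0 :=
    (map_ne_zero_iff _ (IsFractionRing.injective O F)).mpr (pow_ne_zero e hϖ.ne_zero)
  have h := doubleCoset_vDelta_eq_vDeltaSharp (ϖ ^ e) ht m''
  simp only [vDelta, vDeltaSharp, map_pow, ← pow_mul'] at h
  exact h

/-- For `m ≥ 2` (`m = m'' + 2`) and `e ≥ 1`, the `(S°_n, P_n(O))`-double cosets of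
`diag(v_m · δ_m, 1_m)` and `diag(v♯_m · δ♯_m, 1_m)` in `GL_n(F)` coincide, where
`δ_m = diag(ϖ^e, ϖ^{3e}, …, ϖ^{(2m−3)e}, ϖ^{(m−1)e})`, `δ♯_m = diag(1, ϖ^{2e}, …, ϖ^{2(m−1)e})`,
`v_m = u((ϖ^{−(m−1)e}, …, ϖ^{−e}))` and `v♯_m = ū((ϖ^{(m−1)e}, …, ϖ^{e}))`. -/
theorem stmt11 (ϖ : O) (hϖ : Irreducible ϖ) (m'' e : ℕ) (he : 1 ≤ e) :
    {g : Matrix (Fin ((m'' + 2) + (m'' + 2))) (Fin ((m'' + 2) + (m'' + 2))) F |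
      ∃ s ∈ Sset O F (m'' + 2) ∩ Pset F ((m'' + 2) + (m'' + 2)),
        ∃ k ∈ POset O F ((m'' + 2) + (m'' + 2)),
          g = s * diagEmbed
            (uMat (fun i : Fin (m'' + 1) =>
                ((algebraMap O F ϖ) ^ ((m'' + 1 - (i : ℕ)) * e))⁻¹) *
              diagonal (Fin.snoc
                (fun i : Fin (m'' + 1) => (algebraMap O F ϖ) ^ ((2 * (i : ℕ) + 1) * e))
                ((algebraMap O F ϖ) ^ ((m'' + 1) * e)))) * k} =
    {g : Matrix (Fin ((m'' + 2) + (m'' + 2))) (Fin ((m'' + 2) + (m'' + 2))) F |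
      ∃ s ∈ Sset O F (m'' + 2) ∩ Pset F ((m'' + 2) + (m'' + 2)),
        ∃ k ∈ POset O F ((m'' + 2) + (m'' + 2)),
          g = s * diagEmbed
            (lMat (fun i : Fin (m'' + 1) =>
                (algebraMap O F ϖ) ^ ((m'' + 1 - (i : ℕ)) * e)) *
              diagonal
                (fun i : Fin (m'' + 2) => (algebraMap O F ϖ) ^ (2 * (i : ℕ) * e))) * k} :=
  stmt11_general ϖ hϖ m'' e

end ShalikaStmt11
end

section
/- Let r ≥ 2 and let c be a nonnegative integer. Then GL_r(O) ∩ diag(1_{r−1}, ϖ^c) · GL_r(O) · diag(1_{r−1}, ϖ^c)^{-1} = {k ∈ GL_r(O) : k_{r,1}, …, k_{r,r−1} ∈ 𝔭^c}. -/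
open Matrix

namespace ShalikaStmt12

/-! Write `D = diag(d)` with `d = (1, …, 1, ϖ^c)`. Since `D` is invertible over `F`, `k` lies in
`D · GL_r(O) · D⁻¹` exactly when `D⁻¹ k D` lies in `GL_r(O)`. For `k ∈ GL_r(O)` the determinant of
`D⁻¹ k D` is that of `k`, and its entries are `d_i⁻¹ k_ij d_j`; these are automatically integral
except in the last row off the diagonal, where they equal `ϖ^{-c} k_rj`. -/

section ConjugationByDiagonal

variable {n K : Type*} [Fintype n] [DecidableEq n]

theorem exists_mem_eq_conj_iff [CommRing K] {D : Matrix n n K} (hD : IsUnit D.det)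
    (S : Set (Matrix n n K)) (k : Matrix n n K) :
    (∃ g ∈ S, k = D * g * D⁻¹) ↔ D⁻¹ * k * D ∈ S := by
  constructor
  · rintro ⟨g, hg, rfl⟩
    simpa [Matrix.mul_assoc, hD] using hg
  · exact fun hk => ⟨_, hk, by simp [Matrix.mul_assoc, hD]⟩

theorem inv_diagonal_of_ne_zero [Field K] {d : n → K} (hd : ∀ i, d i ≠ 0) :
    (diagonal d)⁻¹ = diagonal d⁻¹ :=
  inv_eq_right_inv <| by
    rw [diagonal_mul_diagonal, ← diagonal_one]
    exact congrArg diagonal (funext fun i => mul_inv_cancel₀ (hd i))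

theorem inv_diagonal_mul_mul_diagonal_apply [Field K] {d : n → K} (hd : ∀ i, d i ≠ 0)
    (k : Matrix n n K) (i j : n) :
    ((diagonal d)⁻¹ * k * diagonal d) i j = (d i)⁻¹ * k i j * d j := by
  rw [inv_diagonal_of_ne_zero hd, mul_diagonal, diagonal_mul, Pi.inv_apply]

theorem isUnit_det_diagonal_of_ne_zero [Field K] {d : n → K} (hd : ∀ i, d i ≠ 0) :
    IsUnit (diagonal d).det := by
  rw [det_diagonal]
  exact isUnit_iff_ne_zero.mpr (Finset.prod_ne_zero_iff.mpr fun i _ => hd i)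

end ConjugationByDiagonal

section BlockDiagonal

variable {n K : Type*} [Fintype n] [DecidableEq n] [Field K]

theorem inv_diagonal_ite_conj_apply_mem_iff (R : Subring K) (p : n → Prop) [DecidablePred p]
    {t : K} (ht : t ≠ 0) (htR : t ∈ R) {k : Matrix n n K} (hk : ∀ i j, k i j ∈ R) :
    (∀ i j, ((diagonal fun i => if p i then 1 else t)⁻¹ * k *
        diagonal fun i => if p i then 1 else t) i j ∈ R) ↔
      ∀ i, ¬ p i → ∀ j, p j → t⁻¹ * k i j ∈ R := by
  have hd : ∀ i, (if p i then 1 else t) ≠ 0 := fun i => by split_ifs <;> simp [ht]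
  simp only [inv_diagonal_mul_mul_diagonal_apply hd]
  constructor
  · intro h i hi j hj
    simpa [hi, hj] using h i j
  · intro h i j
    by_cases hi : p i <;> by_cases hj : p j
    · simpa [hi, hj] using hk i j
    · simpa [hi, hj] using R.mul_mem (hk i j) htR
    · simpa [hi, hj] using h i hi j hj
    · rw [if_neg hi, if_neg hj, mul_right_comm, inv_mul_cancel₀ ht, one_mul]
      exact hk i j

end BlockDiagonal

section IntegralMatrices

variable (O F : Type*) [CommRing O] [Field F] [Algebra O F]

def integralGL (n : Type*) [Fintype n] [DecidableEq n] : Set (Matrix n n F) :=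
  {g | (∀ i j, g i j ∈ (algebraMap O F).range) ∧ ∃ u : Oˣ, algebraMap O F u = g.det}

variable {O F}

theorem inv_mul_mul_mem_integralGL_iff {n : Type*} [Fintype n] [DecidableEq n]
    {D k : Matrix n n F} (hD : IsUnit D.det) (hk : k ∈ integralGL O F n) :
    D⁻¹ * k * D ∈ integralGL O F n ↔ ∀ i j, (D⁻¹ * k * D) i j ∈ (algebraMap O F).range := by
  rw [integralGL, Set.mem_ofPred_eq, det_conj' ((isUnit_iff_isUnit_det D).mpr hD)]
  exact and_iff_left hk.2

theorem exists_algebraMap_mul_eq_iff {t : O} (ht : algebraMap O F t ≠ 0) (x : F) :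
    (∃ a, algebraMap O F (t * a) = x) ↔ (algebraMap O F t)⁻¹ * x ∈ (algebraMap O F).range := by
  simp only [RingHom.mem_range, map_mul, eq_inv_mul_iff_mul_eq₀ ht]

end IntegralMatrices

theorem forall_not_val_lt_sub_one_imp_iff {r : ℕ} (hr : 0 < r) (P : Fin r → Prop) :
    (∀ i : Fin r, ¬ (i : ℕ) < r - 1 → P i) ↔ P ⟨r - 1, by omega⟩ := by
  refine ⟨fun h => h _ (lt_irrefl _), fun h i hi => ?_⟩
  have hi' : i = ⟨r - 1, by omega⟩ := Fin.ext <| show (i : ℕ) = r - 1 by omega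
  rwa [hi']

/-- For `r ≥ 2` and `c ≥ 0`:
`GL_r(O) ∩ diag(1_{r−1}, ϖ^c) · GL_r(O) · diag(1_{r−1}, ϖ^c)⁻¹
  = {k ∈ GL_r(O) : k_{r,1}, …, k_{r,r−1} ∈ 𝔭^c}`. -/
theorem stmt12 {O F : Type*} [CommRing O]
    [Field F] [Algebra O F] [IsFractionRing O F]
    (ϖ : O) (hϖ : Irreducible ϖ) (r c : ℕ) (hr : 2 ≤ r) :
    let GLO : Set (Matrix (Fin r) (Fin r) F) :=
      {g | (∀ i j, ∃ a : O, algebraMap O F a = g i j) ∧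
        ∃ u : Oˣ, algebraMap O F (u : O) = g.det}
    let D : Matrix (Fin r) (Fin r) F :=
      diagonal (fun i => if (i : ℕ) < r - 1 then 1 else (algebraMap O F ϖ) ^ c)
    {k | k ∈ GLO ∧ ∃ g ∈ GLO, k = D * g * D⁻¹} =
      {k | k ∈ GLO ∧ ∀ j : Fin r, (j : ℕ) < r - 1 →
        ∃ a : O, algebraMap O F (ϖ ^ c * a) = k ⟨r - 1, by omega⟩ j} := by
  intro GLO D
  have hGLO : GLO = integralGL O F (Fin r) := rfl
  have hϖ0 : algebraMap O F ϖ ≠ 0 :=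
    (map_ne_zero_iff _ (IsFractionRing.injective O F)).mpr hϖ.ne_zero
  have ht : algebraMap O F (ϖ ^ c) ≠ 0 := by
    rw [map_pow]
    exact pow_ne_zero c hϖ0
  have htR : algebraMap O F ϖ ^ c ∈ (algebraMap O F).range := ⟨ϖ ^ c, map_pow _ _ _⟩
  have hD : IsUnit D.det :=
    isUnit_det_diagonal_of_ne_zero fun i => by split_ifs <;> simp [hϖ0]
  ext k
  simp only [Set.mem_ofPred_eq, hGLO, exists_mem_eq_conj_iff hD, exists_algebraMap_mul_eq_iff ht,
    map_pow]
  refine and_congr_right fun hk => ?_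
  rw [inv_mul_mul_mem_integralGL_iff hD hk,
    inv_diagonal_ite_conj_apply_mem_iff _ _ (pow_ne_zero c hϖ0) htR hk.1,
    forall_not_val_lt_sub_one_imp_iff (by omega)]

end ShalikaStmt12
end

section
/- Let n = 2m be even, and let e, l be integers with 0 ≤ e ≤ l. For a positive integer r and s ∈ ℤ set O_r(s) = diag(1_{r−1}, ϖ^s) · M_r(O) · diag(1_{r−1}, ϖ^s)^{-1} and R_r(s) = M_r(O) ∩ O_r(s). Then R_n(l) ∩ diag(1_m, ϖ^e·1_m) · M_n(O) · diag(1_m, ϖ^e·1_m)^{-1} equals the set of block matrices [[A,B],[C,D]] (blocks of size m×m) with A ∈ M_m(O), B ∈ M_m(O), D ∈ R_m(l), and diag(ϖ^e·1_{m−1}, ϖ^l)^{-1}·C ∈ M_m(O). -/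
/-!
Conjugating by `diagonal d` multiplies the `(i, j)` entry by `d i / d j`, so each of the sets
involved is cut out by one condition per entry, of the form `π ^ (-k) * x ∈ O`. Writing a matrix
in `m × m` blocks, the three conditions defining the left-hand side collapse on every block to the
condition on the right, because `π ^ (-k) * x ∈ O` implies `π ^ (-k') * x ∈ O` for `k' ≤ k`.
Only the multiplicative structure of `O` enters.
-/

open Matrix

namespace ShalikaStmt13

section Entrywise

variable {α : Type*} {m n o p q r : Type*}

def entrywise (P : m → n → α → Prop) : Set (Matrix m n α) :=
  {g | ∀ i j, P i j (g i j)}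

def matrixOver (S : Set α) : Set (Matrix m n α) :=
  entrywise fun _ _ x => x ∈ S

theorem entrywise_congr {P Q : m → n → α → Prop} (h : ∀ i j x, P i j x ↔ Q i j x) :
    (entrywise P : Set (Matrix m n α)) = entrywise Q :=
  Set.ext fun _ => forall₂_congr fun i j => h i j _

theorem entrywise_inter_entrywise (P Q : m → n → α → Prop) :
    (entrywise P ∩ entrywise Q : Set (Matrix m n α)) =
      entrywise fun i j x => P i j x ∧ Q i j x :=
  Set.ext fun _ => by simp only [entrywise, Set.mem_inter_iff, Set.mem_ofPred_eq, forall_and]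

theorem mem_entrywise_reindex (e : m ≃ p) (f : n ≃ q) (P : Matrix m n (α → Prop))
    (g : Matrix p q α) :
    g ∈ entrywise (reindex e f P) ↔ reindex e.symm f.symm g ∈ entrywise P := by
  simp only [entrywise, Set.mem_ofPred_eq, reindex_apply, submatrix_apply, Equiv.symm_symm]
  rw [e.forall_congr_left]
  refine forall_congr' fun i => ?_
  rw [f.forall_congr_left]
  simp only [Equiv.apply_symm_apply]

theorem fromBlocks_mem_entrywise_iff {P₁₁ : Matrix n m (α → Prop)}
    {P₁₂ : Matrix n o (α → Prop)} {P₂₁ : Matrix p m (α → Prop)} {P₂₂ : Matrix p o (α → Prop)}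
    {A : Matrix n m α} {B : Matrix n o α} {C : Matrix p m α} {D : Matrix p o α} :
    fromBlocks A B C D ∈ entrywise (fromBlocks P₁₁ P₁₂ P₂₁ P₂₂) ↔
      A ∈ entrywise P₁₁ ∧ B ∈ entrywise P₁₂ ∧ C ∈ entrywise P₂₁ ∧ D ∈ entrywise P₂₂ := by
  simp only [entrywise, Set.mem_ofPred_eq, Sum.forall, fromBlocks_apply₁₁, fromBlocks_apply₁₂,
    fromBlocks_apply₂₁, fromBlocks_apply₂₂, forall_and]
  tauto

theorem setOf_exists_fromBlocks (e : n ⊕ p ≃ q) (f : m ⊕ o ≃ r) (P₁₁ : Matrix n m (α → Prop))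
    (P₁₂ : Matrix n o (α → Prop)) (P₂₁ : Matrix p m (α → Prop)) (P₂₂ : Matrix p o (α → Prop)) :
    {g | ∃ A B C D, A ∈ entrywise P₁₁ ∧ B ∈ entrywise P₁₂ ∧ D ∈ entrywise P₂₂ ∧
        C ∈ entrywise P₂₁ ∧ g = reindex e f (fromBlocks A B C D)} =
      entrywise (reindex e f (fromBlocks P₁₁ P₁₂ P₂₁ P₂₂)) := by
  ext g
  rw [Set.mem_ofPred_eq, mem_entrywise_reindex]
  constructor
  · rintro ⟨A, B, C, D, hA, hB, hD, hC, rfl⟩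
    rw [← reindex_symm, Equiv.symm_apply_apply]
    exact fromBlocks_mem_entrywise_iff.2 ⟨hA, hB, hC, hD⟩
  · obtain ⟨G, rfl⟩ := (reindex e f).surjective g
    rw [← reindex_symm, Equiv.symm_apply_apply, ← fromBlocks_toBlocks G,
      fromBlocks_mem_entrywise_iff]
    rintro ⟨hA, hB, hC, hD⟩
    exact ⟨_, _, _, _, hA, hB, hD, hC, rfl⟩

theorem entrywise_eq_reindex_fromBlocks (e : n ⊕ p ≃ q) (f : m ⊕ o ≃ r) {P : q → r → α → Prop}
    {P₁₁ : Matrix n m (α → Prop)} {P₁₂ : Matrix n o (α → Prop)} {P₂₁ : Matrix p m (α → Prop)}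
    {P₂₂ : Matrix p o (α → Prop)}
    (h₁₁ : ∀ i j x, P (e (.inl i)) (f (.inl j)) x ↔ P₁₁ i j x)
    (h₁₂ : ∀ i j x, P (e (.inl i)) (f (.inr j)) x ↔ P₁₂ i j x)
    (h₂₁ : ∀ i j x, P (e (.inr i)) (f (.inl j)) x ↔ P₂₁ i j x)
    (h₂₂ : ∀ i j x, P (e (.inr i)) (f (.inr j)) x ↔ P₂₂ i j x) :
    entrywise P = entrywise (reindex e f (fromBlocks P₁₁ P₁₂ P₂₁ P₂₂)) := by
  refine entrywise_congr fun i j x => ?_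
  obtain ⟨i, rfl⟩ := e.surjective i
  obtain ⟨j, rfl⟩ := f.surjective j
  simp only [reindex_apply, submatrix_apply, Equiv.symm_apply_apply]
  rcases i with i | i <;> rcases j with j | j
  exacts [h₁₁ i j x, h₁₂ i j x, h₂₁ i j x, h₂₂ i j x]

end Entrywise

section DiagonalConjugation

variable {F : Type*} [Field F] {n m : Type*} [Fintype n] [DecidableEq n]

def diagConj (S : Set F) (d : n → F) : Set (Matrix n n F) :=
  {g | ∃ h ∈ matrixOver S, g = diagonal d * h * (diagonal d)⁻¹}

theorem inv_diagonal_of_ne_zero {d : n → F} (hd : ∀ i, d i ≠ 0) :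
    (diagonal d)⁻¹ = diagonal fun i => (d i)⁻¹ := by
  refine inv_eq_right_inv ?_
  rw [diagonal_mul_diagonal, ← diagonal_one]
  exact congrArg diagonal (funext fun i => mul_inv_cancel₀ (hd i))

theorem diagConj_eq_entrywise (S : Set F) {d : n → F} (hd : ∀ i, d i ≠ 0) :
    diagConj S d = entrywise fun i j x => (d i)⁻¹ * x * d j ∈ S := by
  ext g
  simp only [diagConj, matrixOver, entrywise, Set.mem_ofPred_eq, inv_diagonal_of_ne_zero hd]
  constructor
  · rintro ⟨h, hh, rfl⟩ i j
    rw [mul_diagonal, diagonal_mul]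
    convert hh i j using 1
    field_simp [hd i, hd j]
  · intro hg
    refine ⟨(diagonal fun i => (d i)⁻¹) * g * diagonal d, fun i j => ?_, ?_⟩
    · rw [mul_diagonal, diagonal_mul]
      exact hg i j
    · ext i j
      simp only [mul_diagonal, diagonal_mul]
      field_simp [hd i, hd j]

theorem inv_diagonal_mul_mem_matrixOver_iff (S : Set F) {d : n → F} (hd : ∀ i, d i ≠ 0)
    (C : Matrix n m F) :
    (diagonal d)⁻¹ * C ∈ matrixOver S ↔ C ∈ entrywise fun i _ x => (d i)⁻¹ * x ∈ S := by
  simp only [matrixOver, entrywise, Set.mem_ofPred_eq, inv_diagonal_of_ne_zero hd, diagonal_mul]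

end DiagonalConjugation

section Powers

variable {F : Type*} [Field F] {S : Submonoid F} {π : F}

theorem zpow_mem_of_nonneg (hπS : π ∈ S) {k : ℤ} (hk : 0 ≤ k) : π ^ k ∈ S := by
  lift k to ℕ using hk
  simpa using S.pow_mem hπS k

theorem inv_zpow_mul_mem_of_le (hπS : π ∈ S) (hπ : π ≠ 0) {a b : ℤ} (hab : a ≤ b) {x : F}
    (hx : (π ^ b)⁻¹ * x ∈ S) : (π ^ a)⁻¹ * x ∈ S := by
  have : (π ^ a)⁻¹ * x = π ^ (b - a) * ((π ^ b)⁻¹ * x) := by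
    rw [zpow_sub₀ hπ]
    field_simp
  rw [this]
  exact S.mul_mem (zpow_mem_of_nonneg hπS (by omega)) hx

theorem mem_of_inv_zpow_mul_mem (hπS : π ∈ S) (hπ : π ≠ 0) {b : ℤ} (hb : 0 ≤ b) {x : F}
    (hx : (π ^ b)⁻¹ * x ∈ S) : x ∈ S := by
  simpa using inv_zpow_mul_mem_of_le hπS hπ hb hx

end Powers

section LastEntry

variable {F : Type*}

def lastEntry (r : ℕ) (a b : F) (i : Fin r) : F :=
  if (i : ℕ) < r - 1 then a else b

theorem lastEntry_castAdd {m n : ℕ} (hn : 0 < n) (a b : F) (i : Fin m) :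
    lastEntry (m + n) a b (Fin.castAdd n i) = a := by
  unfold lastEntry
  rw [if_pos]
  simp only [Fin.val_castAdd]
  omega

theorem lastEntry_natAdd {m n : ℕ} (a b : F) (i : Fin n) :
    lastEntry (m + n) a b (Fin.natAdd m i) = lastEntry n a b i := by
  have := i.isLt
  simp only [lastEntry, Fin.val_natAdd]
  congr 1
  exact propext (by omega)

theorem lastEntry_mem {S : Set F} {r : ℕ} {a b : F} (ha : a ∈ S) (hb : b ∈ S) (i : Fin r) :
    lastEntry r a b i ∈ S := by
  unfold lastEntry
  split_ifs <;> assumption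

end LastEntry

section Blocks

variable {F : Type*} [Field F] {S : Submonoid F} {π : F}

theorem inv_lastEntry_mul_mem_iff (hπS : π ∈ S) (hπ : π ≠ 0) {e l : ℤ} (he : 0 ≤ e)
    (hel : e ≤ l) {r : ℕ} (i : Fin r) (x : F) :
    (x ∈ S ∧ (lastEntry r 1 (π ^ l) i)⁻¹ * x ∈ S) ∧ (π ^ e)⁻¹ * x ∈ S ↔
      (lastEntry r (π ^ e) (π ^ l) i)⁻¹ * x ∈ S := by
  unfold lastEntry
  split_ifs
  · rw [inv_one, one_mul, and_self]
    exact ⟨And.right, fun h => ⟨mem_of_inv_zpow_mul_mem hπS hπ he h, h⟩⟩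
  · exact ⟨fun h => h.1.2, fun h => ⟨⟨mem_of_inv_zpow_mul_mem hπS hπ (he.trans hel) h, h⟩,
      inv_zpow_mul_mem_of_le hπS hπ hel h⟩⟩

theorem matrixOver_inter_diagConj_inter_diagConj (hπS : π ∈ S) (hπ : π ≠ 0) (m : ℕ)
    {e l : ℤ} (he : 0 ≤ e) (hel : e ≤ l) :
    matrixOver S ∩ diagConj S (lastEntry (m + m) 1 (π ^ l)) ∩
        diagConj S (fun i : Fin (m + m) => if (i : ℕ) < m then 1 else π ^ e) =
      {g | ∃ A B C D : Matrix (Fin m) (Fin m) F,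
        A ∈ matrixOver S ∧ B ∈ matrixOver S ∧
        D ∈ matrixOver S ∩ diagConj S (lastEntry m 1 (π ^ l)) ∧
        (diagonal (lastEntry m (π ^ e) (π ^ l)))⁻¹ * C ∈ matrixOver S ∧
        g = reindex finSumFinEquiv finSumFinEquiv (fromBlocks A B C D)} := by
  have hπe : π ^ e ∈ S := zpow_mem_of_nonneg hπS he
  have hπl : π ^ l ∈ S := zpow_mem_of_nonneg hπS (he.trans hel)
  have hπe0 : π ^ e ≠ 0 := zpow_ne_zero e hπ
  have hπl0 : π ^ l ≠ 0 := zpow_ne_zero l hπ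
  have hlast {r : ℕ} {a b : F} (ha : a ≠ 0) (hb : b ≠ 0) (i : Fin r) : lastEntry r a b i ≠ 0 :=
    lastEntry_mem (S := {0}ᶜ) ha hb i
  have hde (i : Fin (m + m)) : (if (i : ℕ) < m then 1 else π ^ e) ≠ 0 := by
    split_ifs <;> simp [hπe0]
  simp only [inv_diagonal_mul_mem_matrixOver_iff _ (hlast hπe0 hπl0)]
  simp only [matrixOver, diagConj_eq_entrywise _ (hlast one_ne_zero hπl0),
    diagConj_eq_entrywise _ hde, entrywise_inter_entrywise]
  refine (entrywise_eq_reindex_fromBlocks _ _ (fun i j x => ?_) (fun i j x => ?_)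
    (fun i j x => ?_) (fun i j x => ?_)).trans (setOf_exists_fromBlocks _ _ _ _ _ _).symm <;>
  simp only [finSumFinEquiv_apply_left, finSumFinEquiv_apply_right, lastEntry_castAdd i.pos,
    lastEntry_natAdd, Fin.val_castAdd, Fin.val_natAdd, Fin.is_lt, add_lt_iff_neg_left,
    not_lt_zero, if_true, if_false, inv_one, one_mul, mul_one, SetLike.mem_coe, and_self]
  · exact ⟨fun h => h.1.1, fun h => ⟨⟨h, S.mul_mem h (lastEntry_mem S.one_mem hπl j)⟩,
      S.mul_mem h hπe⟩⟩
  · exact inv_lastEntry_mul_mem_iff hπS hπ he hel i x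
  · rw [mul_right_comm (π ^ e)⁻¹, inv_mul_cancel₀ hπe0, one_mul]
    exact ⟨And.left, fun h => ⟨h, h.1⟩⟩

end Blocks

theorem stmt13_general {O F : Type*} [CommRing O]
    [Field F] [Algebra O F] [IsFractionRing O F]
    (ϖ : O) (hϖ : Irreducible ϖ) (m : ℕ) (e l : ℤ) (he : 0 ≤ e) (hel : e ≤ l) :
    let πF : F := algebraMap O F ϖ
    let MO : (r : ℕ) → Set (Matrix (Fin r) (Fin r) F) :=
      fun r => {g | ∀ i j, ∃ a : O, algebraMap O F a = g i j}
    let Ds : (r : ℕ) → ℤ → Matrix (Fin r) (Fin r) F :=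
      fun r s => diagonal (fun i => if (i : ℕ) < r - 1 then 1 else πF ^ s)
    let Oset : (r : ℕ) → ℤ → Set (Matrix (Fin r) (Fin r) F) :=
      fun r s => {g | ∃ h ∈ MO r, g = Ds r s * h * (Ds r s)⁻¹}
    let Rset : (r : ℕ) → ℤ → Set (Matrix (Fin r) (Fin r) F) :=
      fun r s => MO r ∩ Oset r s
    let De : Matrix (Fin (m + m)) (Fin (m + m)) F :=
      diagonal (fun i => if (i : ℕ) < m then 1 else πF ^ e)
    Rset (m + m) l ∩ {g | ∃ h ∈ MO (m + m), g = De * h * De⁻¹} =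
      {g | ∃ A B C D : Matrix (Fin m) (Fin m) F,
        A ∈ MO m ∧ B ∈ MO m ∧ D ∈ Rset m l ∧
        (diagonal (fun i : Fin m => if (i : ℕ) < m - 1 then πF ^ e else πF ^ l))⁻¹ * C ∈ MO m ∧
        g = Matrix.reindex finSumFinEquiv finSumFinEquiv (Matrix.fromBlocks A B C D)} := by
  intro πF MO Ds Oset Rset De
  -- `MO`, `Oset` and `Rset` are `matrixOver`, `diagConj` and their intersection, up to unfolding.
  have hπ : πF ≠ 0 := (map_ne_zero_iff _ (IsFractionRing.injective O F)).2 hϖ.ne_zero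
  exact matrixOver_inter_diagConj_inter_diagConj (S := MonoidHom.mrange (algebraMap O F))
    ⟨ϖ, rfl⟩ hπ m he hel

/-- For `n = 2m` and integers `0 ≤ e ≤ l`, the ring
`R_n(l) ∩ diag(1_m, ϖ^e·1_m) · M_n(O) · diag(1_m, ϖ^e·1_m)⁻¹` consists of the block matrices
`[[A,B],[C,D]]` with `A, B ∈ M_m(O)`, `D ∈ R_m(l)` and
`diag(ϖ^e·1_{m−1}, ϖ^l)⁻¹ · C ∈ M_m(O)`, where `O_r(s) = diag(1_{r−1},ϖ^s)·M_r(O)·diag(1_{r−1},ϖ^s)⁻¹`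
and `R_r(s) = M_r(O) ∩ O_r(s)`. -/
theorem stmt13 {O F : Type*} [CommRing O] [IsDomain O] [IsDiscreteValuationRing O]
    [Field F] [Algebra O F] [IsFractionRing O F]
    (ϖ : O) (hϖ : Irreducible ϖ) (m : ℕ) (hm : 0 < m) (e l : ℤ) (he : 0 ≤ e) (hel : e ≤ l) :
    let πF : F := algebraMap O F ϖ
    let MO : (r : ℕ) → Set (Matrix (Fin r) (Fin r) F) :=
      fun r => {g | ∀ i j, ∃ a : O, algebraMap O F a = g i j}
    let Ds : (r : ℕ) → ℤ → Matrix (Fin r) (Fin r) F :=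
      fun r s => diagonal (fun i => if (i : ℕ) < r - 1 then 1 else πF ^ s)
    let Oset : (r : ℕ) → ℤ → Set (Matrix (Fin r) (Fin r) F) :=
      fun r s => {g | ∃ h ∈ MO r, g = Ds r s * h * (Ds r s)⁻¹}
    let Rset : (r : ℕ) → ℤ → Set (Matrix (Fin r) (Fin r) F) :=
      fun r s => MO r ∩ Oset r s
    let De : Matrix (Fin (m + m)) (Fin (m + m)) F :=
      diagonal (fun i => if (i : ℕ) < m then 1 else πF ^ e)
    Rset (m + m) l ∩ {g | ∃ h ∈ MO (m + m), g = De * h * De⁻¹} =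
      {g | ∃ A B C D : Matrix (Fin m) (Fin m) F,
        A ∈ MO m ∧ B ∈ MO m ∧ D ∈ Rset m l ∧
        (diagonal (fun i : Fin m => if (i : ℕ) < m - 1 then πF ^ e else πF ^ l))⁻¹ * C ∈ MO m ∧
        g = Matrix.reindex finSumFinEquiv finSumFinEquiv (Matrix.fromBlocks A B C D)} :=
  stmt13_general ϖ hϖ m e l he hel

end ShalikaStmt13
end
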